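/- arXiv:2107.12245 — 15 statements merged into one kernel-verified Lean document; each statement's English description precedes it below -/
import Mathlib

section
/- Let d ≥ 4 and let G be a simple graph containing three distinct vertices v, x, y such that N(x) = N(y) = {v}. Then for every natural number k, G has a d-path vertex cover of size at most k if and only if G − x has a d-path vertex cover of size at most k. -/
open SimpleGraph

/-- `S` is a `d`-path vertex cover of `G`. -/
def IsPVC {V : Type*} (G : SimpleGraph V) (d : ℕ) (S : Set V) : Prop :=
  ∀ ⦃u v : V⦄ (p : G.Walk u v), p.IsPath → p.length + 1 = d → ∃ x ∈ p.support, x ∈ S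

/-- `S` is a `d`-path vertex cover of the induced subgraph `G[A]`: every `d`-path of `G`
all of whose vertices lie in `A` contains a vertex of `S`. -/
def IsPVCOn {V : Type*} (G : SimpleGraph V) (d : ℕ) (A S : Set V) : Prop :=
  ∀ ⦃u v : V⦄ (p : G.Walk u v), p.IsPath → p.length + 1 = d →
    (∀ x ∈ p.support, x ∈ A) → ∃ x ∈ p.support, x ∈ S


lemma exists_adj_of_mem_support {V : Type*} {G : SimpleGraph V} {u w a : V}
    (p : G.Walk u w) (ha : a ∈ p.support) (hl : p.length ≠ 0) :
    ∃ b ∈ p.support, G.Adj a b := by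
  induction p with
  | nil => simp at hl
  | @cons u b' w h q ih =>
    rw [Walk.support_cons, List.mem_cons] at ha
    rcases ha with rfl | ha
    · exact ⟨b', by simp [Walk.support_cons, Walk.start_mem_support], h⟩
    · cases q with
      | nil =>
        simp at ha; subst ha
        exact ⟨u, by simp, h.symm⟩
      | cons h2 r =>
        obtain ⟨b, hb, hab⟩ := ih ha (by simp)
        exact ⟨b, by simp [Walk.support_cons]; right; simpa using hb, hab⟩

lemma internal_two_neighbors {V : Type*} {G : SimpleGraph V} {u w a : V}
    (p : G.Walk u w) (hp : p.IsPath) (ha : a ∈ p.support) (hau : a ≠ u) (haw : a ≠ w) :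
    ∃ b ∈ p.support, ∃ c ∈ p.support, b ≠ c ∧ G.Adj a b ∧ G.Adj a c := by
  induction p with
  | nil => simp at ha; exact absurd ha hau
  | @cons u b' w h q ih =>
    rw [Walk.cons_isPath_iff] at hp
    rw [Walk.support_cons, List.mem_cons] at ha
    rcases ha with rfl | ha
    · exact absurd rfl hau
    · by_cases hab' : a = b'
      · subst hab'
        cases q with
        | nil => exact absurd rfl haw
        | @cons _ c' _ h2 r =>
          refine ⟨u, by simp, c', ?_, ?_, h.symm, h2⟩
          · simp [Walk.support_cons]
          · rintro rfl; exact hp.2 (by simp [Walk.support_cons])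
      · obtain ⟨b, hb, c, hc, hbc, hab, hac⟩ := ih hp.1 ha hab' haw
        exact ⟨b, by simp [hb], c, by simp [hc], hbc, hab, hac⟩

lemma start_case {V : Type*} {G : SimpleGraph V} {d : ℕ} (hd : 4 ≤ d) {v x y : V}
    (hvx : v ≠ x) (hvy : v ≠ y) (hxy : x ≠ y)
    (hx : G.neighborSet x = {v}) (hy : G.neighborSet y = {v})
    {S : Finset V} (hyS : y ∉ S)
    (hS : IsPVCOn G d ({x}ᶜ : Set V) ↑S) {w : V} (p : G.Walk x w)
    (hp : p.IsPath) (hlen : p.length + 1 = d) :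
    ∃ z ∈ p.support, z ∈ S := by
  have hlen3 : 3 ≤ p.length := by omega
  cases p with
  | nil => simp at hlen3
  | @cons _ b' _ h q =>
    -- b' = v
    have hb' : b' = v := by
      have : b' ∈ G.neighborSet x := h
      rw [hx] at this; exact this
    subst hb'   -- eliminates v; b' now plays the role of v
    rw [Walk.cons_isPath_iff] at hp
    obtain ⟨hq, hxq⟩ := hp
    have hql : 2 ≤ q.length := by simpa using hlen3
    -- y ∉ q.support
    have hyq : y ∉ q.support := by
      intro hyin
      cases q with
      | nil => simp at hql
      | @cons _ c' _ h2 r =>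
        rw [Walk.cons_isPath_iff] at hq
        have hvr : b' ∉ r.support := hq.2
        rw [Walk.support_cons, List.mem_cons] at hyin
        rcases hyin with rfl | hyin
        · exact hvy rfl
        · have hrl : r.length ≠ 0 := by
            simp only [Walk.length_cons] at hql; omega
          obtain ⟨b, hb, hab⟩ := exists_adj_of_mem_support r hyin hrl
          have : b ∈ G.neighborSet y := hab
          rw [hy] at this
          subst this
          exact hvr hb
    have hadj : G.Adj y b' := by
      have : b' ∈ G.neighborSet y := by rw [hy]; rfl
      exact this
    set q' : G.Walk y w := Walk.cons hadj q with hq'def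
    have hq'path : q'.IsPath := by
      rw [Walk.cons_isPath_iff]; exact ⟨hq, hyq⟩
    have hq'len : q'.length + 1 = d := by
      rw [hq'def]; simpa using hlen
    have hsub : ∀ z ∈ q'.support, z ∈ ({x}ᶜ : Set V) := by
      intro z hz
      rw [hq'def, Walk.support_cons, List.mem_cons] at hz
      simp only [Set.mem_compl_iff, Set.mem_singleton_iff]
      rcases hz with rfl | hz
      · exact fun h => hxy h.symm
      · intro hzx; subst hzx; exact hxq hz
    obtain ⟨z, hz, hzS⟩ := hS q' hq'path hq'len hsub
    rw [hq'def, Walk.support_cons, List.mem_cons] at hz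
    rcases hz with rfl | hz
    · exact absurd hzS hyS
    · exact ⟨z, by simp [Walk.support_cons, hz], hzS⟩

/-- Degree-one reduction rule: if `v, x, y` are three distinct vertices with
`N(x) = N(y) = {v}`, then `G` has a `d`-path vertex cover of size at most `k`
iff `G − x` has one. -/
theorem degree_one_reduction {V : Type*} (G : SimpleGraph V) (d : ℕ) (hd : 4 ≤ d)
    (v x y : V) (hvx : v ≠ x) (hvy : v ≠ y) (hxy : x ≠ y)
    (hx : G.neighborSet x = {v}) (hy : G.neighborSet y = {v}) (k : ℕ) :
    (∃ S : Finset V, S.card ≤ k ∧ IsPVC G d ↑S) ↔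
      (∃ S : Finset V, S.card ≤ k ∧ x ∉ S ∧ IsPVCOn G d ({x}ᶜ : Set V) ↑S) := by
  classical
  constructor
  · rintro ⟨S, hcard, hS⟩
    refine ⟨S.erase x, le_trans (Finset.card_erase_le) hcard, Finset.notMem_erase x S, ?_⟩
    intro u w p hp hlen hA
    obtain ⟨z, hz, hzS⟩ := hS p hp hlen
    have hzx : z ≠ x := by
      have := hA z hz; simpa using this
    exact ⟨z, hz, Finset.mem_coe.2 (Finset.mem_erase.2 ⟨hzx, hzS⟩)⟩
  · rintro ⟨S, hcard, hxS, hS⟩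
    by_cases hyS : y ∈ S
    · refine ⟨insert v (S.erase y), ?_, ?_⟩
      · have h1 : 1 ≤ S.card := Finset.card_pos.2 ⟨y, hyS⟩
        calc (insert v (S.erase y)).card ≤ (S.erase y).card + 1 := Finset.card_insert_le _ _
          _ = S.card - 1 + 1 := by rw [Finset.card_erase_of_mem hyS]
          _ ≤ k := by omega
      · intro u w p hp hlen
        have hl0 : p.length ≠ 0 := by omega
        by_cases hxp : x ∈ p.support
        · obtain ⟨b, hb, hab⟩ := exists_adj_of_mem_support p hxp hl0
          have hbv : b ∈ G.neighborSet x := hab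
          rw [hx, Set.mem_singleton_iff] at hbv
          exact ⟨b, hb, by simp [hbv]⟩
        · have hA : ∀ z ∈ p.support, z ∈ ({x}ᶜ : Set V) := by
            intro z hz
            simp only [Set.mem_compl_iff, Set.mem_singleton_iff]
            rintro rfl; exact hxp hz
          obtain ⟨z, hz, hzS⟩ := hS p hp hlen hA
          by_cases hzy : z = y
          · subst hzy
            obtain ⟨b, hb, hab⟩ := exists_adj_of_mem_support p hz hl0
            have hbv : b ∈ G.neighborSet z := hab
            rw [hy, Set.mem_singleton_iff] at hbv
            exact ⟨b, hb, by simp [hbv]⟩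
          · exact ⟨z, hz, by simp [Finset.mem_erase, hzy, Finset.mem_coe.1 hzS]⟩
    · refine ⟨S, hcard, ?_⟩
      intro u w p hp hlen
      by_cases hxp : x ∈ p.support
      · by_cases hxu : x = u
        · subst hxu
          exact start_case hd hvx hvy hxy hx hy hyS hS p hp hlen
        · by_cases hxw : x = w
          · subst hxw
            obtain ⟨z, hz, hzS⟩ := start_case hd hvx hvy hxy hx hy hyS hS p.reverse
              hp.reverse (by simpa using hlen)
            rw [Walk.support_reverse, List.mem_reverse] at hz
            exact ⟨z, hz, hzS⟩
          · obtain ⟨b, hb, c, hc, hbc, hab, hac⟩ :=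
              internal_two_neighbors p hp hxp (Ne.symm fun h => hxu h.symm) hxw
            have h1 : b ∈ G.neighborSet x := hab
            have h2 : c ∈ G.neighborSet x := hac
            rw [hx] at h1 h2
            exact absurd (h1.trans h2.symm) hbc
      · have hA : ∀ z ∈ p.support, z ∈ ({x}ᶜ : Set V) := by
          intro z hz
          simp only [Set.mem_compl_iff, Set.mem_singleton_iff]
          rintro rfl; exact hxp hz
        exact hS p hp hlen hA
end

section
/- Let d ∈ {4,5}, let G be a simple graph, let k ≥ 1 be a natural number, let v be a vertex of G, and let 𝓜 be a matching adjacent to v with |𝓜| ≥ k + 2. Then G has a d-path vertex cover of size at most k if and only if G − v has a d-path vertex cover of size at most k − 1. -/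
/-!
If a `d`-path vertex cover `S` with `|S| ≤ k` missed `v`, then, since each vertex of `S` meets at
most one edge of the matching, at least two matching edges `ab`, `cw` (oriented so that `a, c`
are neighbours of `v`) avoid `S`, and `b a v c w` is a path of five vertices that `S` misses, as
does its prefix of four vertices. So `v ∈ S`, and `S \ {v}` covers `G − v`. Conversely, adding
`v` to a cover of `G − v` covers every path of `G`.
-/

open SimpleGraph

/-- `M` (a finite set of ordered pairs, each representing an edge) is a matching in `G − v`
such that every edge of the matching has at least one endpoint adjacent to `v` in `G`. -/
def MatchingAdjTo {V : Type*} (G : SimpleGraph V) (v : V) (M : Finset (V × V)) : Prop :=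
  (∀ e ∈ M, G.Adj e.1 e.2 ∧ e.1 ≠ v ∧ e.2 ≠ v ∧ (G.Adj v e.1 ∨ G.Adj v e.2)) ∧
  (∀ e ∈ M, ∀ f ∈ M, e ≠ f → e.1 ≠ f.1 ∧ e.1 ≠ f.2 ∧ e.2 ≠ f.1 ∧ e.2 ≠ f.2)

open Finset

section

variable {V : Type*} {G : SimpleGraph V} {d : ℕ}

def IsVertexDisjoint (M : Finset (V × V)) : Prop :=
  ∀ e ∈ M, ∀ f ∈ M, e ≠ f → e.1 ≠ f.1 ∧ e.1 ≠ f.2 ∧ e.2 ≠ f.1 ∧ e.2 ≠ f.2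

theorem MatchingAdjTo.isVertexDisjoint {v : V} {M : Finset (V × V)} (hM : MatchingAdjTo G v M) :
    IsVertexDisjoint M :=
  hM.2

namespace IsVertexDisjoint

variable [DecidableEq V] {M : Finset (V × V)}

theorem card_filter_meets_le (hM : IsVertexDisjoint M) (S : Finset V) :
    #{e ∈ M | e.1 ∈ S ∨ e.2 ∈ S} ≤ #S := by
  refine card_le_card_of_forall_subsingleton (fun e x => x = e.1 ∨ x = e.2) ?_ ?_
  · intro e he
    rcases (mem_filter.1 he).2 with h | h
    exacts [⟨e.1, h, .inl rfl⟩, ⟨e.2, h, .inr rfl⟩]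
  · rintro x - e ⟨he, hxe⟩ f ⟨hf, hxf⟩
    by_contra hef
    have := hM e (mem_filter.1 he).1 f (mem_filter.1 hf).1 hef
    rcases hxe with rfl | rfl <;> rcases hxf with h | h <;> tauto

theorem exists_two_avoiding (hM : IsVertexDisjoint M) {S : Finset V} (hcard : #S + 2 ≤ #M) :
    ∃ e ∈ M, ∃ f ∈ M, e ≠ f ∧ e.1 ∉ S ∧ e.2 ∉ S ∧ f.1 ∉ S ∧ f.2 ∉ S := by
  have hsplit := card_filter_add_card_filter_not (s := M) (fun e => e.1 ∈ S ∨ e.2 ∈ S)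
  have hmeets := hM.card_filter_meets_le S
  obtain ⟨e, he, f, hf, hef⟩ :=
    one_lt_card.1 (show 1 < #{e ∈ M | ¬(e.1 ∈ S ∨ e.2 ∈ S)} by omega)
  simp only [mem_filter, not_or] at he hf
  exact ⟨e, he.1, f, hf.1, hef, he.2.1, he.2.2, hf.2.1, hf.2.2⟩

end IsVertexDisjoint

theorem MatchingAdjTo.exists_oriented {v : V} {M : Finset (V × V)} (hM : MatchingAdjTo G v M)
    {e : V × V} (he : e ∈ M) :
    ∃ a b, G.Adj v a ∧ G.Adj a b ∧ a ≠ v ∧ b ≠ v ∧ (a = e.1 ∧ b = e.2 ∨ a = e.2 ∧ b = e.1) := by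
  obtain ⟨hadj, h1, h2, hv1 | hv2⟩ := hM.1 e he
  exacts [⟨e.1, e.2, hv1, hadj, h1, h2, .inl ⟨rfl, rfl⟩⟩,
    ⟨e.2, e.1, hv2, hadj.symm, h2, h1, .inr ⟨rfl, rfl⟩⟩]

theorem MatchingAdjTo.exists_path_avoiding [DecidableEq V] {v : V} {M : Finset (V × V)}
    (hM : MatchingAdjTo G v M) {S : Finset V} (hcard : #S + 2 ≤ #M) :
    ∃ b a c w, G.Adj b a ∧ G.Adj a v ∧ G.Adj v c ∧ G.Adj c w ∧ [b, a, v, c, w].Nodup ∧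
      b ∉ S ∧ a ∉ S ∧ c ∉ S ∧ w ∉ S := by
  obtain ⟨e, he, f, hf, hef, he1, he2, hf1, hf2⟩ := hM.isVertexDisjoint.exists_two_avoiding hcard
  have hdisj := hM.isVertexDisjoint e he f hf hef
  obtain ⟨a, b, hva, hab, hav, hbv, hae⟩ := hM.exists_oriented he
  obtain ⟨c, w, hvc, hcw, hcv, hwv, hcf⟩ := hM.exists_oriented hf
  have hab' := hab.ne
  have hcw' := hcw.ne
  refine ⟨b, a, c, w, hab.symm, hva.symm, hvc, hcw, ?_⟩
  rcases hae with ⟨rfl, rfl⟩ | ⟨rfl, rfl⟩ <;> rcases hcf with ⟨rfl, rfl⟩ | ⟨rfl, rfl⟩ <;>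
    simp_all [eq_comm]

theorem IsPVC.exists_mem_of_adj {S : Set V} (hd : d = 4 ∨ d = 5) (hS : IsPVC G d S)
    {b a v c w : V} (hba : G.Adj b a) (hav : G.Adj a v) (hvc : G.Adj v c) (hcw : G.Adj c w)
    (hnd : [b, a, v, c, w].Nodup) : ∃ x ∈ [b, a, v, c, w], x ∈ S := by
  let p₄ : G.Walk b c := .cons hba (.cons hav (.cons hvc .nil))
  let p₅ : G.Walk b w := .cons hba (.cons hav (.cons hvc (.cons hcw .nil)))
  rcases hd with rfl | rfl
  · have hsub : p₄.support.Sublist [b, a, v, c, w] := by simp [p₄]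
    obtain ⟨x, hx, hxS⟩ := hS p₄ ((Walk.isPath_def _).2 (hnd.sublist hsub)) rfl
    exact ⟨x, hsub.subset hx, hxS⟩
  · obtain ⟨x, hx, hxS⟩ := hS p₅ ((Walk.isPath_def _).2 hnd) rfl
    exact ⟨x, hx, hxS⟩

theorem MatchingAdjTo.mem_of_isPVC [DecidableEq V] {v : V} {M : Finset (V × V)}
    (hM : MatchingAdjTo G v M) (hd : d = 4 ∨ d = 5) {S : Finset V} (hS : IsPVC G d ↑S)
    (hcard : #S + 2 ≤ #M) : v ∈ S := by
  obtain ⟨b, a, c, w, hba, hav, hvc, hcw, hnd, hb, ha, hc, hw⟩ := hM.exists_path_avoiding hcard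
  obtain ⟨x, hx, hxS⟩ := hS.exists_mem_of_adj hd hba hav hvc hcw hnd
  simp only [List.mem_cons, List.not_mem_nil, or_false] at hx
  rcases hx with rfl | rfl | rfl | rfl | rfl <;> simp_all

theorem IsPVC.isPVCOn_inter {S : Set V} (hS : IsPVC G d S) (A : Set V) :
    IsPVCOn G d A (S ∩ A) := by
  intro u w p hp hlen hA
  obtain ⟨x, hx, hxS⟩ := hS p hp hlen
  exact ⟨x, hx, hxS, hA x hx⟩

theorem IsPVCOn.isPVC_compl_union {A S : Set V} (hS : IsPVCOn G d A S) : IsPVC G d (Aᶜ ∪ S) := by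
  intro u w p hp hlen
  by_cases hA : ∀ x ∈ p.support, x ∈ A
  · obtain ⟨x, hx, hxS⟩ := hS p hp hlen hA
    exact ⟨x, hx, .inr hxS⟩
  · obtain ⟨x, hx, hxA⟩ := not_forall₂.1 hA
    exact ⟨x, hx, .inl hxA⟩

end

/-- The high-degree rule: if `d ∈ {4,5}`, `k ≥ 1` and there is a matching adjacent to `v` of
size at least `k + 2`, then `G` has a `d`-path vertex cover of size at most `k` iff
`G − v` has a `d`-path vertex cover of size at most `k − 1`. -/
theorem matching_rule {V : Type*} (G : SimpleGraph V) (d k : ℕ)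
    (hd : d = 4 ∨ d = 5) (hk : 1 ≤ k)
    (v : V) (M : Finset (V × V)) (hM : MatchingAdjTo G v M)
    (hMcard : k + 2 ≤ M.card) :
    (∃ S : Finset V, S.card ≤ k ∧ IsPVC G d ↑S) ↔
      (∃ S : Finset V, S.card ≤ k - 1 ∧ v ∉ S ∧ IsPVCOn G d ({v}ᶜ : Set V) ↑S) := by
  classical
  constructor
  · rintro ⟨S, hScard, hS⟩
    have hvS : v ∈ S := hM.mem_of_isPVC hd hS (by omega)
    refine ⟨S.erase v, by rw [card_erase_of_mem hvS]; omega, notMem_erase v S, ?_⟩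
    simpa [Set.sdiff_eq] using hS.isPVCOn_inter {v}ᶜ
  · rintro ⟨S, hScard, -, hS⟩
    refine ⟨insert v S, (card_insert_le v S).trans (by omega), ?_⟩
    rw [coe_insert, Set.insert_eq, ← compl_compl ({v} : Set V)]
    exact hS.isPVC_compl_union
end

section
/- Let G be a simple graph, v a vertex of G, and 𝓜 a matching adjacent to v of maximum size among all matchings adjacent to v; let M denote the set of vertices covered by 𝓜. Then for every vertex x ∈ N(v) \ M, we have N(x) \ {v} ⊆ M. -/
open SimpleGraph

/-- The set of vertices covered by the matching `M`. -/
def mCovered {V : Type*} (M : Finset (V × V)) : Set V :=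
  {x | ∃ e ∈ M, e.1 = x ∨ e.2 = x}

/-- If `M` is a maximum-size matching adjacent to `v`, then every vertex
`x ∈ N(v) \ M` satisfies `N(x) \ {v} ⊆ M`. -/
theorem neighbors_outside_max_matching {V : Type*} (G : SimpleGraph V) (v : V)
    (M : Finset (V × V)) (hM : MatchingAdjTo G v M)
    (hmax : ∀ N : Finset (V × V), MatchingAdjTo G v N → N.card ≤ M.card) :
    ∀ x ∈ G.neighborSet v \ mCovered M, G.neighborSet x \ {v} ⊆ mCovered M := by
  classical
  rintro x ⟨hxv, hxM⟩ y ⟨hxy, hyv⟩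
  by_contra hyM
  have hxv' : G.Adj v x := hxv
  have hxyadj : G.Adj x y := hxy
  have hyv' : y ≠ v := hyv
  -- new matching
  have hnotmem : (x, y) ∉ M := by
    intro h
    exact hxM ⟨(x, y), h, Or.inl rfl⟩
  have hnew : MatchingAdjTo G v (insert (x, y) M) := by
    constructor
    · intro e he
      rcases Finset.mem_insert.mp he with h | h
      · subst h
        exact ⟨hxyadj, fun h => G.irrefl (h ▸ hxv'.symm), hyv', Or.inl hxv'⟩
      · exact hM.1 e h
    · intro e he f hf hef
      rcases Finset.mem_insert.mp he with h | h <;>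
        rcases Finset.mem_insert.mp hf with h' | h'
      · exact absurd (h.trans h'.symm) hef
      · subst h
        refine ⟨?_, ?_, ?_, ?_⟩ <;> intro hc
        · exact hxM ⟨f, h', Or.inl hc.symm⟩
        · exact hxM ⟨f, h', Or.inr hc.symm⟩
        · exact hyM ⟨f, h', Or.inl hc.symm⟩
        · exact hyM ⟨f, h', Or.inr hc.symm⟩
      · subst h'
        refine ⟨?_, ?_, ?_, ?_⟩ <;> intro hc
        · exact hxM ⟨e, h, Or.inl hc⟩
        · exact hyM ⟨e, h, Or.inl hc⟩
        · exact hxM ⟨e, h, Or.inr hc⟩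
        · exact hyM ⟨e, h, Or.inr hc⟩
      · exact hM.2 e h f h' hef
  have := hmax _ hnew
  rw [Finset.card_insert_of_notMem hnotmem] at this
  omega
end

section
/- Let G be a simple graph, v a vertex of G, and 𝓜 a matching adjacent to v of maximum size among all matchings adjacent to v; let M denote the set of vertices covered by 𝓜. Then there do not exist two distinct vertices x, y ∈ N(v) \ M and an edge {a, b} ∈ 𝓜 such that a is adjacent to x and b is adjacent to y. -/
open SimpleGraph

/-- If `M` is a maximum-size matching adjacent to `v`, then no two distinct vertices
`x, y ∈ N(v) \ M` are connected to the opposite endpoints of a single edge of `M`. -/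
theorem no_opposite_ends {V : Type*} (G : SimpleGraph V) (v : V)
    (M : Finset (V × V)) (hM : MatchingAdjTo G v M)
    (hmax : ∀ N : Finset (V × V), MatchingAdjTo G v N → N.card ≤ M.card) :
    ¬ ∃ x y : V, x ∈ G.neighborSet v \ mCovered M ∧ y ∈ G.neighborSet v \ mCovered M ∧
      x ≠ y ∧ ∃ e ∈ M, G.Adj e.1 x ∧ G.Adj e.2 y := by
  classical
  rintro ⟨x, y, ⟨hxv, hxM⟩, ⟨hyv, hyM⟩, hxy, ⟨a, b⟩, heM, hax, hby⟩
  simp only [mem_neighborSet] at hxv hyv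
  -- x and y are not endpoints of any edge of M
  have hxfree : ∀ f ∈ M, f.1 ≠ x ∧ f.2 ≠ x := by
    intro f hf
    constructor <;> intro h <;> exact hxM ⟨f, hf, by simp [h]⟩
  have hyfree : ∀ f ∈ M, f.1 ≠ y ∧ f.2 ≠ y := by
    intro f hf
    constructor <;> intro h <;> exact hyM ⟨f, hf, by simp [h]⟩
  obtain ⟨hab, hav, hbv, -⟩ := hM.1 _ heM
  have hab' : a ≠ b := hab.ne
  have hax' : (a, x) ∉ M := fun h => (hxfree _ h).2 rfl
  have hby' : (b, y) ∉ M := fun h => (hyfree _ h).2 rfl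
  set N : Finset (V × V) := insert (a, x) (insert (b, y) (M.erase (a, b))) with hN
  have haxbY : (a, x) ≠ (b, y) := by simp [hab']
  have h1 : (b, y) ∉ M.erase (a, b) := fun h => hby' (Finset.mem_of_mem_erase h)
  have h2 : (a, x) ∉ insert (b, y) (M.erase (a, b)) := by
    simp only [Finset.mem_insert]
    rintro (h | h)
    · exact haxbY h
    · exact hax' (Finset.mem_of_mem_erase h)
  -- N is a matching adjacent to v
  have hNmatch : MatchingAdjTo G v N := by
    constructor
    · intro e he
      simp only [hN, Finset.mem_insert] at he
      rcases he with rfl | rfl | he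
      · exact ⟨hax, hav, hxv.ne', Or.inr hxv⟩
      · exact ⟨hby, hbv, hyv.ne', Or.inr hyv⟩
      · exact hM.1 _ (Finset.mem_of_mem_erase he)
    · have key : ∀ e ∈ N, ∀ f ∈ N, e ≠ f →
          (e = (a,x) ∨ e = (b,y) ∨ (e ∈ M ∧ e ≠ (a,b))) →
          (f = (a,x) ∨ f = (b,y) ∨ (f ∈ M ∧ f ≠ (a,b))) →
          e.1 ≠ f.1 ∧ e.1 ≠ f.2 ∧ e.2 ≠ f.1 ∧ e.2 ≠ f.2 := by
        rintro e he f hf hef (rfl | rfl | ⟨heM', hene⟩) (rfl | rfl | ⟨hfM, hfne⟩)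
        · exact absurd rfl hef
        · exact ⟨hab', fun h => hyM ⟨(a,b), heM, Or.inl h⟩,
            fun h => (hxfree (a,b) heM).2 h.symm, hxy⟩
        · exact ⟨(hM.2 (a,b) heM f hfM (Ne.symm hfne)).1,
            (hM.2 (a,b) heM f hfM (Ne.symm hfne)).2.1,
            (hxfree f hfM).1.symm, (hxfree f hfM).2.symm⟩
        · exact ⟨hab'.symm, fun h => (hxfree (a,b) heM).2 h,
            fun h => (hyfree (a,b) heM).1 h.symm, hxy.symm⟩
        · exact absurd rfl hef
        · exact ⟨(hM.2 (a,b) heM f hfM (Ne.symm hfne)).2.2.1,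
            (hM.2 (a,b) heM f hfM (Ne.symm hfne)).2.2.2,
            (hyfree f hfM).1.symm, (hyfree f hfM).2.symm⟩
        · exact ⟨(hM.2 e heM' (a,b) heM hene).1, (hxfree e heM').1,
            (hM.2 e heM' (a,b) heM hene).2.2.1, (hxfree e heM').2⟩
        · exact ⟨(hM.2 e heM' (a,b) heM hene).2.1, (hyfree e heM').1,
            (hM.2 e heM' (a,b) heM hene).2.2.2, (hyfree e heM').2⟩
        · exact hM.2 _ heM' _ hfM hef
      intro e he f hf hef
      have he' : e = (a,x) ∨ e = (b,y) ∨ (e ∈ M ∧ e ≠ (a,b)) := by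
        simp only [hN, Finset.mem_insert, Finset.mem_erase] at he
        tauto
      have hf' : f = (a,x) ∨ f = (b,y) ∨ (f ∈ M ∧ f ≠ (a,b)) := by
        simp only [hN, Finset.mem_insert, Finset.mem_erase] at hf
        tauto
      exact key e he f hf hef he' hf'
  -- but N has more edges than M
  have hcard : N.card = M.card + 1 := by
    rw [hN, Finset.card_insert_of_notMem h2, Finset.card_insert_of_notMem h1,
      Finset.card_erase_of_mem heM]
    have : 1 ≤ M.card := Finset.card_pos.mpr ⟨_, heM⟩
    omega
  have := hmax N hNmatch
  omega
end

section
/- Let G be a simple graph, v a vertex of G, and 𝓜 a matching adjacent to v of maximum size among all matchings adjacent to v; let M denote the set of vertices covered by 𝓜 and let X = N(v) \ M. If x ∈ X and {a, b} ∈ 𝓜 is an edge with both a and b adjacent to x, then x is the only vertex of X adjacent to a or b, i.e., N({a, b}) ∩ X = {x}. -/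
open SimpleGraph

/-- `N(U)`: the set of neighbors of vertices of `U` lying outside `U`. -/
def setNbrs {V : Type*} (G : SimpleGraph V) (U : Set V) : Set V :=
  {z | z ∉ U ∧ ∃ u ∈ U, G.Adj u z}

lemma aux_only_one {V : Type*} (G : SimpleGraph V) (v : V)
    (M : Finset (V × V)) (hM : MatchingAdjTo G v M)
    (hmax : ∀ N : Finset (V × V), MatchingAdjTo G v N → N.card ≤ M.card)
    (e : V × V) (he : e ∈ M)
    (p q : V) (hp : p ∈ G.neighborSet v \ mCovered M)
    (hq : q ∈ G.neighborSet v \ mCovered M)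
    (hpq : p ≠ q) (hap : G.Adj e.1 p) (hbq : G.Adj e.2 q) : False := by
  classical
  obtain ⟨hpv, hpM⟩ := hp
  obtain ⟨hqv, hqM⟩ := hq
  have hpM' : ∀ f ∈ M, f.1 ≠ p ∧ f.2 ≠ p := fun f hf =>
    ⟨fun h => hpM ⟨f, hf, Or.inl h⟩, fun h => hpM ⟨f, hf, Or.inr h⟩⟩
  have hqM' : ∀ f ∈ M, f.1 ≠ q ∧ f.2 ≠ q := fun f hf =>
    ⟨fun h => hqM ⟨f, hf, Or.inl h⟩, fun h => hqM ⟨f, hf, Or.inr h⟩⟩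
  obtain ⟨hab, haev, hbev, -⟩ := hM.1 e he
  set N : Finset (V × V) := insert (e.1, p) (insert (e.2, q) (M.erase e)) with hN
  have hmem : ∀ f ∈ N, f = (e.1, p) ∨ f = (e.2, q) ∨ (f ∈ M ∧ f ≠ e) := by
    intro f hf
    simp only [hN, Finset.mem_insert, Finset.mem_erase] at hf
    tauto
  have hNM : MatchingAdjTo G v N := by
    constructor
    · intro f hf
      rcases hmem f hf with rfl | rfl | ⟨hfM, -⟩
      · exact ⟨hap, haev, fun h => G.irrefl (h ▸ hpv), Or.inr hpv⟩
      · exact ⟨hbq, hbev, fun h => G.irrefl (h ▸ hqv), Or.inr hqv⟩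
      · exact hM.1 f hfM
    · intro f hf g hg hfg
      rcases hmem f hf with rfl | rfl | ⟨hfM, hfe⟩ <;>
        rcases hmem g hg with rfl | rfl | ⟨hgM, hge⟩
      · exact absurd rfl hfg
      · exact ⟨hab.ne, (hqM' e he).1, Ne.symm (hpM' e he).2, hpq⟩
      · obtain ⟨c1, c2, c3, c4⟩ := hM.2 e he g hgM (Ne.symm hge)
        exact ⟨c1, c2, Ne.symm (hpM' g hgM).1, Ne.symm (hpM' g hgM).2⟩
      · exact ⟨hab.ne.symm, (hpM' e he).2, Ne.symm (hqM' e he).1, Ne.symm hpq⟩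
      · exact absurd rfl hfg
      · obtain ⟨c1, c2, c3, c4⟩ := hM.2 e he g hgM (Ne.symm hge)
        exact ⟨c3, c4, Ne.symm (hqM' g hgM).1, Ne.symm (hqM' g hgM).2⟩
      · obtain ⟨c1, c2, c3, c4⟩ := hM.2 f hfM e he hfe
        exact ⟨c1, (hpM' f hfM).1, c3, (hpM' f hfM).2⟩
      · obtain ⟨c1, c2, c3, c4⟩ := hM.2 f hfM e he hfe
        exact ⟨c2, (hqM' f hfM).1, c4, (hqM' f hfM).2⟩
      · exact hM.2 f hfM g hgM hfg
  have h1 : (e.2, q) ∉ M.erase e := fun h =>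
    (hqM' _ (Finset.mem_of_mem_erase h)).2 rfl
  have h2 : (e.1, p) ∉ insert (e.2, q) (M.erase e) := by
    intro h
    rcases Finset.mem_insert.1 h with h | h
    · exact hpq (congrArg Prod.snd h)
    · exact (hpM' _ (Finset.mem_of_mem_erase h)).2 rfl
  have hpos : 0 < M.card := Finset.card_pos.2 ⟨e, he⟩
  have hcard : N.card = M.card + 1 := by
    rw [hN, Finset.card_insert_of_notMem h2, Finset.card_insert_of_notMem h1,
      Finset.card_erase_of_mem he]
    omega
  have := hmax N hNM
  omega

/-- If `M` is a maximum-size matching adjacent to `v`, `X = N(v) \ M`, `x ∈ X`, and both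
endpoints of an edge `{a, b} ∈ M` are adjacent to `x`, then `N({a, b}) ∩ X = {x}`. -/
theorem only_one_double {V : Type*} (G : SimpleGraph V) (v : V)
    (M : Finset (V × V)) (hM : MatchingAdjTo G v M)
    (hmax : ∀ N : Finset (V × V), MatchingAdjTo G v N → N.card ≤ M.card)
    (x : V) (hx : x ∈ G.neighborSet v \ mCovered M)
    (e : V × V) (he : e ∈ M) (ha : G.Adj e.1 x) (hb : G.Adj e.2 x) :
    setNbrs G {e.1, e.2} ∩ (G.neighborSet v \ mCovered M) = {x} := by
  obtain ⟨hxv, hxM⟩ := hx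
  ext y
  simp only [Set.mem_inter_iff, Set.mem_singleton_iff]
  constructor
  · rintro ⟨⟨hyU, u, hu, huy⟩, hyv, hyM⟩
    by_contra hyx
    rcases hu with rfl | rfl
    · exact aux_only_one G v M hM hmax e he y x ⟨hyv, hyM⟩ ⟨hxv, hxM⟩ hyx huy hb
    · exact aux_only_one G v M hM hmax e he x y ⟨hxv, hxM⟩ ⟨hyv, hyM⟩
        (fun h => hyx h.symm) ha huy
  · rintro rfl
    refine ⟨⟨?_, e.1, Or.inl rfl, ha⟩, hxv, hxM⟩
    rintro (h | h)
    · exact hxM ⟨e, he, Or.inl h.symm⟩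
    · exact hxM ⟨e, he, Or.inr h.symm⟩
end

section
/- Let d ∈ {4,5}, let k be a natural number, and let G be a simple graph that contains no three distinct vertices u, x, y with N(x) = N(y) = {u}. Let v be a vertex of G, let 𝓜 be a matching adjacent to v of maximum size among all matchings adjacent to v, assume |𝓜| ≤ k + 1, and let M be the set of vertices covered by 𝓜. Let X = N(v) \ M, let X₂ = {x ∈ X : some edge {a,b} ∈ 𝓜 satisfies {a,b} ⊆ N(x)}, let X₀ = {x ∈ X : N(x) = {v}}, and let X₁ = X \ (X₂ ∪ X₀). If deg(v) ≥ (d+2)(k+1) + 1, then |X₁| ≥ (d−1)(k+1). -/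
open SimpleGraph

/-- If `G` has no three distinct vertices `u, x, y` with `N(x) = N(y) = {u}`, `M` is a
maximum matching adjacent to `v` of size at most `k + 1`, and
`deg(v) ≥ (d+2)(k+1) + 1` where `d ∈ {4,5}`, then `|X₁| ≥ (d−1)(k+1)`. -/
theorem X1_large {V : Type*} [Fintype V] (G : SimpleGraph V) (d k : ℕ)
    (hd : d = 4 ∨ d = 5)
    (htwin : ¬ ∃ u x y : V, x ≠ y ∧ x ≠ u ∧ y ≠ u ∧
      G.neighborSet x = {u} ∧ G.neighborSet y = {u})
    (v : V) (M : Finset (V × V)) (hM : MatchingAdjTo G v M)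
    (hmax : ∀ N : Finset (V × V), MatchingAdjTo G v N → N.card ≤ M.card)
    (hMcard : M.card ≤ k + 1)
    (X X₂ X₀ X₁ : Set V)
    (hX : X = G.neighborSet v \ mCovered M)
    (hX2 : X₂ = {x ∈ X | ∃ e ∈ M, G.Adj x e.1 ∧ G.Adj x e.2})
    (hX0 : X₀ = {x ∈ X | G.neighborSet x = {v}})
    (hX1 : X₁ = X \ (X₂ ∪ X₀))
    (hdeg : (d + 2) * (k + 1) + 1 ≤ (G.neighborSet v).ncard) :
    (d - 1) * (k + 1) ≤ X₁.ncard := by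

  classical
  obtain ⟨hM1, hM2⟩ := hM
  -- uncovered vertices are distinct from matching endpoints
  have huncov : ∀ x : V, x ∉ mCovered M → ∀ g ∈ M, g.1 ≠ x ∧ g.2 ≠ x := by
    intro x hx g hg
    simp only [mCovered, Set.mem_setOf_eq] at hx
    push_neg at hx
    exact hx g hg
  -- the swap argument
  have swap : ∀ e ∈ M, ∀ x y : V, x ≠ y →
      G.Adj v x → x ∉ mCovered M → G.Adj x e.1 → G.Adj x e.2 →
      G.Adj v y → y ∉ mCovered M → G.Adj y e.1 → G.Adj y e.2 → False := by
    intro e he x y hxy hvx hxU hxa hxb hvy hyU hya hyb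
    have hxU' := huncov x hxU
    have hyU' := huncov y hyU
    set N : Finset (V × V) := insert (x, e.1) (insert (y, e.2) (M.erase e)) with hN
    have hmemN : ∀ g, g ∈ N ↔ g = (x, e.1) ∨ g = (y, e.2) ∨ (g ∈ M ∧ g ≠ e) := by
      intro g
      simp only [hN, Finset.mem_insert, Finset.mem_erase]
      tauto
    have hxv : x ≠ v := hvx.ne'
    have hyv : y ≠ v := hvy.ne'
    have hMN : MatchingAdjTo G v N := by
      constructor
      · intro g hg
        rcases (hmemN g).1 hg with rfl | rfl | ⟨hgM, _⟩
        · exact ⟨hxa, hxv, (hM1 e he).2.1, Or.inl hvx⟩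
        · exact ⟨hyb, hyv, (hM1 e he).2.2.1, Or.inl hvy⟩
        · exact hM1 g hgM
      · intro g hg f hf hgf
        rcases (hmemN g).1 hg with rfl | rfl | ⟨hgM, hge⟩ <;>
          rcases (hmemN f).1 hf with rfl | rfl | ⟨hfM, hfe⟩
        · exact absurd rfl hgf
        · exact ⟨hxy, ((hxU' e he).2).symm, (hyU' e he).1, (hM1 e he).1.ne⟩
        · exact ⟨((hxU' f hfM).1).symm, ((hxU' f hfM).2).symm,
            (hM2 e he f hfM (Ne.symm hfe)).1, (hM2 e he f hfM (Ne.symm hfe)).2.1⟩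
        · exact ⟨hxy.symm, ((hyU' e he).1).symm, (hxU' e he).2, ((hM1 e he).1.ne).symm⟩
        · exact absurd rfl hgf
        · exact ⟨((hyU' f hfM).1).symm, ((hyU' f hfM).2).symm,
            (hM2 e he f hfM (Ne.symm hfe)).2.2.1, (hM2 e he f hfM (Ne.symm hfe)).2.2.2⟩
        · exact ⟨(hxU' g hgM).1, (hM2 g hgM e he hge).1,
            (hxU' g hgM).2, (hM2 g hgM e he hge).2.2.1⟩
        · exact ⟨(hyU' g hgM).1, (hM2 g hgM e he hge).2.1,
            (hyU' g hgM).2, (hM2 g hgM e he hge).2.2.2⟩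
        · exact hM2 g hgM f hfM hgf
    have hye2 : (y, e.2) ∉ M.erase e := fun h =>
      (hyU' _ (Finset.mem_of_mem_erase h)).1 rfl
    have hxe1 : (x, e.1) ∉ insert (y, e.2) (M.erase e) := by
      intro h
      rcases Finset.mem_insert.1 h with h | h
      · exact hxy (congrArg Prod.fst h)
      · exact (hxU' _ (Finset.mem_of_mem_erase h)).1 rfl
    have hMpos : 1 ≤ M.card := Finset.card_pos.2 ⟨e, he⟩
    have hcard : N.card = M.card + 1 := by
      rw [hN, Finset.card_insert_of_notMem hxe1, Finset.card_insert_of_notMem hye2,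
        Finset.card_erase_of_mem he]
      omega
    have := hmax N hMN
    omega
  subst hX hX2 hX0 hX1
  set X : Set V := G.neighborSet v \ mCovered M with hXdef
  -- bound on covered set
  have hcov : (mCovered M).ncard ≤ 2 * M.card := by
    have heq : mCovered M = (↑(M.image Prod.fst ∪ M.image Prod.snd) : Set V) := by
      ext x
      simp only [mCovered, Set.mem_setOf_eq, Finset.coe_union, Set.mem_union,
        Finset.coe_image, Set.mem_image, Finset.mem_coe]
      constructor
      · rintro ⟨e, he, h | h⟩
        · exact Or.inl ⟨e, he, h⟩
        · exact Or.inr ⟨e, he, h⟩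
      · rintro (⟨e, he, h⟩ | ⟨e, he, h⟩)
        · exact ⟨e, he, Or.inl h⟩
        · exact ⟨e, he, Or.inr h⟩
    rw [heq, Set.ncard_coe_finset]
    calc (M.image Prod.fst ∪ M.image Prod.snd).card
        ≤ (M.image Prod.fst).card + (M.image Prod.snd).card := Finset.card_union_le _ _
      _ ≤ M.card + M.card := Nat.add_le_add (Finset.card_image_le) (Finset.card_image_le)
      _ = 2 * M.card := by ring
  -- bound on X
  have hXbound : (G.neighborSet v).ncard ≤ X.ncard + (mCovered M).ncard := by
    have hsub : G.neighborSet v ⊆ X ∪ mCovered M := by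
      intro x hx
      by_cases h : x ∈ mCovered M
      · exact Or.inr h
      · exact Or.inl ⟨hx, h⟩
    calc (G.neighborSet v).ncard ≤ (X ∪ mCovered M).ncard :=
          Set.ncard_le_ncard hsub (Set.toFinite _)
      _ ≤ X.ncard + (mCovered M).ncard := Set.ncard_union_le _ _
  -- bound on X₀
  have hX0bound : ({x ∈ X | G.neighborSet x = {v}} : Set V).ncard ≤ 1 := by
    by_contra h
    push_neg at h
    rw [Set.one_lt_ncard_iff (Set.toFinite _)] at h
    obtain ⟨a, b, ⟨haX, haN⟩, ⟨hbX, hbN⟩, hab⟩ := h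
    have hva : G.Adj v a := haX.1
    have hvb : G.Adj v b := hbX.1
    exact htwin ⟨v, a, b, hab, hva.ne', hvb.ne', haN, hbN⟩
  -- bound on X₂
  have hX2bound : ({x ∈ X | ∃ e ∈ M, G.Adj x e.1 ∧ G.Adj x e.2} : Set V).ncard ≤ M.card := by
    set f : V → V × V := fun x =>
      if h : ∃ e ∈ M, G.Adj x e.1 ∧ G.Adj x e.2 then h.choose else (v, v) with hfdef
    have hf : ∀ x ∈ ({x ∈ X | ∃ e ∈ M, G.Adj x e.1 ∧ G.Adj x e.2} : Set V),
        f x ∈ M ∧ G.Adj x (f x).1 ∧ G.Adj x (f x).2 := by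
      intro x hx
      obtain ⟨-, hex⟩ := hx
      simp only [hfdef, dif_pos hex]
      exact ⟨hex.choose_spec.1, hex.choose_spec.2.1, hex.choose_spec.2.2⟩
    have hinj : Set.InjOn f {x ∈ X | ∃ e ∈ M, G.Adj x e.1 ∧ G.Adj x e.2} := by
      intro x hx y hy hxy
      by_contra hne
      obtain ⟨hxM, hxa, hxb⟩ := hf x hx
      obtain ⟨hyM, hya, hyb⟩ := hf y hy
      rw [hxy] at hxa hxb
      exact swap (f y) hyM x y hne hx.1.1 hx.1.2 hxa hxb hy.1.1 hy.1.2 hya hyb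
    calc ({x ∈ X | ∃ e ∈ M, G.Adj x e.1 ∧ G.Adj x e.2} : Set V).ncard
        ≤ (↑M : Set (V × V)).ncard :=
          Set.ncard_le_ncard_of_injOn f (fun x hx => (hf x hx).1) hinj (Set.toFinite _)
      _ = M.card := Set.ncard_coe_finset M
  -- bound on X₁
  have hX1bound : X.ncard ≤
      (X \ ({x ∈ X | ∃ e ∈ M, G.Adj x e.1 ∧ G.Adj x e.2} ∪ {x ∈ X | G.neighborSet x = {v}})).ncard
      + ({x ∈ X | ∃ e ∈ M, G.Adj x e.1 ∧ G.Adj x e.2} : Set V).ncard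
      + ({x ∈ X | G.neighborSet x = {v}} : Set V).ncard := by
    have hsub : X ⊆
        (X \ ({x ∈ X | ∃ e ∈ M, G.Adj x e.1 ∧ G.Adj x e.2} ∪ {x ∈ X | G.neighborSet x = {v}}))
        ∪ ({x ∈ X | ∃ e ∈ M, G.Adj x e.1 ∧ G.Adj x e.2} ∪ {x ∈ X | G.neighborSet x = {v}}) := by
      intro x hx
      by_cases h : x ∈ ({x ∈ X | ∃ e ∈ M, G.Adj x e.1 ∧ G.Adj x e.2}
          ∪ {x ∈ X | G.neighborSet x = {v}} : Set V)
      · exact Or.inr h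
      · exact Or.inl ⟨hx, h⟩
    calc X.ncard ≤ _ := Set.ncard_le_ncard hsub (Set.toFinite _)
      _ ≤ _ + ({x ∈ X | ∃ e ∈ M, G.Adj x e.1 ∧ G.Adj x e.2}
          ∪ {x ∈ X | G.neighborSet x = {v}} : Set V).ncard := Set.ncard_union_le _ _
      _ ≤ _ := by
          have := Set.ncard_union_le ({x ∈ X | ∃ e ∈ M, G.Adj x e.1 ∧ G.Adj x e.2} : Set V)
            ({x ∈ X | G.neighborSet x = {v}} : Set V)
          omega
  rcases hd with rfl | rfl <;> omega
end

section
/- Let d ∈ {4,5}, let k be a natural number, and let G be a simple graph. Let v be a vertex of G, let 𝓜 be a matching adjacent to v of maximum size among all matchings adjacent to v, and let M be the set of vertices covered by 𝓜. Let X₁ ⊆ N(v) \ M be the set of vertices x with N(x) ∩ M ≠ ∅ and |N(x) ∩ {a, b}| ≤ 1 for every edge {a, b} ∈ 𝓜, and let M₁ = M ∩ N(X₁). Suppose M' ⊆ M₁ and X' ⊆ X₁ are sets such that there is a (d−1)-expansion Q from M' into X' (with X' exactly the set of vertices saturated by Q) and N(X') ⊆ M' ∪ {v}, and let x ∈ X'.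 Then G has a d-path vertex cover of size at most k if and only if the graph obtained from G by deleting the edge {x, v} has a d-path vertex cover of size at most k. -/
open SimpleGraph

/-- `Q` is a `q`-expansion of `A'` into `B'`. -/
def IsQExpansion {V : Type*} [DecidableEq V] (G : SimpleGraph V) (q : ℕ)
    (A' B' : Finset V) (Q : Finset (V × V)) : Prop :=
  (∀ e ∈ Q, e.1 ∈ A' ∧ e.2 ∈ B' ∧ G.Adj e.1 e.2) ∧
  (∀ a ∈ A', (Q.filter (fun e => e.1 = a)).card = q) ∧
  (Q.image Prod.snd).card = q * A'.card

/-!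
Deleting `xv` can only help a cover, so take a `d`-path vertex cover `S` of `G - xv` containing
neither `x` nor `v`. By maximality of the matching, `X'` is independent, so every neighbour of a
vertex of `X'` lies in `M' ∪ {v}`. A vertex `m ∈ M' \ S` has at least two of its `d - 1`
expansion leaves in `S`: otherwise two (for `d = 4`) or three (for `d = 5`) free leaves, `m` and
`v` form a `d`-path of `G - xv` missing `S`. Hence `2 |M' \ S| ≤ |X' ∩ S|`.

If `S` meets `X'`, exchanging `S ∩ X'` for `(M' \ S) ∪ {v}` does not increase the size, and the
new set covers `G`: a surviving path cannot visit `X'` (all neighbours of `X'` are now deleted),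
so it avoids `x` and lives in `G - xv`. If `S` misses `X'`, then `M' ⊆ S`, so in `G - S` both `x`
and a second leaf `y` of the partner of `x` are pendant at `v`; a `d`-path through `xv` starts
at `x`, and replacing `x` by `y` gives a `d`-path of `G - xv` missing `S` (for `d ≥ 4` the path
cannot contain `y` already).
-/

open Finset

section

variable {V : Type*} {G H : SimpleGraph V} {d : ℕ} {a b x v : V}

section PathVertexCover

variable {S : Set V}

lemma IsPVC.anti (hHG : H ≤ G) (hS : IsPVC G d S) : IsPVC H d S := fun _ _ p hp hlen => by
  simpa [Walk.support_mapLe_eq_support] using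
    hS (p.mapLe hHG) (hp.mapLe hHG) (by simpa using hlen)

lemma IsPVC.exists_mem_of_isChain (hS : IsPVC G d S) {l : List V} (hne : l ≠ [])
    (hl : l.length = d) (hnd : l.Nodup) (hc : l.IsChain G.Adj) : ∃ z ∈ l, z ∈ S := by
  have := List.length_pos_iff.mpr hne
  simpa using hS (Walk.ofSupport l hne hc) (by simpa [Walk.isPath_def] using hnd)
    (by rw [Walk.length_ofSupport]; omega)

lemma IsPVC.exists_mem_of_notMem_support (hS : IsPVC (G.deleteEdges {s(x, v)}) d S)
    (p : G.Walk a b) (hp : p.IsPath) (hlen : p.length + 1 = d) (hx : x ∉ p.support) :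
    ∃ z ∈ p.support, z ∈ S := by
  have hedges : ∀ e ∈ p.edges, e ∈ (G.deleteEdges {s(x, v)}).edgeSet := fun e he =>
    edgeSet_deleteEdges _ ▸ ⟨p.edges_subset_edgeSet he, by
      rintro rfl
      exact hx (p.fst_mem_support_of_mem_edges he)⟩
  simpa using hS (p.transfer _ hedges) (hp.transfer _) (by simpa using hlen)

lemma IsPVC.of_deleteEdges_of_mem (hS : IsPVC (G.deleteEdges {s(x, v)}) d S) (hx : x ∈ S) :
    IsPVC G d S := fun _ _ p hp hlen => by
  by_cases hxp : x ∈ p.support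
  · exact ⟨x, hxp, hx⟩
  · exact hS.exists_mem_of_notMem_support p hp hlen hxp

lemma SimpleGraph.Walk.exists_adj_mem_support {p : G.Walk a b} (hp : ¬p.Nil) {z : V}
    (hz : z ∈ p.support) : ∃ w ∈ p.support, G.Adj z w := by
  obtain ⟨e, he, hze⟩ := (mem_support_iff_exists_mem_edges_of_not_nil hp).mp hz
  induction e using Sym2.inductionOn with
  | hf u w =>
    rcases Sym2.mem_iff.mp hze with rfl | rfl
    · exact ⟨w, p.snd_mem_support_of_mem_edges he, p.adj_of_mem_edges he⟩
    · exact ⟨u, p.fst_mem_support_of_mem_edges he, (p.adj_of_mem_edges he).symm⟩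

lemma IsPVC.of_deleteEdges_of_neighborSet_subset (hd : 2 ≤ d)
    (hS : IsPVC (G.deleteEdges {s(x, v)}) d S) {X T : Set V} (hxX : x ∈ X)
    (hXT : ∀ y ∈ X, G.neighborSet y ⊆ T) (hST : S \ X ⊆ T) : IsPVC G d T := by
  intro a b p hp hlen
  by_contra! hpT
  have hpX : ∀ z ∈ p.support, z ∉ X := by
    intro z hz hzX
    obtain ⟨w, hw, hzw⟩ :=
      p.exists_adj_mem_support (by rw [← Walk.length_eq_zero_iff]; omega) hz
    exact hpT w hw (hXT z hzX hzw)
  obtain ⟨z, hz, hzS⟩ := hS.exists_mem_of_notMem_support p hp hlen fun hx => hpX x hx hxX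
  exact hpT z hz (hST ⟨hzS, hpX z hz⟩)

lemma SimpleGraph.Walk.IsPath.eq_start_or_eq_end_of_neighborSet_subset {p : G.Walk a b}
    (hp : p.IsPath) (hpS : ∀ z ∈ p.support, z ∉ S) (hx : G.neighborSet x ⊆ insert v S)
    (hxp : x ∈ p.support) : x = a ∨ x = b := by
  obtain ⟨i, rfl, hi⟩ := mem_support_iff_exists_getVert.mp hxp
  by_contra! h
  have hi0 : i ≠ 0 := by rintro rfl; exact h.1 p.getVert_zero
  have hin : i ≠ p.length := by rintro rfl; exact h.2 p.getVert_length
  have hnbr : ∀ j, G.Adj (p.getVert i) (p.getVert j) → p.getVert j = v := fun j hj =>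
    (hx hj).resolve_right (hpS _ (p.getVert_mem_support j))
  have hprev := hnbr (i - 1) <| by
    simpa [Nat.sub_add_cancel (Nat.pos_of_ne_zero hi0)] using
      (p.adj_getVert_succ (i := i - 1) (by omega)).symm
  have hnext := hnbr (i + 1) (p.adj_getVert_succ (by omega))
  have := hp.getVert_injOn (show i - 1 ≤ p.length by omega) (show i + 1 ≤ p.length by omega)
    (hprev.trans hnext.symm)
  omega

section Twin

variable {y : V} (hd : 4 ≤ d) (hS : IsPVC (G.deleteEdges {s(x, v)}) d S) (hxy : x ≠ y)
  (hyv : G.Adj y v) (hyS : y ∉ S) (hx : G.neighborSet x ⊆ insert v S)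
  (hy : G.neighborSet y ⊆ insert v S)
include hd hS hxy hyv hyS hx hy

lemma IsPVC.exists_mem_support_of_twin (p : G.Walk x b) (hp : p.IsPath)
    (hlen : p.length + 1 = d) : ∃ z ∈ p.support, z ∈ S := by
  by_contra! hpS
  cases p with
  | nil => simp at hlen; omega
  | @cons _ c _ hxc q =>
    rw [Walk.cons_isPath_iff] at hp
    obtain rfl : v = c := ((hx hxc).resolve_right (hpS c (by simp))).symm
    have hqS : ∀ z ∈ q.support, z ∉ S := fun z hz => hpS z (by simp [hz])
    have hlen' : 2 ≤ q.length := by simp at hlen; omega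
    have hyq : y ∉ q.support := by
      intro hyq
      -- `y` would end `q`, and the vertex before it is again `v`
      obtain rfl : y = b :=
        (hp.1.eq_start_or_eq_end_of_neighborSet_subset hqS hy hyq).resolve_left hyv.ne
      have hnil : ¬q.Nil := by rw [← Walk.length_eq_zero_iff]; omega
      have hpen : q.penultimate = v :=
        (hy (q.adj_penultimate hnil).symm).resolve_right (hqS _ (q.getVert_mem_support _))
      have := hp.1.getVert_injOn (show q.length - 1 ≤ q.length by omega)
        (show 0 ≤ q.length by omega) (hpen.trans q.getVert_zero.symm)
      omega
    obtain ⟨z, hz, hzS⟩ := hS.exists_mem_of_notMem_support (Walk.cons hyv q)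
      ((Walk.cons_isPath_iff _ _).mpr ⟨hp.1, hyq⟩) (by simpa using hlen) (by simp [hxy, hp.2])
    rcases List.mem_cons.mp (Walk.support_cons _ _ ▸ hz) with rfl | hz
    · exact hyS hzS
    · exact hqS z hz hzS

lemma IsPVC.of_deleteEdges_of_twin : IsPVC G d S := by
  intro a b p hp hlen
  by_contra! hpS
  by_cases hxp : x ∈ p.support
  · rcases hp.eq_start_or_eq_end_of_neighborSet_subset hpS hx hxp with rfl | rfl
    · obtain ⟨z, hz, hzS⟩ := hS.exists_mem_support_of_twin hd hxy hyv hyS hx hy p hp hlen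
      exact hpS z hz hzS
    · obtain ⟨z, hz, hzS⟩ := hS.exists_mem_support_of_twin hd hxy hyv hyS hx hy p.reverse
        hp.reverse (by simpa using hlen)
      exact hpS z (by simpa using hz) hzS
  · obtain ⟨z, hz, hzS⟩ := hS.exists_mem_of_notMem_support p hp hlen hxp
    exact hpS z hz hzS

end Twin

end PathVertexCover

lemma IsPVC.two_le_card_inter_of_deleteEdges [DecidableEq V] (hd : d = 4 ∨ d = 5)
    {S L : Finset V} {m : V} (hS : IsPVC (G.deleteEdges {s(x, v)}) d S) (hmS : m ∉ S)
    (hvS : v ∉ S) (hmv : m ≠ v)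
    (hL : #L = d - 1) (hLm : ∀ y ∈ L, G.Adj m y) (hLv : ∀ y ∈ L, G.Adj y v) :
    2 ≤ #(L ∩ S) := by
  by_contra! hlt
  have hfree : d - 2 ≤ #(L \ S) := by have := card_sdiff_add_card_inter L S; omega
  have hleaf : ∀ y ∈ L \ S, G.Adj m y ∧ G.Adj y v ∧ y ∉ S := fun y hy =>
    ⟨hLm y (mem_sdiff.mp hy).1, hLv y (mem_sdiff.mp hy).1, (mem_sdiff.mp hy).2⟩
  rcases hd with rfl | rfl
  · obtain ⟨z, hz, hzx⟩ := exists_mem_ne (by omega : 1 < #(L \ S)) x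
    obtain ⟨y, hy, hyz⟩ := exists_mem_ne (by omega : 1 < #(L \ S)) z
    obtain ⟨hmy, hyv, hyS⟩ := hleaf y hy
    obtain ⟨hmz, hzv, hzS⟩ := hleaf z hz
    refine absurd (hS.exists_mem_of_isChain (l := [y, m, z, v]) (by simp) rfl
      (by simp [hmy.ne', hyv.ne, hyz, hmz.ne, hmv, hzv.ne])
      (by simp [hmy.symm, hmz, hzv, hmv, hzx, hyv.ne, hzv.ne])) ?_
    simp [hyS, hmS, hzS, hvS]
  · obtain ⟨z, hz, hzx⟩ := exists_mem_ne (by omega : 1 < #(L \ S)) x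
    have hrest : 1 < #((L \ S).erase z) := by rw [card_erase_of_mem hz]; omega
    obtain ⟨w, hw, hwx⟩ := exists_mem_ne hrest x
    obtain ⟨y, hy, hyw⟩ := exists_mem_ne hrest w
    obtain ⟨hwz, hw⟩ := mem_erase.mp hw
    obtain ⟨hyz, hy⟩ := mem_erase.mp hy
    obtain ⟨hmy, hyv, hyS⟩ := hleaf y hy
    obtain ⟨hmz, hzv, hzS⟩ := hleaf z hz
    obtain ⟨hmw, hwv, hwS⟩ := hleaf w hw
    refine absurd (hS.exists_mem_of_isChain (l := [y, m, z, v, w]) (by simp) rfl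
      (by simp [hmy.ne', hyv.ne, hyz, hyw, hmz.ne, hmv, hmw.ne, hzv.ne, hwz.symm, hwv.ne'])
      (by simp [hmy.symm, hmz, hzv, hmv, hzx, hyv.ne, hzv.ne, hwv.symm, hwx, hwv.ne])) ?_
    simp [hyS, hmS, hzS, hvS, hwS]

section Expansion

variable [DecidableEq V] {q n : ℕ} {A B : Finset V} {Q : Finset (V × V)} {y : V}

def expansionNbrs (Q : Finset (V × V)) (a : V) : Finset V :=
  (Q.filter (·.1 = a)).image Prod.snd

@[simp]
lemma mem_expansionNbrs : y ∈ expansionNbrs Q a ↔ (a, y) ∈ Q := by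
  simp [expansionNbrs]

namespace IsQExpansion

variable (hQ : IsQExpansion G q A B Q)
include hQ

lemma injOn_snd : Set.InjOn Prod.snd (Q : Set (V × V)) := by
  obtain ⟨hmem, hdeg, himage⟩ := hQ
  rw [← card_image_iff, himage, card_eq_sum_card_fiberwise fun e he => (hmem e he).1,
    sum_congr rfl hdeg, sum_const, smul_eq_mul, mul_comm]

lemma card_expansionNbrs (ha : a ∈ A) : #(expansionNbrs Q a) = q := by
  rw [expansionNbrs, card_image_of_injOn (hQ.injOn_snd.mono (coe_subset.mpr (filter_subset _ _))),
    hQ.2.1 a ha]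

lemma adj_of_mem (he : (a, y) ∈ Q) : G.Adj a y := (hQ.1 _ he).2.2

lemma expansionNbrs_subset : expansionNbrs Q a ⊆ B := fun _ hy =>
  (hQ.1 _ (mem_expansionNbrs.mp hy)).2.1

lemma fst_mem_of_mem_image_snd (hy : y ∈ Q.image Prod.snd) : ∃ a ∈ A, (a, y) ∈ Q := by
  obtain ⟨⟨a, y⟩, he, rfl⟩ := mem_image.mp hy
  exact ⟨a, (hQ.1 _ he).1, he⟩

lemma pairwiseDisjoint_expansionNbrs (s : Set V) : s.PairwiseDisjoint (expansionNbrs Q) :=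
  fun _ _ _ _ haa' => disjoint_left.mpr fun _ hy hy' =>
    haa' (congrArg Prod.fst <|
      hQ.injOn_snd (mem_expansionNbrs.mp hy) (mem_expansionNbrs.mp hy') rfl)

lemma card_mul_le_card_inter {S : Finset V} (A₀ : Finset V)
    (hA₀ : ∀ a ∈ A₀, n ≤ #(expansionNbrs Q a ∩ S)) : #A₀ * n ≤ #(B ∩ S) :=
  calc #A₀ * n ≤ ∑ a ∈ A₀, #(expansionNbrs Q a ∩ S) := by
        simpa using card_nsmul_le_sum A₀ _ n hA₀
    _ = #(A₀.biUnion fun a => expansionNbrs Q a ∩ S) :=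
        (card_biUnion <| (hQ.pairwiseDisjoint_expansionNbrs _).mono fun _ =>
          inter_subset_left).symm
    _ ≤ #(B ∩ S) := card_le_card <| biUnion_subset.mpr fun _ _ =>
        inter_subset_inter_right hQ.expansionNbrs_subset

end IsQExpansion

end Expansion

section Matching

variable {M : Finset (V × V)} {y z : V}

lemma MatchingAdjTo.notMem_mCovered (hM : MatchingAdjTo G v M) : v ∉ mCovered M := by
  rintro ⟨e, he, h | h⟩
  · exact (hM.1 e he).2.1 h
  · exact (hM.1 e he).2.2.1 h

lemma MatchingAdjTo.insert [DecidableEq V] (hM : MatchingAdjTo G v M) (hyz : G.Adj y z)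
    (hy : G.Adj v y) (hz : G.Adj v z) (hyM : y ∉ mCovered M) (hzM : z ∉ mCovered M) :
    MatchingAdjTo G v (insert (y, z) M) := by
  refine ⟨fun e he => ?_, fun e he f hf hef => ?_⟩
  · rcases mem_insert.mp he with rfl | he
    · exact ⟨hyz, hy.ne', hz.ne', Or.inl hy⟩
    · exact hM.1 e he
  · have hfresh : ∀ g ∈ M, g.1 ≠ y ∧ g.2 ≠ y ∧ g.1 ≠ z ∧ g.2 ≠ z := fun g hg =>
      ⟨fun h => hyM ⟨g, hg, Or.inl h⟩, fun h => hyM ⟨g, hg, Or.inr h⟩,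
        fun h => hzM ⟨g, hg, Or.inl h⟩, fun h => hzM ⟨g, hg, Or.inr h⟩⟩
    rcases mem_insert.mp he with rfl | he <;> rcases mem_insert.mp hf with rfl | hf
    · exact absurd rfl hef
    · have := hfresh f hf; exact ⟨this.1.symm, this.2.1.symm, this.2.2.1.symm, this.2.2.2.symm⟩
    · have := hfresh e he; exact ⟨this.1, this.2.2.1, this.2.1, this.2.2.2⟩
    · exact hM.2 e he f hf hef

lemma MatchingAdjTo.not_adj_of_forall_card_le [DecidableEq V] (hM : MatchingAdjTo G v M)
    (hmax : ∀ N : Finset (V × V), MatchingAdjTo G v N → #N ≤ #M)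
    (hy : G.Adj v y) (hz : G.Adj v z) (hyM : y ∉ mCovered M) (hzM : z ∉ mCovered M) :
    ¬G.Adj y z := fun hyz => by
  have := hmax _ (hM.insert hyz hy hz hyM hzM)
  rw [card_insert_of_notMem fun h => hyM ⟨_, h, Or.inl rfl⟩] at this
  omega

end Matching

lemma card_insert_sdiff_union_sdiff_le [DecidableEq V] {S X M' : Finset V}
    (hM' : #(M' \ S) * 2 ≤ #(X ∩ S)) (hXS : (X ∩ S).Nonempty) :
    #(insert v (S \ X ∪ M' \ S)) ≤ #S := by
  have hsplit := card_sdiff_add_card_inter S X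
  rw [inter_comm] at hsplit
  have := card_insert_le v (S \ X ∪ M' \ S)
  have := card_union_le (S \ X) (M' \ S)
  have := hXS.card_pos
  omega

theorem exists_isPVC_of_deleteEdges [DecidableEq V] (hd : d = 4 ∨ d = 5) {M' X : Finset V}
    {Q : Finset (V × V)} (hQ : IsQExpansion G (d - 1) M' X Q) (hx : x ∈ Q.image Prod.snd)
    (hXv : ∀ y ∈ X, G.Adj y v) (hXN : ∀ y ∈ X, G.neighborSet y ⊆ insert v ↑M')
    (hvM' : v ∉ M') (hM'X : Disjoint M' X) {S : Finset V}
    (hS : IsPVC (G.deleteEdges {s(x, v)}) d ↑S) :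
    ∃ T : Finset V, #T ≤ #S ∧ IsPVC G d ↑T := by
  by_cases hxS : x ∈ S
  · exact ⟨S, le_rfl, hS.of_deleteEdges_of_mem hxS⟩
  by_cases hvS : v ∈ S
  · rw [Sym2.eq_swap] at hS
    exact ⟨S, le_rfl, hS.of_deleteEdges_of_mem hvS⟩
  have hleaves : ∀ m ∈ M' \ S, 2 ≤ #(expansionNbrs Q m ∩ S) := by
    intro m hm
    obtain ⟨hm, hmS⟩ := mem_sdiff.mp hm
    exact hS.two_le_card_inter_of_deleteEdges hd hmS hvS (fun h => hvM' (h ▸ hm))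
      (hQ.card_expansionNbrs hm) (fun y hy => hQ.adj_of_mem (mem_expansionNbrs.mp hy))
      (fun y hy => hXv y (hQ.expansionNbrs_subset hy))
  obtain ⟨m₀, hm₀, hxm₀⟩ := hQ.fst_mem_of_mem_image_snd hx
  have hxX : x ∈ X := (hQ.1 _ hxm₀).2.1
  by_cases hXS : (X ∩ S).Nonempty
  · refine ⟨insert v (S \ X ∪ M' \ S), ?_,
      hS.of_deleteEdges_of_neighborSet_subset (by omega) hxX (fun y hy z hz => ?_) ?_⟩
    · exact card_insert_sdiff_union_sdiff_le (hQ.card_mul_le_card_inter _ hleaves) hXS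
    · rcases hXN y hy hz with rfl | hz
      · simp
      · by_cases hzS : z ∈ S <;> simp [hz, hzS, disjoint_left.mp hM'X hz]
    · intro z hz
      simp [hz.1, hz.2]
  · have hM'S : M' ⊆ S := by
      intro m hm
      by_contra hmS
      have := hleaves m (mem_sdiff.mpr ⟨hm, hmS⟩)
      have := card_le_card (inter_subset_inter_right hQ.expansionNbrs_subset :
        expansionNbrs Q m ∩ S ⊆ X ∩ S)
      rw [not_nonempty_iff_eq_empty.mp hXS, card_empty] at this
      omega
    obtain ⟨y, hy, hyx⟩ := exists_mem_ne
      (by rw [hQ.card_expansionNbrs hm₀]; omega : 1 < #(expansionNbrs Q m₀)) x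
    have hyX := hQ.expansionNbrs_subset hy
    have hXN' : ∀ y ∈ X, G.neighborSet y ⊆ insert v ↑S := fun y hy =>
      (hXN y hy).trans (Set.insert_subset_insert (coe_subset.mpr hM'S))
    exact ⟨S, le_rfl, hS.of_deleteEdges_of_twin (by omega) (Ne.symm hyx) (hXv y hyX)
      (fun hyS => hXS ⟨y, mem_inter.mpr ⟨hyX, hyS⟩⟩) (hXN' x hxX) (hXN' y hyX)⟩

end

theorem expansion_rule_general {V : Type*} [DecidableEq V] (G : SimpleGraph V)
    (d k : ℕ) (hd : d = 4 ∨ d = 5)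
    (v : V) (M : Finset (V × V)) (hM : MatchingAdjTo G v M)
    (hmax : ∀ N : Finset (V × V), MatchingAdjTo G v N → N.card ≤ M.card)
    (X₁ : Set V)
    (hX1 : X₁ = {x | x ∈ G.neighborSet v \ mCovered M ∧
      (G.neighborSet x ∩ mCovered M).Nonempty ∧
      ∀ e ∈ M, ¬ (G.Adj x e.1 ∧ G.Adj x e.2)})
    (M' X' : Finset V) (Q : Finset (V × V))
    (hM' : ↑M' ⊆ mCovered M ∩ setNbrs G X₁)
    (hX' : ↑X' ⊆ X₁)
    (hexp : IsQExpansion G (d - 1) M' X' Q)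
    (hsat : Q.image Prod.snd = X')
    (hNX' : setNbrs G ↑X' ⊆ ↑M' ∪ {v})
    (x : V) (hx : x ∈ X') :
    (∃ S : Finset V, S.card ≤ k ∧ IsPVC G d ↑S) ↔
      (∃ S : Finset V, S.card ≤ k ∧ IsPVC (G.deleteEdges {s(x, v)}) d ↑S) := by
  have hX'v : ∀ y ∈ X', G.Adj v y ∧ y ∉ mCovered M := fun y hy => by
    have hy := hX' hy
    rw [hX1] at hy
    exact hy.1
  have hX'N : ∀ y ∈ X', G.neighborSet y ⊆ insert v ↑M' := by
    intro y hy z hz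
    have hzX' : z ∉ X' := fun hzX' => hM.not_adj_of_forall_card_le hmax (hX'v y hy).1
      (hX'v z hzX').1 (hX'v y hy).2 (hX'v z hzX').2 hz
    simpa [Set.union_singleton] using hNX' ⟨hzX', y, hy, hz⟩
  refine ⟨fun ⟨S, hSk, hS⟩ => ⟨S, hSk, hS.anti (deleteEdges_le _)⟩,
    fun ⟨S, hSk, hS⟩ => ?_⟩
  obtain ⟨T, hTS, hT⟩ := exists_isPVC_of_deleteEdges hd hexp (hsat ▸ hx)
    (fun y hy => (hX'v y hy).1.symm) hX'N (fun hv => hM.notMem_mCovered (hM' hv).1)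
    (disjoint_left.mpr fun m hm hmX' => (hX'v m hmX').2 (hM' hm).1) hS
  exact ⟨T, hTS.trans hSk, hT⟩

/-- The expansion reduction rule: deleting the edge `{x, v}` preserves the existence of a
`d`-path vertex cover of size at most `k`, for `d ∈ {4,5}`. -/
theorem expansion_rule {V : Type*} [Fintype V] [DecidableEq V] (G : SimpleGraph V)
    (d k : ℕ) (hd : d = 4 ∨ d = 5)
    (v : V) (M : Finset (V × V)) (hM : MatchingAdjTo G v M)
    (hmax : ∀ N : Finset (V × V), MatchingAdjTo G v N → N.card ≤ M.card)
    (X₁ : Set V)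
    (hX1 : X₁ = {x | x ∈ G.neighborSet v \ mCovered M ∧
      (G.neighborSet x ∩ mCovered M).Nonempty ∧
      ∀ e ∈ M, ¬ (G.Adj x e.1 ∧ G.Adj x e.2)})
    (M' X' : Finset V) (Q : Finset (V × V))
    (hM' : ↑M' ⊆ mCovered M ∩ setNbrs G X₁)
    (hX' : ↑X' ⊆ X₁)
    (hexp : IsQExpansion G (d - 1) M' X' Q)
    (hsat : Q.image Prod.snd = X')
    (hNX' : setNbrs G ↑X' ⊆ ↑M' ∪ {v})
    (x : V) (hx : x ∈ X') :
    (∃ S : Finset V, S.card ≤ k ∧ IsPVC G d ↑S) ↔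
      (∃ S : Finset V, S.card ≤ k ∧ IsPVC (G.deleteEdges {s(x, v)}) d ↑S) :=
  expansion_rule_general G d k hd v M hM hmax X₁ hX1 M' X' Q hM' hX' hexp hsat hNX' x hx
end

section
/- Every connected simple graph that contains no path on 5 vertices as a subgraph is either a graph on at most 4 vertices, a star with a triangle, or a di-star. -/
open SimpleGraph

/-- `G` is a star with a triangle: a star (with center `c`) with an extra edge joining two of
its leaves `l₁, l₂`. -/
def IsStarWithTriangle {V : Type*} (G : SimpleGraph V) : Prop :=
  ∃ c l₁ l₂ : V, c ≠ l₁ ∧ c ≠ l₂ ∧ l₁ ≠ l₂ ∧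
    ∀ x y : V, G.Adj x y ↔
      ((x = c ∧ y ≠ c) ∨ (y = c ∧ x ≠ c) ∨ (x = l₁ ∧ y = l₂) ∨ (x = l₂ ∧ y = l₁))

/-- `G` is a di-star: two vertex-disjoint stars with centers `c` and `c'` joined by the edge
`{c, c'}`; every other vertex is a leaf attached to exactly one of the centers, and every
edge is incident to a center. -/
def IsDiStar {V : Type*} (G : SimpleGraph V) : Prop :=
  ∃ c c' : V, c ≠ c' ∧ G.Adj c c' ∧
    (∀ x : V, x ≠ c → x ≠ c' → (G.Adj c x ↔ ¬ G.Adj c' x)) ∧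
    (∀ x y : V, G.Adj x y → x = c ∨ x = c' ∨ y = c ∨ y = c')

private lemma P5free.mk5 {V : Type*} {G : SimpleGraph V}
    (hP5 : ¬ ∃ (a b : V) (p : G.Walk a b), p.IsPath ∧ p.length + 1 = 5)
    {a b c d e : V} (hab : G.Adj a b) (hbc : G.Adj b c) (hcd : G.Adj c d) (hde : G.Adj d e)
    (h1 : a ≠ b) (h2 : a ≠ c) (h3 : a ≠ d) (h4 : a ≠ e) (h5 : b ≠ c) (h6 : b ≠ d)
    (h7 : b ≠ e) (h8 : c ≠ d) (h9 : c ≠ e) (h10 : d ≠ e) : False := by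
  apply hP5
  refine ⟨a, e, .cons hab (.cons hbc (.cons hcd (.cons hde .nil))), ?_, rfl⟩
  simp [Walk.cons_isPath_iff]
  tauto

private lemma P5free.pathBound {V : Type*} {G : SimpleGraph V}
    (nP5 : ∀ a b c d e : V, G.Adj a b → G.Adj b c → G.Adj c d → G.Adj d e →
      a ≠ b → a ≠ c → a ≠ d → a ≠ e → b ≠ c → b ≠ d → b ≠ e → c ≠ d → c ≠ e → d ≠ e → False) :
    ∀ {x y : V} (p : G.Walk x y), p.IsPath → p.length ≤ 3 := by
  intro x y p hp
  match p with
  | .nil => simp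
  | .cons h .nil => simp
  | .cons h (.cons h2 .nil) => simp [Walk.length_cons]
  | .cons h (.cons h2 (.cons h3 .nil)) => simp [Walk.length_cons]
  | .cons (v := v1) h (.cons (v := v2) h2 (.cons (v := v3) h3 (.cons (v := v4) h4 q))) =>
    exfalso
    simp only [Walk.cons_isPath_iff, Walk.support_cons, List.mem_cons] at hp
    have hm := q.start_mem_support
    obtain ⟨⟨⟨⟨hq, h1⟩, h2'⟩, h3'⟩, h4'⟩ := hp
    push_neg at h2' h3' h4'
    exact nP5 x v1 v2 v3 v4 h h2 h3 h4
      (fun e => h4'.1 e) (fun e => h4'.2.1 e) (fun e => h4'.2.2.1 e)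
      (fun e => h4'.2.2.2 (e ▸ hm)) (fun e => h3'.1 e) (fun e => h3'.2.1 e)
      (fun e => h3'.2.2 (e ▸ hm)) (fun e => h2'.1 e) (fun e => h2'.2 (e ▸ hm))
      (fun e => h1 (e ▸ hm))

private lemma P5free.reachCases {V : Type*} {G : SimpleGraph V}
    (h3 : ∀ {x y : V} (p : G.Walk x y), p.IsPath → p.length ≤ 3)
    {w a : V} (h : G.Reachable w a) :
    w = a ∨ G.Adj w a ∨
    (∃ x, x ≠ w ∧ x ≠ a ∧ G.Adj w x ∧ G.Adj x a) ∨
    (∃ x y, x ≠ w ∧ x ≠ a ∧ y ≠ w ∧ y ≠ a ∧ x ≠ y ∧ G.Adj w x ∧ G.Adj x y ∧ G.Adj y a) := by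
  classical
  obtain ⟨q⟩ := h
  obtain ⟨p, hp⟩ := q.toPath
  clear q
  match p, hp with
  | .nil, _ => exact Or.inl rfl
  | .cons h .nil, _ => exact Or.inr (Or.inl h)
  | .cons (v := v1) h1 (.cons h2 .nil), hp =>
    refine Or.inr <| Or.inr <| Or.inl ⟨v1, ?_, ?_, h1, h2⟩ <;>
    · simp only [Walk.cons_isPath_iff, Walk.support_cons, Walk.support_nil, List.mem_cons,
        List.mem_singleton, List.not_mem_nil] at hp
      tauto
  | .cons (v := v1) h1 (.cons (v := v2) h2 (.cons h3' .nil)), hp =>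
    refine Or.inr <| Or.inr <| Or.inr ⟨v1, v2, ?_, ?_, ?_, ?_, ?_, h1, h2, h3'⟩ <;>
    · simp only [Walk.cons_isPath_iff, Walk.support_cons, Walk.support_nil, List.mem_cons,
        List.mem_singleton, List.not_mem_nil] at hp
      tauto
  | .cons h1 (.cons h2 (.cons h3' (.cons h4 q))), hp =>
    exact absurd (h3 _ hp) (by simp [Walk.length_cons])

private lemma P5free.existsOut {V : Type*} [Fintype V] (h5 : 5 ≤ Fintype.card V)
    (a b c d : V) : ∃ w, w ≠ a ∧ w ≠ b ∧ w ≠ c ∧ w ≠ d := by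
  classical
  by_contra hc
  push_neg at hc
  have hsub : (Finset.univ : Finset V) ⊆ {a, b, c, d} := by
    intro w _
    simp only [Finset.mem_insert, Finset.mem_singleton]
    by_cases h1 : w = a; · tauto
    by_cases h2 : w = b; · tauto
    by_cases h3 : w = c; · tauto
    exact Or.inr (Or.inr (Or.inr (hc w h1 h2 h3)))
  have hle := Finset.card_le_card hsub
  have e1 := Finset.card_insert_le a ({b, c, d} : Finset V)
  have e2 := Finset.card_insert_le b ({c, d} : Finset V)
  have e3 := Finset.card_insert_le c ({d} : Finset V)
  have e4 : ({d} : Finset V).card = 1 := Finset.card_singleton d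
  rw [Finset.card_univ] at hle
  omega

/-- Every connected graph containing no path on 5 vertices as a subgraph is either a graph
on at most 4 vertices, a star with a triangle, or a di-star. -/
theorem connected_P5_free {V : Type*} [Fintype V] (G : SimpleGraph V)
    (hconn : G.Connected)
    (hP5 : ¬ ∃ (a b : V) (p : G.Walk a b), p.IsPath ∧ p.length + 1 = 5) :
    Fintype.card V ≤ 4 ∨ IsStarWithTriangle G ∨ IsDiStar G := by
  by_cases hcard : Fintype.card V ≤ 4
  · exact Or.inl hcard
  push_neg at hcard
  have hcard5 : 5 ≤ Fintype.card V := hcard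
  have nP5 : ∀ a b c d e : V, G.Adj a b → G.Adj b c → G.Adj c d → G.Adj d e →
      a ≠ b → a ≠ c → a ≠ d → a ≠ e → b ≠ c → b ≠ d → b ≠ e → c ≠ d → c ≠ e → d ≠ e → False :=
    fun a b c d e hab hbc hcd hde h1 h2 h3 h4 h5 h6 h7 h8 h9 h10 =>
      P5free.mk5 hP5 hab hbc hcd hde h1 h2 h3 h4 h5 h6 h7 h8 h9 h10
  have hbound : ∀ {x y : V} (p : G.Walk x y), p.IsPath → p.length ≤ 3 := P5free.pathBound nP5
  have reach : ∀ w a : V, w = a ∨ G.Adj w a ∨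
      (∃ x, x ≠ w ∧ x ≠ a ∧ G.Adj w x ∧ G.Adj x a) ∨
      (∃ x y, x ≠ w ∧ x ≠ a ∧ y ≠ w ∧ y ≠ a ∧ x ≠ y ∧ G.Adj w x ∧ G.Adj x y ∧ G.Adj y a) :=
    fun w a => P5free.reachCases hbound (hconn w a)
  have hout := P5free.existsOut hcard5
  by_cases hP4 : ∃ a b c d : V, G.Adj a b ∧ G.Adj b c ∧ G.Adj c d ∧
      a ≠ b ∧ a ≠ c ∧ a ≠ d ∧ b ≠ c ∧ b ≠ d ∧ c ≠ d
  · -- Case B : there is a path on four vertices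
    obtain ⟨a, b, c, d, hab, hbc, hcd, dab, dac, dad, dbc, dbd, dcd⟩ := hP4
    -- No outside vertex sees a or d
    have Ha : ∀ w, w ≠ a → w ≠ b → w ≠ c → w ≠ d → ¬ G.Adj w a :=
      fun w hwa hwb hwc hwd h =>
        nP5 w a b c d h hab hbc hcd hwa hwb hwc hwd dab dac dad dbc dbd dcd
    have Hd : ∀ w, w ≠ a → w ≠ b → w ≠ c → w ≠ d → ¬ G.Adj w d :=
      fun w hwa hwb hwc hwd h =>
        nP5 a b c d w hab hbc hcd h.symm dab dac dad hwa.symm dbc dbd hwb.symm dcd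
          hwc.symm hwd.symm
    -- Every outside vertex sees b or c
    have Hbc : ∀ w, w ≠ a → w ≠ b → w ≠ c → w ≠ d → G.Adj w b ∨ G.Adj w c := by
      intro w hwa hwb hwc hwd
      rcases reach w a with rfl | hadj | ⟨x, hxw, hxa, hwx, hxa2⟩ |
        ⟨x, y, hxw, hxa, hyw, hya, hxy, hwx, hxy2, hya2⟩
      · exact absurd rfl hwa
      · exact absurd hadj (Ha w hwa hwb hwc hwd)
      · by_cases hxb : x = b
        · exact Or.inl (hxb ▸ hwx)
        by_cases hxc : x = c
        · exact Or.inr (hxc ▸ hwx)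
        by_cases hxd : x = d
        · exact absurd (hxd ▸ hwx) (Hd w hwa hwb hwc hwd)
        · exact absurd hxa2 (Ha x hxa hxb hxc hxd)
      · by_cases hyb : y = b
        · rw [hyb] at hxy hxy2
          by_cases hxc : x = c
          · exact Or.inr (hxc ▸ hwx)
          by_cases hxd : x = d
          · exact absurd (hxd ▸ hwx) (Hd w hwa hwb hwc hwd)
          · exact (nP5 w x b c d hwx hxy2 hbc hcd hxw.symm hwb hwc hwd hxy hxc hxd
              dbc dbd dcd).elim
        by_cases hyc : y = c
        · rw [hyc] at hxy hxy2
          by_cases hxb : x = b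
          · exact Or.inl (hxb ▸ hwx)
          by_cases hxd : x = d
          · exact absurd (hxd ▸ hwx) (Hd w hwa hwb hwc hwd)
          · exact (nP5 a b c x w hab hbc hxy2.symm hwx.symm dab dac hxa.symm hwa.symm dbc
              (Ne.symm hxb) hwb.symm hxy.symm hwc.symm hxw).elim
        by_cases hyd : y = d
        · rw [hyd] at hxy hxy2
          by_cases hxb : x = b
          · exact Or.inl (hxb ▸ hwx)
          by_cases hxc : x = c
          · exact Or.inr (hxc ▸ hwx)
          · exact (nP5 a b c d x hab hbc hcd hxy2.symm dab dac dad hxa.symm dbc dbd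
              (Ne.symm hxb) dcd (Ne.symm hxc) hxy.symm).elim
        · exact absurd hya2 (Ha y hya hyb hyc hyd)
    -- No outside vertex sees both b and c
    have Hnboth : ∀ w, w ≠ a → w ≠ b → w ≠ c → w ≠ d → ¬ (G.Adj w b ∧ G.Adj w c) :=
      fun w hwa hwb hwc hwd ⟨h1, h2⟩ =>
        nP5 a b w c d hab h1.symm h2 hcd dab hwa.symm dac dad hwb.symm dbc dbd hwc hwd dcd
    -- a and d are not adjacent
    have Had : ¬ G.Adj a d := by
      intro h
      obtain ⟨w, hwa, hwb, hwc, hwd⟩ := hout a b c d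
      rcases Hbc w hwa hwb hwc hwd with h1 | h1
      · exact nP5 w b a d c h1 hab.symm h hcd.symm hwb hwa hwd hwc dab.symm dbd dbc dad
          dac dcd.symm
      · exact nP5 w c d a b h1 hcd h.symm hab hwc hwd hwa hwb dcd dac.symm dbc.symm
          dad.symm dbd.symm dab
    -- No edges between outside vertices
    have Hww : ∀ w w', w ≠ a → w ≠ b → w ≠ c → w ≠ d →
        w' ≠ a → w' ≠ b → w' ≠ c → w' ≠ d → ¬ G.Adj w w' := by
      intro w w' hwa hwb hwc hwd h'a h'b h'c h'd hadj
      rcases Hbc w hwa hwb hwc hwd with h1 | h1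
      · exact nP5 w' w b c d hadj.symm h1 hbc hcd hadj.ne' h'b h'c h'd hwb hwc hwd dbc dbd dcd
      · exact nP5 a b c w w' hab hbc h1.symm hadj dab dac hwa.symm h'a.symm dbc hwb.symm
          h'b.symm hwc.symm h'c.symm hadj.ne
    by_cases hac : G.Adj a c
    · -- star with triangle centered at c with triangle c a b
      have Hwc : ∀ w, w ≠ a → w ≠ b → w ≠ c → w ≠ d → G.Adj w c := by
        intro w hwa hwb hwc hwd
        refine (Hbc w hwa hwb hwc hwd).resolve_left fun h1 => ?_
        exact nP5 w b a c d h1 hab.symm hac hcd hwb hwa hwc hwd dab.symm dbc dbd dac dad dcd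
      have Hbd : ¬ G.Adj b d := by
        intro hbd
        obtain ⟨w, hwa, hwb, hwc, hwd⟩ := hout a b c d
        exact nP5 w c d b a (Hwc w hwa hwb hwc hwd) hcd hbd.symm hab.symm hwc hwd hwb hwa
          dcd dbc.symm dac.symm dbd.symm dad.symm dab.symm
      have HcAll : ∀ y, y ≠ c → G.Adj c y := by
        intro y hyc
        by_cases hya : y = a
        · exact hya ▸ hac.symm
        by_cases hyb : y = b
        · exact hyb ▸ hbc.symm
        by_cases hyd : y = d
        · exact hyd ▸ hcd
        · exact (Hwc y hya hyb hyc hyd).symm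
      refine Or.inr (Or.inl ⟨c, a, b, dac.symm, dbc.symm, dab, fun x y => ⟨?_, ?_⟩⟩)
      · intro hxy
        by_cases hxc : x = c
        · exact Or.inl ⟨hxc, by rw [hxc] at hxy; exact hxy.ne'⟩
        by_cases hyc : y = c
        · exact Or.inr (Or.inl ⟨hyc, hxc⟩)
        by_cases hxa : x = a
        · rw [hxa] at hxy
          by_cases hyb : y = b
          · exact Or.inr (Or.inr (Or.inl ⟨hxa, hyb⟩))
          by_cases hya : y = a
          · exact absurd (hya ▸ hxy) (G.irrefl)
          by_cases hyd : y = d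
          · exact absurd (hyd ▸ hxy) Had
          · exact absurd hxy.symm (Ha y hya hyb hyc hyd)
        by_cases hxb : x = b
        · rw [hxb] at hxy
          by_cases hya : y = a
          · exact Or.inr (Or.inr (Or.inr ⟨hxb, hya⟩))
          by_cases hyb : y = b
          · exact absurd (hyb ▸ hxy) (G.irrefl)
          by_cases hyd : y = d
          · exact absurd (hyd ▸ hxy) Hbd
          · exact absurd ⟨hxy.symm, Hwc y hya hyb hyc hyd⟩ (Hnboth y hya hyb hyc hyd)
        by_cases hxd : x = d
        · rw [hxd] at hxy
          by_cases hya : y = a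
          · exact absurd (hya ▸ hxy).symm Had
          by_cases hyb : y = b
          · exact absurd (hyb ▸ hxy).symm Hbd
          by_cases hyd : y = d
          · exact absurd (hyd ▸ hxy) (G.irrefl)
          · exact absurd hxy.symm (Hd y hya hyb hyc hyd)
        · by_cases hya : y = a
          · exact (Ha x hxa hxb hxc hxd (hya ▸ hxy)).elim
          by_cases hyb : y = b
          · exact absurd ⟨hyb ▸ hxy, Hwc x hxa hxb hxc hxd⟩ (Hnboth x hxa hxb hxc hxd)
          by_cases hyd : y = d
          · exact absurd (hyd ▸ hxy) (Hd x hxa hxb hxc hxd)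
          · exact absurd hxy (Hww x y hxa hxb hxc hxd hya hyb hyc hyd)
      · rintro (⟨rfl, hy⟩ | ⟨rfl, hx⟩ | ⟨rfl, rfl⟩ | ⟨rfl, rfl⟩)
        · exact HcAll y hy
        · exact (HcAll x hx).symm
        · exact hab
        · exact hab.symm
    by_cases hbd : G.Adj b d
    · -- star with triangle centered at b with triangle b c d
      have Hwb : ∀ w, w ≠ a → w ≠ b → w ≠ c → w ≠ d → G.Adj w b := by
        intro w hwa hwb hwc hwd
        refine (Hbc w hwa hwb hwc hwd).resolve_right fun h1 => ?_
        exact nP5 w c d b a h1 hcd hbd.symm hab.symm hwc hwd hwb hwa dcd dbc.symm dac.symm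
          dbd.symm dad.symm dab.symm
      have HbAll : ∀ y, y ≠ b → G.Adj b y := by
        intro y hyb
        by_cases hya : y = a
        · exact hya ▸ hab.symm
        by_cases hyc : y = c
        · exact hyc ▸ hbc
        by_cases hyd : y = d
        · exact hyd ▸ hbd
        · exact (Hwb y hya hyb hyc hyd).symm
      refine Or.inr (Or.inl ⟨b, c, d, dbc, dbd, dcd, fun x y => ⟨?_, ?_⟩⟩)
      · intro hxy
        by_cases hxb : x = b
        · exact Or.inl ⟨hxb, by rw [hxb] at hxy; exact hxy.ne'⟩
        by_cases hyb : y = b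
        · exact Or.inr (Or.inl ⟨hyb, hxb⟩)
        by_cases hxa : x = a
        · rw [hxa] at hxy
          by_cases hya : y = a
          · exact absurd (hya ▸ hxy) (G.irrefl)
          by_cases hyc : y = c
          · exact absurd (hyc ▸ hxy) hac
          by_cases hyd : y = d
          · exact absurd (hyd ▸ hxy) Had
          · exact absurd hxy.symm (Ha y hya hyb hyc hyd)
        by_cases hxc : x = c
        · rw [hxc] at hxy
          by_cases hya : y = a
          · exact absurd (hya ▸ hxy).symm hac
          by_cases hyd : y = d
          · exact Or.inr (Or.inr (Or.inl ⟨hxc, hyd⟩))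
          by_cases hyc : y = c
          · exact absurd (hyc ▸ hxy) (G.irrefl)
          · exact absurd ⟨Hwb y hya hyb hyc hyd, hxy.symm⟩ (Hnboth y hya hyb hyc hyd)
        by_cases hxd : x = d
        · rw [hxd] at hxy
          by_cases hya : y = a
          · exact absurd (hya ▸ hxy).symm Had
          by_cases hyc : y = c
          · exact Or.inr (Or.inr (Or.inr ⟨hxd, hyc⟩))
          by_cases hyd : y = d
          · exact absurd (hyd ▸ hxy) (G.irrefl)
          · exact absurd hxy.symm (Hd y hya hyb hyc hyd)
        · by_cases hya : y = a
          · exact absurd (hya ▸ hxy) (Ha x hxa hxb hxc hxd)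
          by_cases hyc : y = c
          · exact absurd ⟨Hwb x hxa hxb hxc hxd, hyc ▸ hxy⟩ (Hnboth x hxa hxb hxc hxd)
          by_cases hyd : y = d
          · exact absurd (hyd ▸ hxy) (Hd x hxa hxb hxc hxd)
          · exact absurd hxy (Hww x y hxa hxb hxc hxd hya hyb hyc hyd)
      · rintro (⟨rfl, hy⟩ | ⟨rfl, hx⟩ | ⟨rfl, rfl⟩ | ⟨rfl, rfl⟩)
        · exact HbAll y hy
        · exact (HbAll x hx).symm
        · exact hcd
        · exact hcd.symm
    · -- di-star with centers b and c
      refine Or.inr (Or.inr ⟨b, c, dbc, hbc, ?_, ?_⟩)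
      · intro x hxb hxc
        by_cases hxa : x = a
        · rw [hxa]
          exact ⟨fun _ hca => hac hca.symm, fun _ => hab.symm⟩
        by_cases hxd : x = d
        · rw [hxd]
          exact ⟨fun h => (hbd h).elim, fun h => (h hcd).elim⟩
        · constructor
          · intro h hc
            exact Hnboth x hxa hxb hxc hxd ⟨h.symm, hc.symm⟩
          · intro h
            exact ((Hbc x hxa hxb hxc hxd).resolve_right fun hc => h hc.symm).symm
      · intro x y hxy
        by_cases hxb : x = b
        · exact Or.inl hxb
        by_cases hxc : x = c
        · exact Or.inr (Or.inl hxc)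
        by_cases hyb : y = b
        · exact Or.inr (Or.inr (Or.inl hyb))
        by_cases hyc : y = c
        · exact Or.inr (Or.inr (Or.inr hyc))
        exfalso
        by_cases hxa : x = a
        · rw [hxa] at hxy
          by_cases hya : y = a
          · exact (hya ▸ hxy).ne rfl
          by_cases hyd : y = d
          · exact Had (hyd ▸ hxy)
          · exact Ha y hya hyb hyc hyd hxy.symm
        by_cases hxd : x = d
        · rw [hxd] at hxy
          by_cases hya : y = a
          · exact Had (hya ▸ hxy).symm
          by_cases hyd : y = d
          · exact (hyd ▸ hxy).ne rfl
          · exact Hd y hya hyb hyc hyd hxy.symm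
        · by_cases hya : y = a
          · exact Ha x hxa hxb hxc hxd (hya ▸ hxy)
          by_cases hyd : y = d
          · exact Hd x hxa hxb hxc hxd (hyd ▸ hxy)
          · exact Hww x y hxa hxb hxc hxd hya hyb hyc hyd hxy
  · -- Case A : no path on four vertices; G is a di-star (in fact a star)
    have nP4 : ∀ a b c d : V, G.Adj a b → G.Adj b c → G.Adj c d →
        a ≠ b → a ≠ c → a ≠ d → b ≠ c → b ≠ d → c ≠ d → False :=
      fun a b c d h1 h2 h3 n1 n2 n3 n4 n5 n6 =>
        hP4 ⟨a, b, c, d, h1, h2, h3, n1, n2, n3, n4, n5, n6⟩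
    have : Nontrivial V := Fintype.one_lt_card_iff_nontrivial.mp (by omega)
    obtain ⟨u0, v0, huv0⟩ := exists_pair_ne V
    have hedge : ∃ u v : V, G.Adj u v := by
      rcases reach u0 v0 with rfl | h | ⟨x, _, _, h, _⟩ | ⟨x, y, _, _, _, _, _, h, _, _⟩
      · exact absurd rfl huv0
      · exact ⟨u0, v0, h⟩
      · exact ⟨u0, x, h⟩
      · exact ⟨u0, x, h⟩
    obtain ⟨u, v, huv⟩ := hedge
    have A1 : ∀ w, w ≠ u → w ≠ v → G.Adj u w ∨ G.Adj v w := by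
      intro w hwu hwv
      rcases reach w u with rfl | h | ⟨x, hxw, hxu, hwx, hxu2⟩ |
        ⟨x, y, hxw, hxu, hyw, hyu, hxy, hwx, hxy2, hyu2⟩
      · exact absurd rfl hwu
      · exact Or.inl h.symm
      · by_cases hxv : x = v
        · exact Or.inr (hxv ▸ hwx).symm
        · exact (nP4 w x u v hwx hxu2 huv hxw.symm hwu hwv hxu hxv huv.ne).elim
      · by_cases hxv : x = v
        · exact Or.inr (hxv ▸ hwx).symm
        by_cases hyv : y = v
        · exact (nP4 w x v u hwx (hyv ▸ hxy2) huv.symm hxw.symm hwv hwu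
            (hyv ▸ hxy) hxu huv.ne').elim
        · exact (nP4 x y u v hxy2 hyu2 huv hxy hxu hxv hyu hyv huv.ne).elim
    have A2 : ∀ w, w ≠ u → w ≠ v → ¬ (G.Adj u w ∧ G.Adj v w) := by
      intro w hwu hwv ⟨h1, h2⟩
      obtain ⟨z, hzu, hzv, hzw, _⟩ := hout u v w w
      rcases A1 z hzu hzv with h | h
      · exact nP4 z u v w h.symm huv h2 hzu hzv hzw huv.ne hwu.symm hwv.symm
      · exact nP4 z v u w h.symm huv.symm h1 hzv hzu hzw huv.ne' hwv.symm hwu.symm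
    refine Or.inr (Or.inr ⟨u, v, huv.ne, huv, ?_, ?_⟩)
    · intro x hxu hxv
      exact ⟨fun h hv => A2 x hxu hxv ⟨h, hv⟩, fun h => (A1 x hxu hxv).resolve_right h⟩
    · intro x y hxy
      by_cases hxu : x = u
      · exact Or.inl hxu
      by_cases hxv : x = v
      · exact Or.inr (Or.inl hxv)
      by_cases hyu : y = u
      · exact Or.inr (Or.inr (Or.inl hyu))
      by_cases hyv : y = v
      · exact Or.inr (Or.inr (Or.inr hyv))
      exfalso
      rcases A1 x hxu hxv with h1 | h1 <;> rcases A1 y hyu hyv with h2 | h2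
      · exact nP4 v u x y huv.symm h1 hxy huv.ne' (Ne.symm hxv) (Ne.symm hyv)
          (Ne.symm hxu) (Ne.symm hyu) hxy.ne
      · exact nP4 u x y v h1 hxy h2.symm (Ne.symm hxu) (Ne.symm hyu) huv.ne hxy.ne hxv hyv
      · exact nP4 v x y u h1 hxy h2.symm (Ne.symm hxv) (Ne.symm hyv) huv.ne' hxy.ne hxu hyu
      · exact nP4 u v x y huv h1 hxy huv.ne (Ne.symm hxu) (Ne.symm hyu)
          (Ne.symm hxv) (Ne.symm hyv) hxy.ne
end

section
/- Let G be a simple graph that contains no three distinct vertices u, x, y with N(x) = N(y) = {u}, and let P be a set of vertices of G. Suppose C is the vertex set of a connected component of G − P such that the subgraph induced on C is a q-star with center c and leaves l₁, …, l_q. Then at most one of the leaves l₁, …, l_q has no neighbor in P; consequently, at most two vertices of C (the center and at most one leaf) have no neighbor in P. -/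
open SimpleGraph

/-- If `G` has no three distinct vertices `u, x, y` with `N(x) = N(y) = {u}`, and `C` is the
vertex set of a connected component of `G − P` inducing a `q`-star with center `c`, then at
most one leaf of the star has no neighbor in `P`; consequently at most two vertices of `C`
(the center and at most one leaf) have no neighbor in `P`. -/
theorem star_component_leaves {V : Type*} (G : SimpleGraph V)
    (htwin : ¬ ∃ u x y : V, x ≠ y ∧ x ≠ u ∧ y ≠ u ∧
      G.neighborSet x = {u} ∧ G.neighborSet y = {u})
    (P : Set V) (C : Set V) (c : V)
    (hCP : C ⊆ Pᶜ)
    (hclosed : ∀ x ∈ C, ∀ y : V, G.Adj x y → y ∉ P → y ∈ C)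
    (hconn : (G.induce C).Connected)
    (hc : c ∈ C)
    (hstar : ∀ x ∈ C, ∀ y ∈ C, G.Adj x y ↔ ((x = c ∧ y ≠ c) ∨ (y = c ∧ x ≠ c))) :
    ({l | l ∈ C ∧ l ≠ c ∧ ∀ p ∈ P, ¬ G.Adj l p}).Subsingleton ∧
    ∃ l : V, {x | x ∈ C ∧ ∀ p ∈ P, ¬ G.Adj x p} ⊆ {c, l} := by
  classical
  have key : ∀ l, l ∈ C → l ≠ c → (∀ p ∈ P, ¬ G.Adj l p) →
      G.neighborSet l = {c} := by
    intro l hl hlc hP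
    ext y
    simp only [mem_neighborSet, Set.mem_singleton_iff]
    constructor
    · intro hadj
      have hyP : y ∉ P := fun hy => hP y hy hadj
      have hyC : y ∈ C := hclosed l hl y hadj hyP
      rcases (hstar l hl y hyC).1 hadj with ⟨h1, _⟩ | ⟨h1, _⟩
      · exact absurd h1 hlc
      · exact h1
    · rintro rfl
      exact (hstar l hl y hc).2 (Or.inr ⟨rfl, hlc⟩)
  have hsub : ({l | l ∈ C ∧ l ≠ c ∧ ∀ p ∈ P, ¬ G.Adj l p}).Subsingleton := by
    rintro x ⟨hxC, hxc, hxP⟩ y ⟨hyC, hyc, hyP⟩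
    by_contra hxy
    exact htwin ⟨c, x, y, hxy, hxc, hyc, key x hxC hxc hxP, key y hyC hyc hyP⟩
  refine ⟨hsub, ?_⟩
  by_cases h : ∃ l, l ∈ C ∧ l ≠ c ∧ ∀ p ∈ P, ¬ G.Adj l p
  · obtain ⟨l, hlmem⟩ := h
    refine ⟨l, ?_⟩
    rintro x ⟨hxC, hxP⟩
    by_cases hxc : x = c
    · exact Or.inl hxc
    · exact Or.inr (hsub ⟨hxC, hxc, hxP⟩ hlmem)
  · refine ⟨c, ?_⟩
    rintro x ⟨hxC, hxP⟩
    by_cases hxc : x = c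
    · exact Or.inl hxc
    · exact absurd ⟨hxC, hxc, hxP⟩ (fun hmem => h ⟨x, hmem⟩)
end

section
/- Let k be a natural number and let G be a simple graph and P a set of at most 4k vertices of G such that: (i) every vertex of G has degree at most 6k + 6; (ii) G contains no three distinct vertices u, x, y with N(x) = N(y) = {u}; (iii) G − P contains no path on 4 vertices; and (iv) every connected component of G − P contains a vertex with a neighbor in P. Then G − P has at most 72k² + 72k edges. -/
open SimpleGraph

namespace PVC4

variable {V : Type*} {G : SimpleGraph V} {P : Finset V}

/-- non-`P` neighbors -/
def nd (G : SimpleGraph V) (P : Finset V) (x : V) : Set V := G.neighborSet x \ ↑P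

lemma mem_nd {x v : V} : v ∈ nd G P x ↔ G.Adj x v ∧ v ∉ P := by
  simp [nd, mem_neighborSet]

/-- triangle component structure -/
def Tri (G : SimpleGraph V) (P : Finset V) (x y w : V) : Prop :=
  G.Adj x y ∧ G.Adj x w ∧ G.Adj y w ∧
    nd G P x = {y, w} ∧ nd G P y = {x, w} ∧ nd G P w = {x, y}

/-- charging relation -/
def Rrel (G : SimpleGraph V) (P : Finset V) (e : Sym2 V) (z : V) : Prop :=
  (∃ x, e = s(z, x) ∧ nd G P z = {x})
  ∨ (∃ x y, e = s(x, y) ∧ G.neighborSet y = {x} ∧ (z = x ∨ nd G P z = {x}))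
  ∨ (∃ x y w, e = s(x, y) ∧ Tri G P x y w ∧ (z = x ∨ z = y ∨ z = w))

lemma walk_closure (S : Set V)
    (hcl : ∀ s ∈ S, ∀ t, G.Adj s t → t ∉ P → t ∈ S)
    {x y : V} (w : G.Walk x y) (hw : ∀ z ∈ w.support, z ∉ P) (hx : x ∈ S) : y ∈ S := by
  induction w with
  | nil => exact hx
  | cons h p ih =>
      rename_i a b c
      refine ih (fun z hz => hw z (by simp [Walk.support_cons, hz]))
        (hcl a hx b h (hw b (by simp [Walk.support_cons, p.start_mem_support])))

section

variable (hP4free : ∀ ⦃a b : V⦄ (p : G.Walk a b), p.IsPath →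
      (∀ x ∈ p.support, x ∉ P) → p.length + 1 ≠ 4)
    (hcomp : ∀ x : V, x ∉ P → ∃ (y : V) (w : G.Walk x y),
      (∀ z ∈ w.support, z ∉ P) ∧ ∃ p ∈ P, G.Adj y p)
    (htwin : ¬ ∃ u x y : V, x ≠ y ∧ x ≠ u ∧ y ≠ u ∧
      G.neighborSet x = {u} ∧ G.neighborSet y = {u})

include hP4free in
lemma noP4 {a b c d : V} (ha : a ∉ P) (hb : b ∉ P) (hc : c ∉ P) (hd : d ∉ P)
    (hab : G.Adj a b) (hbc : G.Adj b c) (hcd : G.Adj c d)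
    (hac : a ≠ c) (had : a ≠ d) (hbd : b ≠ d) : False := by
  refine hP4free (Walk.cons hab (Walk.cons hbc (Walk.cons hcd Walk.nil))) ?_ ?_ rfl
  · simp [Walk.isPath_def, hab.ne, hbc.ne, hcd.ne, hac, had, hbd]
  · intro x hx
    simp [Walk.support_cons] at hx
    rcases hx with rfl | rfl | rfl | rfl <;> assumption

include hP4free in
lemma trichotomy {x y : V} (hxy : G.Adj x y) (hx : x ∉ P) (hy : y ∉ P) :
    nd G P x = {y} ∨ nd G P y = {x} ∨ ∃ w, Tri G P x y w := by
  by_cases h1 : nd G P x = {y}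
  · exact Or.inl h1
  by_cases h2 : nd G P y = {x}
  · exact Or.inr (Or.inl h2)
  right; right
  have hyx : y ∈ nd G P x := mem_nd.2 ⟨hxy, hy⟩
  have hxy' : x ∈ nd G P y := mem_nd.2 ⟨hxy.symm, hx⟩
  -- get an extra neighbor of x and of y
  have hex : ∃ v ∈ nd G P x, v ≠ y := by
    by_contra h; push_neg at h
    exact h1 (Set.eq_singleton_iff_unique_mem.2 ⟨hyx, fun v hv => h v hv⟩)
  have hey : ∃ v ∈ nd G P y, v ≠ x := by
    by_contra h; push_neg at h
    exact h2 (Set.eq_singleton_iff_unique_mem.2 ⟨hxy', fun v hv => h v hv⟩)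
  obtain ⟨x', hx', hx'y⟩ := hex
  obtain ⟨y', hy', hy'x⟩ := hey
  -- any extra neighbor of x coincides with any extra neighbor of y
  have key : ∀ u ∈ nd G P x, u ≠ y → ∀ v ∈ nd G P y, v ≠ x → u = v := by
    intro u hu huy v hv hvx
    by_contra huv
    rw [mem_nd] at hu hv
    exact noP4 hP4free hu.2 hx hy hv.2 hu.1.symm hxy hv.1 huy huv (fun h => hvx h.symm)
  have hw := key x' hx' hx'y y' hy' hy'x
  subst hw
  refine ⟨x', ?_, ?_, ?_, ?_, ?_, ?_⟩
  · exact hxy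
  · exact (mem_nd.1 hx').1
  · exact (mem_nd.1 hy').1
  · -- nd x = {y, x'}
    apply Set.eq_of_subset_of_subset
    · intro v hv
      rcases eq_or_ne v y with rfl | hvy
      · exact Set.mem_insert _ _
      · have := key v hv hvy x' hy' hy'x
        simp [this]
    · intro v hv
      rcases hv with rfl | hv
      · exact hyx
      · simp at hv; subst hv; exact hx'
  · -- nd y = {x, x'}
    apply Set.eq_of_subset_of_subset
    · intro v hv
      rcases eq_or_ne v x with rfl | hvx
      · exact Set.mem_insert _ _
      · have := key x' hx' hx'y v hv hvx
        simp [← this]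
    · intro v hv
      rcases hv with rfl | hv
      · exact hxy'
      · simp at hv; subst hv; exact hy'
  · -- nd x' = {x, y}
    apply Set.eq_of_subset_of_subset
    · intro v hv
      rw [mem_nd] at hv
      by_contra hvxy
      simp only [Set.mem_insert_iff, Set.mem_singleton_iff, not_or] at hvxy
      have hx'P : x' ∉ P := (mem_nd.1 hx').2
      exact noP4 hP4free hv.2 hx'P hx hy hv.1.symm (mem_nd.1 hx').1.symm hxy
        hvxy.1 hvxy.2 hx'y
    · intro v hv
      rcases hv with rfl | hv
      · exact mem_nd.2 ⟨(mem_nd.1 hx').1.symm, hx⟩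
      · simp at hv; subst hv
        exact mem_nd.2 ⟨(mem_nd.1 hy').1.symm, hy⟩


include hcomp in
lemma tri_has_A {x y w : V} (hx : x ∉ P) (ht : Tri G P x y w) :
    ∃ z, (z = x ∨ z = y ∨ z = w) ∧ ∃ p ∈ P, G.Adj z p := by
  obtain ⟨hxy, hxw, hyw, ex, ey, ew⟩ := ht
  obtain ⟨z, walk, hsup, hA⟩ := hcomp x hx
  refine ⟨z, ?_, hA⟩
  have : z ∈ ({x, y, w} : Set V) := by
    refine walk_closure _ ?_ walk hsup (by simp)
    intro s hs t hadj htP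
    have hmem : t ∈ nd G P s := mem_nd.2 ⟨hadj, htP⟩
    rcases hs with rfl | rfl | rfl
    · rw [ex] at hmem; rcases hmem with rfl | hmem
      · simp
      · simp at hmem; simp [hmem]
    · rw [ey] at hmem; rcases hmem with rfl | hmem
      · simp
      · simp at hmem; simp [hmem]
    · rw [ew] at hmem; rcases hmem with rfl | hmem
      · simp
      · simp at hmem; simp [hmem]
  simpa using this


include hP4free hcomp in
/-- pendant substitute: if `N(y) = {x}` and `x` has no `P`-neighbor, then some
`A`-vertex `z` has `nd z = {x}`. -/
lemma pendant_substitute {x y : V} (hx : x ∉ P) (hy : y ∉ P)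
    (hNy : G.neighborSet y = {x}) (hxA : ¬ ∃ p ∈ P, G.Adj x p) :
    ∃ z, nd G P z = {x} ∧ ∃ p ∈ P, G.Adj z p := by
  have hxy : G.Adj x y := by
    have : x ∈ G.neighborSet y := by rw [hNy]; rfl
    exact this.symm
  -- every non-P neighbor v of x has nd v ⊆ {x}
  have hleaf : ∀ v ∈ nd G P x, nd G P v ⊆ {x} := by
    intro v hv u hu
    rw [mem_nd] at hv hu
    by_contra hux
    simp only [Set.mem_singleton_iff] at hux
    rcases ne_or_eq v y with hvy | rfl
    · -- path u v x y
      have huy : u ≠ y := by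
        rintro rfl
        have hvmem : v ∈ G.neighborSet u := hu.1.symm
        rw [hNy] at hvmem; simp at hvmem
        exact hv.1.ne' hvmem
      exact noP4 hP4free hu.2 hv.2 hx hy hu.1.symm hv.1.symm hxy hux huy hvy
    · -- v = y: nd y ⊆ N(y) = {x}
      have humem : u ∈ G.neighborSet v := hu.1
      rw [hNy] at humem; simp at humem; exact hux humem
  obtain ⟨z, walk, hsup, hA⟩ := hcomp x hx
  have hzS : z ∈ insert x (nd G P x) := by
    refine walk_closure _ ?_ walk hsup (by simp)
    intro s hs t hadj htP
    rcases hs with rfl | hs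
    · exact Set.mem_insert_of_mem _ (mem_nd.2 ⟨hadj, htP⟩)
    · have := hleaf s hs (mem_nd.2 ⟨hadj, htP⟩)
      simp at this; simp [this]
  rcases hzS with rfl | hz
  · exact absurd hA hxA
  · refine ⟨z, ?_, hA⟩
    apply Set.eq_of_subset_of_subset (hleaf z hz)
    intro v hv; simp at hv; subst hv
    exact mem_nd.2 ⟨(mem_nd.1 hz).1.symm, hx⟩


include htwin in
lemma leaf_unique {u a b : V} (ha : G.neighborSet a = {u}) (hb : G.neighborSet b = {u}) :
    a = b := by
  by_contra hab
  have hau : G.Adj a u := by rw [← mem_neighborSet, ha]; rfl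
  have hbu : G.Adj b u := by rw [← mem_neighborSet, hb]; rfl
  exact htwin ⟨u, a, b, hab, hau.ne, hbu.ne, ha, hb⟩

include htwin in
lemma fiber_bound (z : V) : ∃ t : Finset (Sym2 V), t.card ≤ 3 ∧
    ∀ x y : V, x ∉ P → y ∉ P → Rrel G P s(x, y) z → s(x, y) ∈ t := by
  classical
  -- helper: membership facts
  by_cases h1 : ∃ x0, nd G P z = {x0}
  · obtain ⟨x0, hx0⟩ := h1
    by_cases h2 : ∃ y0, G.neighborSet y0 = {x0}
    · obtain ⟨y0, hy0⟩ := h2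
      refine ⟨{s(z, x0), s(x0, y0)}, ?_, ?_⟩
      · exact (Finset.card_insert_le _ _).trans (by simp)
      · intro x y hx hy hR
        rcases hR with ⟨x', heq, hnd⟩ | ⟨a, b, heq, hNb, hz⟩ | ⟨a, b, w, heq, ht, hz⟩
        · rw [hx0] at hnd
          have : x0 = x' := Set.singleton_eq_singleton_iff.1 hnd
          subst this
          rw [heq]; simp
        · rcases hz with rfl | hnd
          · -- z = a : e = s(z,b), N(b) = {z}; b ∉ P so b ∈ nd z = {x0}
            have hbP : b ∉ P := by
              have : b ∈ s(x, y) := by rw [heq]; simp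
              rcases Sym2.mem_iff.1 this with rfl | rfl <;> assumption
            have hbz : G.Adj z b := by
              have : z ∈ G.neighborSet b := by rw [hNb]; rfl
              exact this.symm
            have : b ∈ nd G P z := mem_nd.2 ⟨hbz, hbP⟩
            rw [hx0] at this; simp at this; subst this
            rw [heq]; simp
          · -- nd z = {a}: a = x0, b = y0
            rw [hx0] at hnd
            have : x0 = a := Set.singleton_eq_singleton_iff.1 hnd
            subst this
            have : b = y0 := leaf_unique htwin hNb hy0
            subst this
            rw [heq]; simp
        · -- triangle impossible: nd z is a doubleton
          exfalso
          obtain ⟨hab, haw, hbw, ea, eb, ew⟩ := ht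
          rcases hz with rfl | rfl | rfl
          · rw [hx0] at ea
            have h1 : b ∈ ({x0} : Set V) := by rw [ea]; simp
            have h2 : w ∈ ({x0} : Set V) := by rw [ea]; simp
            simp at h1 h2; exact hbw.ne (h1.trans h2.symm)
          · rw [hx0] at eb
            have h1 : a ∈ ({x0} : Set V) := by rw [eb]; simp
            have h2 : w ∈ ({x0} : Set V) := by rw [eb]; simp
            simp at h1 h2; exact haw.ne (h1.trans h2.symm)
          · rw [hx0] at ew
            have h1 : a ∈ ({x0} : Set V) := by rw [ew]; simp
            have h2 : b ∈ ({x0} : Set V) := by rw [ew]; simp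
            simp at h1 h2; exact hab.ne (h1.trans h2.symm)
    · -- no vertex with N = {x0}: only candidate s(z, x0)
      refine ⟨{s(z, x0)}, by simp, ?_⟩
      intro x y hx hy hR
      rcases hR with ⟨x', heq, hnd⟩ | ⟨a, b, heq, hNb, hz⟩ | ⟨a, b, w, heq, ht, hz⟩
      · rw [hx0] at hnd
        have : x0 = x' := Set.singleton_eq_singleton_iff.1 hnd
        subst this; rw [heq]; simp
      · rcases hz with rfl | hnd
        · have hbP : b ∉ P := by
            have : b ∈ s(x, y) := by rw [heq]; simp
            rcases Sym2.mem_iff.1 this with rfl | rfl <;> assumption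
          have hbz : G.Adj z b := by
            have : z ∈ G.neighborSet b := by rw [hNb]; rfl
            exact this.symm
          have : b ∈ nd G P z := mem_nd.2 ⟨hbz, hbP⟩
          rw [hx0] at this; simp at this; subst this
          rw [heq]; simp
        · exfalso
          rw [hx0] at hnd
          have : x0 = a := Set.singleton_eq_singleton_iff.1 hnd
          exact h2 ⟨b, this ▸ hNb⟩
      · exfalso
        obtain ⟨hab, haw, hbw, ea, eb, ew⟩ := ht
        rcases hz with rfl | rfl | rfl
        · rw [hx0] at ea
          have h1 : b ∈ ({x0} : Set V) := by rw [ea]; simp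
          have h2 : w ∈ ({x0} : Set V) := by rw [ea]; simp
          simp at h1 h2; exact hbw.ne (h1.trans h2.symm)
        · rw [hx0] at eb
          have h1 : a ∈ ({x0} : Set V) := by rw [eb]; simp
          have h2 : w ∈ ({x0} : Set V) := by rw [eb]; simp
          simp at h1 h2; exact haw.ne (h1.trans h2.symm)
        · rw [hx0] at ew
          have h1 : a ∈ ({x0} : Set V) := by rw [ew]; simp
          have h2 : b ∈ ({x0} : Set V) := by rw [ew]; simp
          simp at h1 h2; exact hab.ne (h1.trans h2.symm)
  · by_cases h2 : ∃ a b, a ≠ b ∧ nd G P z = {a, b}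
    · obtain ⟨a0, b0, hab0, hnd0⟩ := h2
      refine ⟨{s(z, a0), s(z, b0), s(a0, b0)}, ?_, ?_⟩
      · exact (Finset.card_insert_le _ _).trans (Nat.succ_le_succ
          ((Finset.card_insert_le _ _).trans (by simp)))
      · intro x y hx hy hR
        rcases hR with ⟨x', heq, hnd⟩ | ⟨a, b, heq, hNb, hz⟩ | ⟨a, b, w, heq, ht, hz⟩
        · exact absurd ⟨x', hnd⟩ h1
        · rcases hz with rfl | hnd
          · have hbP : b ∉ P := by
              have : b ∈ s(x, y) := by rw [heq]; simp
              rcases Sym2.mem_iff.1 this with rfl | rfl <;> assumption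
            have hbz : G.Adj z b := by
              have : z ∈ G.neighborSet b := by rw [hNb]; rfl
              exact this.symm
            have hb : b ∈ nd G P z := mem_nd.2 ⟨hbz, hbP⟩
            rw [hnd0] at hb
            rcases hb with rfl | hb
            · rw [heq]; simp
            · simp at hb; subst hb; rw [heq]; simp
          · exact absurd ⟨a, hnd⟩ h1
        · obtain ⟨hab, haw, hbw, ea, eb, ew⟩ := ht
          rcases hz with rfl | rfl | rfl
          · rw [hnd0] at ea
            rcases Set.pair_eq_pair_iff.1 ea.symm with ⟨rfl, rfl⟩ | ⟨rfl, rfl⟩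
            · rw [heq]; simp
            · rw [heq]; simp
          · rw [hnd0] at eb
            rcases Set.pair_eq_pair_iff.1 eb.symm with ⟨rfl, rfl⟩ | ⟨rfl, rfl⟩
            · rw [heq, Sym2.eq_swap]; simp
            · rw [heq, Sym2.eq_swap]; simp
          · rw [hnd0] at ew
            rcases Set.pair_eq_pair_iff.1 ew.symm with ⟨rfl, rfl⟩ | ⟨rfl, rfl⟩
            · rw [heq]; simp
            · rw [heq, Sym2.eq_swap]; simp
    · -- nd z is neither a singleton nor a doubleton
      by_cases h3 : ∃ y0, G.neighborSet y0 = {z}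
      · obtain ⟨y0, hy0⟩ := h3
        refine ⟨{s(z, y0)}, by simp, ?_⟩
        intro x y hx hy hR
        rcases hR with ⟨x', heq, hnd⟩ | ⟨a, b, heq, hNb, hz⟩ | ⟨a, b, w, heq, ht, hz⟩
        · exact absurd ⟨x', hnd⟩ h1
        · rcases hz with rfl | hnd
          · have : b = y0 := leaf_unique htwin hNb hy0
            subst this; rw [heq]; simp
          · exact absurd ⟨a, hnd⟩ h1
        · exfalso
          obtain ⟨hab, haw, hbw, ea, eb, ew⟩ := ht
          rcases hz with rfl | rfl | rfl
          · exact h2 ⟨b, w, hbw.ne, ea⟩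
          · exact h2 ⟨a, w, haw.ne, eb⟩
          · exact h2 ⟨a, b, hab.ne, ew⟩
      · refine ⟨∅, by simp, ?_⟩
        intro x y hx hy hR
        exfalso
        rcases hR with ⟨x', heq, hnd⟩ | ⟨a, b, heq, hNb, hz⟩ | ⟨a, b, w, heq, ht, hz⟩
        · exact absurd ⟨x', hnd⟩ h1
        · rcases hz with rfl | hnd
          · exact h3 ⟨b, hNb⟩
          · exact absurd ⟨a, hnd⟩ h1
        · obtain ⟨hab, haw, hbw, ea, eb, ew⟩ := ht
          rcases hz with rfl | rfl | rfl
          · exact h2 ⟨b, w, hbw.ne, ea⟩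
          · exact h2 ⟨a, w, haw.ne, eb⟩
          · exact h2 ⟨a, b, hab.ne, ew⟩

include hP4free hcomp in
lemma charge_pendant {x y : V} (hxy : G.Adj x y) (hx : x ∉ P) (hy : y ∉ P)
    (hnd : nd G P y = {x}) :
    ∃ z, (∃ p ∈ P, G.Adj z p) ∧ Rrel G P s(x, y) z := by
  by_cases hyA : ∃ p ∈ P, G.Adj y p
  · exact ⟨y, hyA, Or.inl ⟨x, Sym2.eq_swap, hnd⟩⟩
  · have hNy : G.neighborSet y = {x} := by
      apply Set.eq_of_subset_of_subset
      · intro v hv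
        have hvP : v ∉ P := fun hvP => hyA ⟨v, hvP, hv⟩
        have : v ∈ nd G P y := mem_nd.2 ⟨hv, hvP⟩
        rw [hnd] at this; exact this
      · intro v hv; simp at hv; subst hv; exact hxy.symm
    by_cases hxA : ∃ p ∈ P, G.Adj x p
    · exact ⟨x, hxA, Or.inr (Or.inl ⟨x, y, rfl, hNy, Or.inl rfl⟩)⟩
    · obtain ⟨z, hz, hzA⟩ := pendant_substitute hP4free hcomp hx hy hNy hxA
      exact ⟨z, hzA, Or.inr (Or.inl ⟨x, y, rfl, hNy, Or.inr hz⟩)⟩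

include hP4free hcomp in
lemma exists_charge {x y : V} (hxy : G.Adj x y) (hx : x ∉ P) (hy : y ∉ P) :
    ∃ z, (∃ p ∈ P, G.Adj z p) ∧ Rrel G P s(x, y) z := by
  rcases trichotomy hP4free hxy hx hy with h | h | ⟨w, hw⟩
  · obtain ⟨z, hzA, hR⟩ := charge_pendant hP4free hcomp hxy.symm hy hx h
    refine ⟨z, hzA, ?_⟩
    rwa [Sym2.eq_swap] at hR
  · exact charge_pendant hP4free hcomp hxy hx hy h
  · obtain ⟨z, hz, hzA⟩ := tri_has_A hcomp hx hw
    exact ⟨z, hzA, Or.inr (Or.inr ⟨x, y, w, rfl, hw, hz⟩)⟩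

end

end PVC4

/-- In the 4-PVC kernel setting: if `|P| ≤ 4k`, every degree is at most `6k + 6`, `G` has no
degree-one false twins, `G − P` has no path on 4 vertices, and every connected component of
`G − P` has a vertex with a neighbor in `P`, then `G − P` has at most `72k² + 72k` edges. -/
theorem edges_outside_packing_4pvc {V : Type*} [Fintype V] (G : SimpleGraph V) (k : ℕ)
    (P : Finset V) (hP : P.card ≤ 4 * k)
    (hdeg : ∀ x : V, (G.neighborSet x).ncard ≤ 6 * k + 6)
    (htwin : ¬ ∃ u x y : V, x ≠ y ∧ x ≠ u ∧ y ≠ u ∧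
      G.neighborSet x = {u} ∧ G.neighborSet y = {u})
    (hP4free : ∀ ⦃a b : V⦄ (p : G.Walk a b), p.IsPath →
      (∀ x ∈ p.support, x ∉ P) → p.length + 1 ≠ 4)
    (hcomp : ∀ x : V, x ∉ P → ∃ (y : V) (w : G.Walk x y),
      (∀ z ∈ w.support, z ∉ P) ∧ ∃ p ∈ P, G.Adj y p) :
    ({e ∈ G.edgeSet | ∀ x ∈ e, x ∉ (P : Set V)}).ncard ≤ 72 * k ^ 2 + 72 * k := by
  classical
  set S : Set (Sym2 V) := {e ∈ G.edgeSet | ∀ x ∈ e, x ∉ (P : Set V)} with hS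
  rw [Set.ncard_eq_toFinset_card' S]
  set E' : Finset (Sym2 V) := S.toFinset with hE'
  set A : Finset V := Finset.univ.filter (fun z => ∃ p ∈ P, G.Adj z p) with hA
  have hmemE' : ∀ x y : V, s(x, y) ∈ E' ↔ G.Adj x y ∧ x ∉ P ∧ y ∉ P := by
    intro x y
    rw [hE', Set.mem_toFinset, hS]
    constructor
    · rintro ⟨hadj, hP'⟩
      exact ⟨G.mem_edgeSet.1 hadj, by simpa using hP' x (by simp),
        by simpa using hP' y (by simp)⟩
    · rintro ⟨hadj, hx, hy⟩
      refine ⟨G.mem_edgeSet.2 hadj, ?_⟩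
      intro v hv
      rcases Sym2.mem_iff.1 hv with rfl | rfl <;> simpa
  have hex : ∀ e ∈ E', ∃ z, (∃ p ∈ P, G.Adj z p) ∧ PVC4.Rrel G P e z := by
    intro e he
    induction e using Sym2.ind with
    | _ x y =>
      obtain ⟨hadj, hx, hy⟩ := (hmemE' x y).1 he
      exact PVC4.exists_charge hP4free hcomp hadj hx hy
  set f : Sym2 V → V := fun e =>
    if h : ∃ z, (∃ p ∈ P, G.Adj z p) ∧ PVC4.Rrel G P e z then h.choose
    else (Quot.out e).1 with hf
  have hcard : E'.card ≤ 3 * A.card := by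
    apply Finset.card_le_mul_card_image_of_maps_to (f := f)
    · intro e he
      rw [hA, Finset.mem_filter]
      refine ⟨Finset.mem_univ _, ?_⟩
      have h := hex e he
      rw [hf]; simp only [dif_pos h]
      exact h.choose_spec.1
    · intro z hz
      obtain ⟨t, ht3, hmem⟩ := PVC4.fiber_bound (G := G) (P := P) htwin z
      refine le_trans (Finset.card_le_card ?_) ht3
      intro e he
      rw [Finset.mem_filter] at he
      obtain ⟨heE, hfe⟩ := he
      induction e using Sym2.ind with
      | _ x y =>
        obtain ⟨hadj, hx, hy⟩ := (hmemE' x y).1 heE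
        have h := hex s(x, y) heE
        have hspec := h.choose_spec.2
        rw [hf] at hfe; simp only [dif_pos h] at hfe
        rw [hfe] at hspec
        exact hmem x y hx hy hspec
  have hAcard : A.card ≤ P.card * (6 * k + 6) := by
    have hsub : A ⊆ P.biUnion (fun p => G.neighborFinset p) := by
      intro z hz
      rw [hA, Finset.mem_filter] at hz
      obtain ⟨-, p, hp, hadj⟩ := hz
      exact Finset.mem_biUnion.2 ⟨p, hp, by simpa using hadj.symm⟩
    calc A.card ≤ (P.biUnion fun p => G.neighborFinset p).card := Finset.card_le_card hsub
      _ ≤ ∑ p ∈ P, (G.neighborFinset p).card := Finset.card_biUnion_le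
      _ ≤ ∑ _p ∈ P, (6 * k + 6) := by
          refine Finset.sum_le_sum (fun p _ => ?_)
          have hcoe : (G.neighborFinset p).card = (G.neighborSet p).ncard := by
            rw [G.neighborFinset_def, Set.ncard_eq_toFinset_card']
          rw [hcoe]; exact hdeg p
      _ = P.card * (6 * k + 6) := by rw [Finset.sum_const, smul_eq_mul]
  calc E'.card ≤ 3 * A.card := hcard
    _ ≤ 3 * (P.card * (6 * k + 6)) := by omega
    _ ≤ 3 * ((4 * k) * (6 * k + 6)) := by
        have := Nat.mul_le_mul_right (6 * k + 6) hP
        omega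
    _ = 72 * k ^ 2 + 72 * k := by ring
end

section
/- Let k be a natural number and let G be a simple graph and P a set of at most 4k vertices of G such that: (i) every vertex of G has degree at most 6k + 6; (ii) G contains no three distinct vertices u, x, y with N(x) = N(y) = {u}; (iii) G − P contains no path on 4 vertices; and (iv) every connected component of G − P contains a vertex with a neighbor in P. Then G has at most 96k² + 96k edges. -/
/-! Let `A` be the set of vertices outside `P` with a neighbour in `P`. Both `|A|` and the number
of edges meeting `P` are at most `∑_{p ∈ P} deg p ≤ 4k(6k + 6)`. Since `G − P` has no path on four
vertices, every vertex outside `P` lies within distance two of `A` in `G − P`, and each edge of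
`G − P` can be charged to a vertex of `A` near it so that no vertex of `A` is charged more than
three times. Hence `G` has at most `4 · 4k(6k + 6) = 96k² + 96k` edges. -/

open Finset

namespace SimpleGraph

variable {V : Type*} (G : SimpleGraph V) (P : Finset V)

def NoPath4Outside : Prop :=
  ∀ ⦃a b c d : V⦄, a ∉ P → b ∉ P → c ∉ P → d ∉ P →
    G.Adj a b → G.Adj b c → G.Adj c d → a ≠ c → a ≠ d → b ≠ d → False

section Defs

variable [Fintype V] [DecidableEq V] [DecidableRel G.Adj]

def outerNbhd : Finset V := {v | v ∉ P ∧ ∃ p ∈ P, G.Adj p v}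

def innerNbrs (x : V) : Finset V := {v | G.Adj x v ∧ v ∉ P}

/-- An edge inside the outer neighbourhood is charged to the endpoint with fewer neighbours outside
`P`, so that the centre of a star is charged only for pendant leaves outside the outer
neighbourhood, of which the false-twin condition allows one. -/
def Charges (e : Sym2 V) (a : V) : Prop :=
  a ∈ G.outerNbhd P ∧
    ((∃ b ∈ G.innerNbrs P a, e = s(a, b) ∧
        (b ∈ G.outerNbhd P → #(G.innerNbrs P a) ≤ #(G.innerNbrs P b))) ∨
      ∃ u ∈ G.innerNbrs P a, ∃ w ∈ G.innerNbrs P u, e = s(u, w) ∧ w ∉ G.outerNbhd P)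

end Defs

variable {G P}

theorem NoPath4Outside.of_walk
    (h : ∀ ⦃a b : V⦄ (p : G.Walk a b), p.IsPath → (∀ x ∈ p.support, x ∉ P) →
      p.length + 1 ≠ 4) :
    G.NoPath4Outside P := by
  intro a b c d ha hb hc hd hab hbc hcd hac had hbd
  refine h (.cons hab (.cons hbc (.cons hcd .nil))) ?_ ?_ rfl
  · simp [Walk.isPath_def, hab.ne, hbc.ne, hcd.ne, hac, had, hbd]
  · simp [ha, hb, hc, hd]

theorem NoPath4Outside.exists_near_of_isPath (h : G.NoPath4Outside P) :
    ∀ {x y : V} (p : G.Walk x y), p.IsPath → (∀ z ∈ p.support, z ∉ P) →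
      x = y ∨ G.Adj x y ∨ ∃ z ∉ P, G.Adj x z ∧ G.Adj z y
  | _, _, .nil, _, _ => .inl rfl
  | _, _, .cons hxy .nil, _, _ => .inr (.inl hxy)
  | _, _, .cons hxz (.cons hzy .nil), _, hP => .inr (.inr ⟨_, hP _ (by simp), hxz, hzy⟩)
  | _, _, .cons hab (.cons hbc (.cons hcd r)), hp, hP => by
    have hnd := hp.support_nodup
    simp only [Walk.support_cons, List.nodup_cons, List.mem_cons] at hnd
    exact (h (hP _ (by simp)) (hP _ (by simp)) (hP _ (by simp)) (hP _ (by simp)) hab hbc hcd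
      (fun e => hnd.1 (.inr (.inl e))) (fun e => hnd.1 (.inr (.inr (e ▸ r.start_mem_support))))
      (fun e => hnd.2.1 (.inr (e ▸ r.start_mem_support)))).elim

theorem subsingleton_setOf_neighborSet_eq_singleton
    (htwin : ¬ ∃ u x y : V, x ≠ y ∧ x ≠ u ∧ y ≠ u ∧
      G.neighborSet x = {u} ∧ G.neighborSet y = {u}) (u : V) :
    {x | G.neighborSet x = {u}}.Subsingleton := by
  intro x hx y hy
  by_contra hxy
  have hxu : G.Adj x u := (G.mem_neighborSet x u).mp (hx ▸ rfl)
  have hyu : G.Adj y u := (G.mem_neighborSet y u).mp (hy ▸ rfl)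
  exact htwin ⟨u, x, y, hxy, hxu.ne, hyu.ne, hx, hy⟩

theorem card_le_one_of_forall_pendant (htwin : ∀ u, {x | G.neighborSet x = {u}}.Subsingleton)
    {t : Finset (Sym2 V)} {x : V} (ht : ∀ e ∈ t, ∃ w, e = s(x, w) ∧ G.neighborSet w = {x}) :
    #t ≤ 1 := by
  refine card_le_one.mpr fun e he e' he' => ?_
  obtain ⟨w, rfl, hw⟩ := ht e he
  obtain ⟨w', rfl, hw'⟩ := ht e' he'
  rw [htwin x hw hw']

section Finite

variable [Fintype V] [DecidableEq V] [DecidableRel G.Adj]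

@[simp] theorem mem_outerNbhd {v : V} : v ∈ G.outerNbhd P ↔ v ∉ P ∧ ∃ p ∈ P, G.Adj p v := by
  simp [outerNbhd]

@[simp] theorem mem_innerNbrs {x v : V} : v ∈ G.innerNbrs P x ↔ G.Adj x v ∧ v ∉ P := by
  simp [innerNbrs]

theorem neighborSet_eq_innerNbrs {b : V} (hb : b ∉ P) (hbA : b ∉ G.outerNbhd P) :
    G.neighborSet b = G.innerNbrs P b := by
  ext z
  simp only [mem_neighborSet, mem_coe, mem_innerNbrs, iff_self_and]
  exact fun hbz hz => hbA (mem_outerNbhd.mpr ⟨hb, z, hz, hbz.symm⟩)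

theorem NoPath4Outside.eq_or_eq_of_mem_innerNbrs (h : G.NoPath4Outside P) {a u x w : V}
    (ha : a ∉ P) (hu : u ∈ G.innerNbrs P a) (hx : x ∈ G.innerNbrs P a) (hux : u ≠ x)
    (hw : w ∈ G.innerNbrs P u) : w = a ∨ w = x := by
  rw [mem_innerNbrs] at hu hx hw
  by_contra! hne
  exact h hw.2 hu.2 ha hx.2 hw.1.symm hu.1.symm hx.1 hne.1 hne.2 hux

theorem NoPath4Outside.innerNbrs_eq_singleton_of_two_lt_card (h : G.NoPath4Outside P) {a u : V}
    (ha : a ∉ P) (hM : 2 < #(G.innerNbrs P a)) (hu : u ∈ G.innerNbrs P a) :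
    G.innerNbrs P u = {a} := by
  obtain ⟨x, hx, y, hy, hxy⟩ := one_lt_card.mp (by rw [card_erase_of_mem hu]; omega :
    1 < #((G.innerNbrs P a).erase u))
  rw [mem_erase] at hx hy
  refine eq_singleton_iff_unique_mem.mpr ⟨?_, fun w hw => ?_⟩
  · exact mem_innerNbrs.mpr ⟨(mem_innerNbrs.mp hu).1.symm, ha⟩
  · rcases h.eq_or_eq_of_mem_innerNbrs ha hu hx.2 hx.1.symm hw with hwa | rfl
    · exact hwa
    rcases h.eq_or_eq_of_mem_innerNbrs ha hu hy.2 hy.1.symm hw with hwa | rfl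
    · exact hwa
    · exact absurd rfl hxy

theorem NoPath4Outside.exists_mem_outerNbhd_near (h : G.NoPath4Outside P)
    (hcomp : ∀ x : V, x ∉ P → ∃ (y : V) (w : G.Walk x y),
      (∀ z ∈ w.support, z ∉ P) ∧ ∃ p ∈ P, G.Adj y p) {x : V} (hx : x ∉ P) :
    ∃ a ∈ G.outerNbhd P, x = a ∨ G.Adj x a ∨ ∃ z ∉ P, G.Adj x z ∧ G.Adj z a := by
  obtain ⟨y, w, hw, p, hp, hyp⟩ := hcomp x hx
  refine ⟨y, mem_outerNbhd.mpr ⟨hw y w.end_mem_support, p, hp, hyp.symm⟩, ?_⟩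
  exact h.exists_near_of_isPath w.toPath w.toPath.2
    fun z hz => hw z (w.support_toPath_subset_support hz)

theorem exists_charges_of_mem_outerNbhd {u v : V} (hu : u ∈ G.outerNbhd P)
    (hv : v ∈ G.innerNbrs P u) : ∃ a, G.Charges P s(u, v) a := by
  by_cases hvu : v ∈ G.outerNbhd P ∧ #(G.innerNbrs P v) < #(G.innerNbrs P u)
  · have hu' : u ∈ G.innerNbrs P v :=
      mem_innerNbrs.mpr ⟨(mem_innerNbrs.mp hv).1.symm, (mem_outerNbhd.mp hu).1⟩
    exact ⟨v, hvu.1, .inl ⟨u, hu', Sym2.eq_swap, fun _ => hvu.2.le⟩⟩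
  · exact ⟨u, hu, .inl ⟨v, hv, rfl, fun hvA => not_lt.mp fun hlt => hvu ⟨hvA, hlt⟩⟩⟩

theorem NoPath4Outside.exists_charges (h : G.NoPath4Outside P)
    (hcomp : ∀ x : V, x ∉ P → ∃ (y : V) (w : G.Walk x y),
      (∀ z ∈ w.support, z ∉ P) ∧ ∃ p ∈ P, G.Adj y p)
    {u v : V} (huv : G.Adj u v) (hu : u ∉ P) (hv : v ∉ P) : ∃ a, G.Charges P s(u, v) a := by
  by_cases huA : u ∈ G.outerNbhd P
  · exact exists_charges_of_mem_outerNbhd huA (mem_innerNbrs.mpr ⟨huv, hv⟩)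
  by_cases hvA : v ∈ G.outerNbhd P
  · rw [Sym2.eq_swap]
    exact exists_charges_of_mem_outerNbhd hvA (mem_innerNbrs.mpr ⟨huv.symm, hu⟩)
  obtain ⟨a, haA, rfl | hua | ⟨z, hz, huz, hza⟩⟩ := h.exists_mem_outerNbhd_near hcomp hu
  · exact absurd haA huA
  · exact ⟨a, haA, .inr ⟨u, mem_innerNbrs.mpr ⟨hua.symm, hu⟩, v,
      mem_innerNbrs.mpr ⟨huv, hv⟩, rfl, hvA⟩⟩
  obtain rfl | hzv := eq_or_ne z v
  · exact ⟨a, haA, .inr ⟨z, mem_innerNbrs.mpr ⟨hza.symm, hv⟩, u,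
      mem_innerNbrs.mpr ⟨huv.symm, hu⟩, Sym2.eq_swap, huA⟩⟩
  · exact (h hv hu hz (mem_outerNbhd.mp haA).1 huv.symm huz hza hzv.symm
      (fun e => hvA (e ▸ haA)) (fun e => huA (e ▸ haA))).elim

variable {e : Sym2 V} {a : V}

theorem Charges.innerNbrs_nonempty (hc : G.Charges P e a) : (G.innerNbrs P a).Nonempty := by
  obtain ⟨-, ⟨b, hb, -⟩ | ⟨u, hu, -⟩⟩ := hc
  exacts [⟨b, hb⟩, ⟨u, hu⟩]

theorem Charges.eq_or_pendant_of_innerNbrs_eq_singleton (h : G.NoPath4Outside P)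
    (hc : G.Charges P e a) {u : V} (hM : G.innerNbrs P a = {u}) :
    e = s(a, u) ∨ ∃ w, e = s(u, w) ∧ G.neighborSet w = {u} := by
  obtain ⟨haA, ⟨b, hb, rfl, -⟩ | ⟨u', hu', w, hw, rfl, hwA⟩⟩ := hc
  · rw [hM, mem_singleton] at hb
    exact .inl (hb ▸ rfl)
  rw [hM, mem_singleton] at hu'
  subst hu'
  have hau := mem_innerNbrs.mp (hM ▸ mem_singleton_self u')
  have huw := mem_innerNbrs.mp hw
  have haP := (mem_outerNbhd.mp haA).1
  refine .inr ⟨w, rfl, ?_⟩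
  rw [neighborSet_eq_innerNbrs huw.2 hwA, ← coe_singleton, coe_inj]
  refine eq_singleton_iff_unique_mem.mpr ⟨mem_innerNbrs.mpr ⟨huw.1.symm, hau.2⟩, fun z hz => ?_⟩
  rw [mem_innerNbrs] at hz
  by_contra hzu
  have hza : z ≠ a := by
    rintro rfl
    have : w ∈ G.innerNbrs P z := mem_innerNbrs.mpr ⟨hz.1.symm, huw.2⟩
    rw [hM, mem_singleton] at this
    exact huw.1.ne' this
  exact h hz.2 huw.2 hau.2 haP hz.1.symm huw.1.symm hau.1.symm hzu hza
    (fun e => hwA (e ▸ haA))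

theorem Charges.mem_of_innerNbrs_eq_pair (h : G.NoPath4Outside P) (hc : G.Charges P e a)
    {u v : V} (huv : u ≠ v) (hM : G.innerNbrs P a = {u, v}) :
    e ∈ ({s(a, u), s(a, v), s(u, v)} : Finset (Sym2 V)) := by
  have hu : u ∈ G.innerNbrs P a := by simp [hM]
  have hv : v ∈ G.innerNbrs P a := by simp [hM]
  obtain ⟨haA, ⟨b, hb, rfl, -⟩ | ⟨u', hu', w, hw, rfl, hwA⟩⟩ := hc
  · rw [hM] at hb
    simp only [mem_insert, mem_singleton] at hb ⊢
    rcases hb with rfl | rfl <;> simp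
  have haP := (mem_outerNbhd.mp haA).1
  have hwa : w ≠ a := fun e => hwA (e ▸ haA)
  rw [hM, mem_insert, mem_singleton] at hu'
  rcases hu' with rfl | rfl
  · rcases h.eq_or_eq_of_mem_innerNbrs haP hu hv huv hw with hw' | rfl
    · exact absurd hw' hwa
    · simp
  · rcases h.eq_or_eq_of_mem_innerNbrs haP hv hu huv.symm hw with hw' | rfl
    · exact absurd hw' hwa
    · simp [Sym2.eq_swap]

theorem Charges.pendant_of_two_lt_card (h : G.NoPath4Outside P) (hc : G.Charges P e a)
    (hM : 2 < #(G.innerNbrs P a)) : ∃ b, e = s(a, b) ∧ G.neighborSet b = {a} := by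
  obtain ⟨haA, ⟨b, hb, rfl, hcond⟩ | ⟨u, hu, w, hw, rfl, hwA⟩⟩ := hc
  · have haP := (mem_outerNbhd.mp haA).1
    have hMb := h.innerNbrs_eq_singleton_of_two_lt_card haP hM hb
    have hbA : b ∉ G.outerNbhd P := fun hbA => by
      have := hcond hbA
      rw [hMb, card_singleton] at this
      omega
    refine ⟨b, rfl, ?_⟩
    rw [neighborSet_eq_innerNbrs (mem_innerNbrs.mp hb).2 hbA, hMb, coe_singleton]
  · rw [h.innerNbrs_eq_singleton_of_two_lt_card (mem_outerNbhd.mp haA).1 hM hu,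
      mem_singleton] at hw
    exact absurd (hw ▸ haA) hwA

theorem NoPath4Outside.card_filter_charges_le_three (h : G.NoPath4Outside P)
    (htwin : ∀ u, {x | G.neighborSet x = {u}}.Subsingleton) (s : Finset (Sym2 V)) (a : V)
    [DecidablePred (G.Charges P · a)] : #{e ∈ s | G.Charges P e a} ≤ 3 := by
  set t := {e ∈ s | G.Charges P e a}
  have hc : ∀ e ∈ t, G.Charges P e a := fun e he => (mem_filter.mp he).2
  obtain hM | hM | hM | hM : #(G.innerNbrs P a) = 0 ∨ #(G.innerNbrs P a) = 1 ∨
      #(G.innerNbrs P a) = 2 ∨ 2 < #(G.innerNbrs P a) := by omega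
  · have : t = ∅ := eq_empty_of_forall_notMem fun e he => by
      simpa [card_eq_zero.mp hM] using (hc e he).innerNbrs_nonempty
    simp [this]
  · obtain ⟨u, hu⟩ := card_eq_one.mp hM
    have hpendant := card_le_one_of_forall_pendant htwin (t := t.erase s(a, u)) fun e he =>
      ((hc e (mem_of_mem_erase he)).eq_or_pendant_of_innerNbrs_eq_singleton h hu).resolve_left
        (ne_of_mem_erase he)
    have := pred_card_le_card_erase (s := t) (a := s(a, u))
    omega
  · obtain ⟨u, v, huv, hM⟩ := card_eq_two.mp hM
    exact (card_le_card fun e he => (hc e he).mem_of_innerNbrs_eq_pair h huv hM).trans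
      card_le_three
  · exact (card_le_one_of_forall_pendant htwin fun e he =>
      (hc e he).pendant_of_two_lt_card h hM).trans (by norm_num)

theorem NoPath4Outside.card_edges_outside_le (h : G.NoPath4Outside P)
    (htwin : ∀ u, {x | G.neighborSet x = {u}}.Subsingleton)
    (hcomp : ∀ x : V, x ∉ P → ∃ (y : V) (w : G.Walk x y),
      (∀ z ∈ w.support, z ∉ P) ∧ ∃ p ∈ P, G.Adj y p) :
    #{e ∈ G.edgeFinset | e ∈ Pᶜ.sym2} ≤ 3 * #(G.outerNbhd P) := by
  classical
  have := card_mul_le_card_mul (G.Charges P) (m := 1) (n := 3)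
    (s := {e ∈ G.edgeFinset | e ∈ Pᶜ.sym2}) (t := G.outerNbhd P) ?_
    (fun a _ => h.card_filter_charges_le_three htwin _ a)
  · linarith
  intro e he
  rw [mem_filter, mem_edgeFinset, mem_sym2_iff] at he
  induction e using Sym2.ind with | _ u v => ?_
  obtain ⟨a, ha⟩ := h.exists_charges hcomp he.1
    (mem_compl.mp (he.2 u (Sym2.mem_mk_left u v))) (mem_compl.mp (he.2 v (Sym2.mem_mk_right u v)))
  exact one_le_card.mpr ⟨a, mem_filter.mpr ⟨ha.1, ha⟩⟩

variable (G P) in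
theorem card_outerNbhd_le_sum_degree : #(G.outerNbhd P) ≤ ∑ p ∈ P, G.degree p :=
  calc #(G.outerNbhd P) ≤ #(P.biUnion fun p => G.neighborFinset p) :=
        card_le_card fun v hv => by
          obtain ⟨-, p, hp, hpv⟩ := mem_outerNbhd.mp hv
          exact mem_biUnion.mpr ⟨p, hp, (G.mem_neighborFinset p v).mpr hpv⟩
    _ ≤ ∑ p ∈ P, G.degree p := card_biUnion_le

variable (G P) in
theorem card_edges_meeting_le_sum_degree :
    #{e ∈ G.edgeFinset | e ∉ Pᶜ.sym2} ≤ ∑ p ∈ P, G.degree p :=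
  calc #{e ∈ G.edgeFinset | e ∉ Pᶜ.sym2} ≤ #(P.biUnion fun p => G.incidenceFinset p) :=
        card_le_card fun e he => by
          rw [mem_filter, mem_edgeFinset, mem_sym2_iff] at he
          obtain ⟨p, hpe, hp⟩ := not_forall₂.mp he.2
          exact mem_biUnion.mpr ⟨p, by simpa using hp,
            (G.mem_incidenceFinset p e).mpr ⟨he.1, hpe⟩⟩
    _ ≤ ∑ p ∈ P, #(G.incidenceFinset p) := card_biUnion_le
    _ = ∑ p ∈ P, G.degree p := sum_congr rfl fun p _ => G.card_incidenceFinset_eq_degree p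

theorem NoPath4Outside.card_edgeFinset_le (h : G.NoPath4Outside P)
    (htwin : ∀ u, {x | G.neighborSet x = {u}}.Subsingleton)
    (hcomp : ∀ x : V, x ∉ P → ∃ (y : V) (w : G.Walk x y),
      (∀ z ∈ w.support, z ∉ P) ∧ ∃ p ∈ P, G.Adj y p) :
    #G.edgeFinset ≤ 4 * ∑ p ∈ P, G.degree p := by
  have hsplit := card_filter_add_card_filter_not (s := G.edgeFinset) (· ∈ Pᶜ.sym2)
  have := h.card_edges_outside_le htwin hcomp
  have := G.card_outerNbhd_le_sum_degree P
  have := G.card_edges_meeting_le_sum_degree P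
  omega

end Finite

end SimpleGraph

open SimpleGraph

/-- In the 4-PVC kernel setting: if `|P| ≤ 4k`, every degree is at most `6k + 6`, `G` has no
degree-one false twins, `G − P` has no path on 4 vertices, and every connected component of
`G − P` has a vertex with a neighbor in `P`, then `G` has at most `96k² + 96k` edges. -/
theorem total_edges_4pvc {V : Type*} [Fintype V] (G : SimpleGraph V) (k : ℕ)
    (P : Finset V) (hP : P.card ≤ 4 * k)
    (hdeg : ∀ x : V, (G.neighborSet x).ncard ≤ 6 * k + 6)
    (htwin : ¬ ∃ u x y : V, x ≠ y ∧ x ≠ u ∧ y ≠ u ∧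
      G.neighborSet x = {u} ∧ G.neighborSet y = {u})
    (hP4free : ∀ ⦃a b : V⦄ (p : G.Walk a b), p.IsPath →
      (∀ x ∈ p.support, x ∉ P) → p.length + 1 ≠ 4)
    (hcomp : ∀ x : V, x ∉ P → ∃ (y : V) (w : G.Walk x y),
      (∀ z ∈ w.support, z ∉ P) ∧ ∃ p ∈ P, G.Adj y p) :
    G.edgeSet.ncard ≤ 96 * k ^ 2 + 96 * k := by
  classical
  have hsum : ∑ p ∈ P, G.degree p ≤ #P * (6 * k + 6) := sum_le_card_nsmul P _ _ fun x _ => by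
    rw [← card_neighborSet_eq_degree, ← Set.toFinset_card, ← Set.ncard_eq_toFinset_card']
    exact hdeg x
  have hE := (NoPath4Outside.of_walk hP4free).card_edgeFinset_le
    (subsingleton_setOf_neighborSet_eq_singleton htwin) hcomp
  rw [← coe_edgeFinset, Set.ncard_coe_finset]
  nlinarith
end

section
/- Let G be a simple graph that contains no three distinct vertices u, x, y with N(x) = N(y) = {u}, and let P be a set of vertices of G. Suppose C is the vertex set of a connected component of G − P such that the subgraph induced on C is a star with a triangle, with center c. Then at most one leaf of the star that is not incident to the added triangle edge has no neighbor in P; consequently, at most four vertices of C (the three vertices of the triangle and at most one further leaf) have no neighbor in P. -/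
open SimpleGraph

/-- If `G` has no three distinct vertices `u, x, y` with `N(x) = N(y) = {u}`, and `C` is the
vertex set of a connected component of `G − P` inducing a star with a triangle (center `c`,
triangle formed by `c` and the two leaves `t₁, t₂`), then at most one leaf not incident to
the triangle edge has no neighbor in `P`; consequently at most four vertices of `C` (the
three triangle vertices and at most one further leaf) have no neighbor in `P`. -/
theorem star_with_triangle_component {V : Type*} (G : SimpleGraph V)
    (htwin : ¬ ∃ u x y : V, x ≠ y ∧ x ≠ u ∧ y ≠ u ∧
      G.neighborSet x = {u} ∧ G.neighborSet y = {u})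
    (P : Set V) (C : Set V) (c t₁ t₂ : V)
    (hCP : C ⊆ Pᶜ)
    (hclosed : ∀ x ∈ C, ∀ y : V, G.Adj x y → y ∉ P → y ∈ C)
    (hconn : (G.induce C).Connected)
    (hc : c ∈ C) (ht₁ : t₁ ∈ C) (ht₂ : t₂ ∈ C)
    (hct₁ : c ≠ t₁) (hct₂ : c ≠ t₂) (ht₁t₂ : t₁ ≠ t₂)
    (hswt : ∀ x ∈ C, ∀ y ∈ C, G.Adj x y ↔
      ((x = c ∧ y ≠ c) ∨ (y = c ∧ x ≠ c) ∨ (x = t₁ ∧ y = t₂) ∨ (x = t₂ ∧ y = t₁))) :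
    ({l | l ∈ C ∧ l ∉ ({c, t₁, t₂} : Set V) ∧ ∀ p ∈ P, ¬ G.Adj l p}).Subsingleton ∧
    ∃ l : V, {x | x ∈ C ∧ ∀ p ∈ P, ¬ G.Adj x p} ⊆ {c, t₁, t₂, l} := by

  classical
  set S := {l | l ∈ C ∧ l ∉ ({c, t₁, t₂} : Set V) ∧ ∀ p ∈ P, ¬ G.Adj l p} with hS
  have key : ∀ l ∈ S, G.neighborSet l = {c} := by
    intro l hl
    obtain ⟨hlC, hlnot, hlP⟩ := hl
    have hlc : l ≠ c := fun h => hlnot (by simp [h])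
    have hlt₁ : l ≠ t₁ := fun h => hlnot (by simp [h])
    have hlt₂ : l ≠ t₂ := fun h => hlnot (by simp [h])
    ext z
    simp only [mem_neighborSet, Set.mem_singleton_iff]
    constructor
    · intro hadj
      by_cases hzP : z ∈ P
      · exact absurd hadj (hlP z hzP)
      · have hzC : z ∈ C := hclosed l hlC z hadj hzP
        rcases (hswt l hlC z hzC).mp hadj with ⟨h, _⟩ | ⟨h, _⟩ | ⟨h, _⟩ | ⟨h, _⟩
        · exact absurd h hlc
        · exact h
        · exact absurd h hlt₁
        · exact absurd h hlt₂
    · rintro rfl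
      exact (hswt l hlC z hc).mpr (Or.inr (Or.inl ⟨rfl, hlc⟩))
  have hsub : S.Subsingleton := by
    intro x hx y hy
    by_contra hxy
    have hxc : x ≠ c := fun h => hx.2.1 (by simp [h])
    have hyc : y ≠ c := fun h => hy.2.1 (by simp [h])
    exact htwin ⟨c, x, y, hxy, hxc, hyc, key x hx, key y hy⟩
  refine ⟨hsub, ?_⟩
  by_cases hne : ∃ l, l ∈ S
  · obtain ⟨l, hl⟩ := hne
    refine ⟨l, fun x hx => ?_⟩
    by_cases h : x ∈ ({c, t₁, t₂} : Set V)
    · simp only [Set.mem_insert_iff, Set.mem_singleton_iff] at h ⊢; tauto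
    · have : x ∈ S := ⟨hx.1, h, hx.2⟩
      have := hsub this hl
      simp [this]
  · refine ⟨c, fun x hx => ?_⟩
    by_cases h : x ∈ ({c, t₁, t₂} : Set V)
    · simp only [Set.mem_insert_iff, Set.mem_singleton_iff] at h ⊢; tauto
    · exact absurd ⟨hx.1, h, hx.2⟩ (fun hmem => hne ⟨x, hmem⟩)
end

section
/- Let G be a simple graph that contains no three distinct vertices u, x, y with N(x) = N(y) = {u}, and let P be a set of vertices of G. Suppose C is the vertex set of a connected component of G − P such that the subgraph induced on C is a di-star with centers c and c'. Then for each of the two centers, at most one of its leaves has no neighbor in P; consequently, at most four vertices of C (the two centers and at most one leaf of each center) have no neighbor in P. -/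
open SimpleGraph

/-- If `G` has no three distinct vertices `u, x, y` with `N(x) = N(y) = {u}`, and `C` is the
vertex set of a connected component of `G − P` inducing a di-star with centers `c` and `c'`,
then for each center at most one of its leaves has no neighbor in `P`; consequently at most
four vertices of `C` (the two centers and at most one leaf of each center) have no neighbor
in `P`. -/
theorem di_star_component {V : Type*} (G : SimpleGraph V)
    (htwin : ¬ ∃ u x y : V, x ≠ y ∧ x ≠ u ∧ y ≠ u ∧
      G.neighborSet x = {u} ∧ G.neighborSet y = {u})
    (P : Set V) (C : Set V) (c c' : V)
    (hCP : C ⊆ Pᶜ)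
    (hclosed : ∀ x ∈ C, ∀ y : V, G.Adj x y → y ∉ P → y ∈ C)
    (hconn : (G.induce C).Connected)
    (hc : c ∈ C) (hc' : c' ∈ C) (hcc' : c ≠ c') (hadj : G.Adj c c')
    (hleaf : ∀ x ∈ C, x ≠ c → x ≠ c' → (G.Adj c x ↔ ¬ G.Adj c' x))
    (hedges : ∀ x ∈ C, ∀ y ∈ C, G.Adj x y → x = c ∨ x = c' ∨ y = c ∨ y = c') :
    ({l | l ∈ C ∧ l ≠ c ∧ l ≠ c' ∧ G.Adj c l ∧ ∀ p ∈ P, ¬ G.Adj l p}).Subsingleton ∧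
    ({l | l ∈ C ∧ l ≠ c ∧ l ≠ c' ∧ G.Adj c' l ∧ ∀ p ∈ P, ¬ G.Adj l p}).Subsingleton ∧
    ∃ l l' : V, {x | x ∈ C ∧ ∀ p ∈ P, ¬ G.Adj x p} ⊆ {c, c', l, l'} := by
  classical
  set S1 := {l | l ∈ C ∧ l ≠ c ∧ l ≠ c' ∧ G.Adj c l ∧ ∀ p ∈ P, ¬ G.Adj l p} with hS1def
  set S2 := {l | l ∈ C ∧ l ≠ c ∧ l ≠ c' ∧ G.Adj c' l ∧ ∀ p ∈ P, ¬ G.Adj l p} with hS2def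
  have hN1 : ∀ a ∈ S1, G.neighborSet a = {c} := by
    intro a ha
    obtain ⟨haC, hac, hac', hca, hP⟩ := ha
    ext z
    simp only [mem_neighborSet, Set.mem_singleton_iff]
    constructor
    · intro hz
      have hzP : z ∉ P := fun hzP => hP z hzP hz
      have hzC : z ∈ C := hclosed a haC z hz hzP
      rcases hedges a haC z hzC hz with h | h | h | h
      · exact absurd h hac
      · exact absurd h hac'
      · exact h
      · subst h
        exact absurd hz.symm ((hleaf a haC hac hac').mp hca)
    · rintro rfl; exact hca.symm
  have hN2 : ∀ a ∈ S2, G.neighborSet a = {c'} := by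
    intro a ha
    obtain ⟨haC, hac, hac', hca, hP⟩ := ha
    have hnc : ¬ G.Adj c a := by
      intro h
      exact (hleaf a haC hac hac').mp h hca
    ext z
    simp only [mem_neighborSet, Set.mem_singleton_iff]
    constructor
    · intro hz
      have hzP : z ∉ P := fun hzP => hP z hzP hz
      have hzC : z ∈ C := hclosed a haC z hz hzP
      rcases hedges a haC z hzC hz with h | h | h | h
      · exact absurd h hac
      · exact absurd h hac'
      · subst h; exact absurd hz.symm hnc
      · exact h
    · rintro rfl; exact hca.symm
  have hsub1 : S1.Subsingleton := by
    intro a ha b hb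
    by_contra hab
    exact htwin ⟨c, a, b, hab, ha.2.1, hb.2.1, hN1 a ha, hN1 b hb⟩
  have hsub2 : S2.Subsingleton := by
    intro a ha b hb
    by_contra hab
    exact htwin ⟨c', a, b, hab, ha.2.2.1, hb.2.2.1, hN2 a ha, hN2 b hb⟩
  refine ⟨hsub1, hsub2, ?_⟩
  refine ⟨if h : S1.Nonempty then h.choose else c,
         if h : S2.Nonempty then h.choose else c, ?_⟩
  rintro x ⟨hxC, hxP⟩
  by_cases hxc : x = c
  · left; exact hxc
  by_cases hxc' : x = c'
  · right; left; exact hxc'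
  by_cases hadjx : G.Adj c x
  · have hx1 : x ∈ S1 := ⟨hxC, hxc, hxc', hadjx, hxP⟩
    have hne : S1.Nonempty := ⟨x, hx1⟩
    right; right; left
    rw [dif_pos hne]
    exact hsub1 hx1 hne.choose_spec
  · have hadjx' : G.Adj c' x := by
      by_contra h
      exact hadjx ((hleaf x hxC hxc hxc').mpr h)
    have hx2 : x ∈ S2 := ⟨hxC, hxc, hxc', hadjx', hxP⟩
    have hne : S2.Nonempty := ⟨x, hx2⟩
    right; right; right
    rw [dif_pos hne]
    exact hsub2 hx2 hne.choose_spec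
end

section
/- Let k be a natural number and let G be a simple graph and P a set of at most 5k vertices of G such that: (i) every vertex of G has degree at most 7k + 7; (ii) G contains no three distinct vertices u, x, y with N(x) = N(y) = {u}; (iii) G − P contains no path on 5 vertices; and (iv) every connected component of G − P contains a vertex with a neighbor in P. Then G − P has at most 210k² + 210k edges. -/
/-!
Let `H = G - P` and let `M` be the vertices of `H` with a neighbour in `P`; there are at most
`|P| (7k + 7)` of them, and every component of `H` with an edge meets `M`. In a connected graph
without a path on five vertices, every vertex off a longest path is a leaf hanging from an inner
vertex of that path. So a component either has at most four vertices, hence at most six edges,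
or it is a core of at most three vertices together with leaves hanging from at most two of them.
A leaf of `H` outside `M` is a leaf of `G`, so by the twin condition each vertex carries at most
one leaf outside `M`, and the component has at most `3 + |M ∩ C| + 2 ≤ 6 |M ∩ C|` edges.
Summing over components, `H` has at most `6 |M| ≤ 30k (7k + 7)` edges.
-/

open Finset SimpleGraph

namespace SimpleGraph

variable {V : Type*} {H : SimpleGraph V}

/-- Only non-consecutive vertices are required to differ: adjacency separates the others. -/
def NoFivePath (H : SimpleGraph V) : Prop :=
  ∀ ⦃v₁ v₂ v₃ v₄ v₅ : V⦄, H.Adj v₁ v₂ → H.Adj v₂ v₃ → H.Adj v₃ v₄ → H.Adj v₄ v₅ →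
    v₁ ≠ v₃ → v₁ ≠ v₄ → v₁ ≠ v₅ → v₂ ≠ v₄ → v₂ ≠ v₅ → v₃ ≠ v₅ → False

def pendantsAt (H : SimpleGraph V) (S : Finset V) : Set V :=
  {z | ∃ v ∈ S, H.neighborSet z = {v}}

theorem Adj.eq_of_neighborSet_eq_singleton {z v w : V} (hzw : H.Adj z w)
    (h : H.neighborSet z = {v}) : w = v :=
  Set.mem_singleton_iff.1 (h ▸ hzw)

theorem adj_of_neighborSet_eq_singleton {z v : V} (h : H.neighborSet z = {v}) : H.Adj z v := by
  rw [← mem_neighborSet, h]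
  rfl

theorem ConnectedComponent.supp_subset_of_adj_closed {c : H.ConnectedComponent} {X : Set V}
    {x : V} (hx : x ∈ c.supp) (hxX : x ∈ X) (hX : ∀ ⦃u v⦄, u ∈ X → H.Adj u v → v ∈ X) :
    c.supp ⊆ X := by
  intro y hy
  obtain ⟨w⟩ := c.reachable_of_mem_supp hx hy
  induction w with
  | nil => exact hxX
  | cons h _ ih => exact ih (c.mem_supp_of_adj_mem_supp hx h) (hX hxX h) hy

theorem ncard_edgeSet_inter_sym2_le [Finite V] {C : Set V} {K : Finset V}
    (hC : ∀ z ∈ C, z ∉ K → ∃ v, H.neighborSet z = {v}) :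
    (H.edgeSet ∩ C.sym2).ncard ≤ (#K).choose 2 + (C \ K).ncard := by
  classical
  set pendantEdges : Set (V × V) := {e | e.1 ∈ C \ K ∧ H.neighborSet e.1 = {e.2}}
  have pendant_edge {a b : V} (ha : a ∈ C) (haK : a ∉ K) (hab : H.Adj a b) :
      (a, b) ∈ pendantEdges := by
    obtain ⟨v, hv⟩ := hC a ha haK
    exact ⟨⟨ha, haK⟩, hab.eq_of_neighborSet_eq_singleton hv ▸ hv⟩
  have hsub : H.edgeSet ∩ C.sym2 ⊆
      ↑(K.offDiag.image Sym2.mk.uncurry) ∪ Sym2.mk.uncurry '' pendantEdges := by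
    rintro ⟨x, y⟩ ⟨hxy, hx, hy⟩
    by_cases hxK : x ∈ K
    · by_cases hyK : y ∈ K
      · left
        simp only [coe_image, coe_offDiag]
        exact ⟨(x, y), ⟨hxK, hyK, hxy.ne⟩, rfl⟩
      · exact Or.inr ⟨(y, x), pendant_edge hy hyK hxy.symm, Sym2.eq_swap⟩
    · exact Or.inr ⟨(x, y), pendant_edge hx hxK hxy, rfl⟩
  have hpendantEdges : pendantEdges.ncard ≤ (C \ K).ncard := by
    refine Set.ncard_le_ncard_of_injOn Prod.fst (fun e he => he.1) ?_
    rintro ⟨x, y⟩ ⟨-, hxy⟩ ⟨x', y'⟩ ⟨-, hxy'⟩ (rfl : x = x')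
    simpa [hxy] using hxy'
  calc _ ≤ _ := Set.ncard_le_ncard hsub
    _ ≤ _ := Set.ncard_union_le _ _
    _ ≤ (#K).choose 2 + (C \ K).ncard := by
      rw [Set.ncard_coe_finset, Sym2.card_image_offDiag]
      exact Nat.add_le_add_left ((Set.ncard_image_le).trans hpendantEdges) _

theorem ncard_le_ncard_inter_add_of_subset_pendantsAt [Finite V] {M X : Set V} {S : Finset V}
    (hpend : ∀ u, {x | x ∉ M ∧ H.neighborSet x = {u}}.Subsingleton) (hX : X ⊆ H.pendantsAt S) :
    X.ncard ≤ (X ∩ M).ncard + #S := by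
  have hout : (X \ M).ncard ≤ ((fun v => ({v} : Set V)) '' S).ncard := by
    refine Set.ncard_le_ncard_of_injOn H.neighborSet ?_ ?_
    · rintro x ⟨hxX, -⟩
      obtain ⟨v, hv, hxv⟩ := hX hxX
      exact ⟨v, hv, hxv.symm⟩
    · rintro x ⟨hxX, hxM⟩ y ⟨-, hyM⟩ hxy
      obtain ⟨v, -, hxv⟩ := hX hxX
      exact hpend v ⟨hxM, hxv⟩ ⟨hyM, hxy ▸ hxv⟩
  rw [← Set.ncard_inter_add_ncard_sdiff_eq_ncard X M]
  exact Nat.add_le_add_left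
    ((hout.trans Set.ncard_image_le).trans_eq (Set.ncard_coe_finset S)) _

theorem ncard_edgeSet_inter_supp_sym2_le [Finite V] {M : Set V}
    (hpend : ∀ u, {x | x ∉ M ∧ H.neighborSet x = {u}}.Subsingleton) {c : H.ConnectedComponent}
    (hM : (M ∩ c.supp).Nonempty) {K S : Finset V} (hc : c.supp ⊆ ↑K ∪ H.pendantsAt S)
    (hKS : (#K ≤ 4 ∧ S = ∅) ∨ (#K ≤ 3 ∧ #S ≤ 2)) :
    (H.edgeSet ∩ c.supp.sym2).ncard ≤ 6 * (M ∩ c.supp).ncard := by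
  have hm := (Set.ncard_pos (Set.toFinite _)).2 hM
  have hleaves : c.supp \ K ⊆ H.pendantsAt S := fun z ⟨hz, hzK⟩ => (hc hz).resolve_left hzK
  have hedges := ncard_edgeSet_inter_sym2_le (H := H) (K := K) fun z hz hzK =>
    (hleaves ⟨hz, hzK⟩).imp fun _ h => h.2
  have hcount := ncard_le_ncard_inter_add_of_subset_pendantsAt hpend hleaves
  have hMK : ((c.supp \ K) ∩ M).ncard ≤ (M ∩ c.supp).ncard :=
    Set.ncard_le_ncard fun z ⟨⟨hz, _⟩, hzM⟩ => ⟨hzM, hz⟩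
  rcases hKS with ⟨hK, rfl⟩ | ⟨hK, hS⟩
  · have : c.supp \ K = ∅ := by simpa [pendantsAt] using hleaves
    have hchoose : (#K).choose 2 ≤ 6 := (Nat.choose_le_choose 2 hK).trans (by decide)
    rw [this, Set.ncard_empty] at hedges
    omega
  · have hchoose : (#K).choose 2 ≤ 3 := (Nat.choose_le_choose 2 hK).trans (by decide)
    omega

theorem ncard_edgeSet_le_of_forall_connectedComponent [Finite V] {M : Set V} {k : ℕ}
    (h : ∀ c : H.ConnectedComponent, (H.edgeSet ∩ c.supp.sym2).ncard ≤ k * (M ∩ c.supp).ncard) :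
    H.edgeSet.ncard ≤ k * M.ncard := by
  have := Fintype.ofFinite H.ConnectedComponent
  have hE : H.edgeSet = ⋃ c : H.ConnectedComponent, H.edgeSet ∩ c.supp.sym2 := by
    rw [← Set.inter_iUnion, eq_comm, Set.inter_eq_left]
    rintro ⟨x, y⟩ hxy
    exact Set.mem_iUnion.2 ⟨H.connectedComponentMk x, rfl,
      ((H.connectedComponentMk x).mem_supp_congr_adj hxy).1 rfl⟩
  have hM : M = ⋃ c : H.ConnectedComponent, M ∩ c.supp := by
    rw [← Set.inter_iUnion, iUnion_connectedComponentSupp, Set.inter_univ]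
  have hdisj {c c' : H.ConnectedComponent} (hcc' : c ≠ c') :
      Disjoint c.supp.sym2 c'.supp.sym2 := by
    rw [Set.disjoint_iff_inter_eq_empty, ← Set.sym2_inter,
      (pairwise_disjoint_supp_connectedComponent H hcc').inter_eq, Set.sym2_empty]
  rw [hE, hM, Set.ncard_iUnion_of_finite (fun _ => Set.toFinite _)
      fun c c' hcc' => (hdisj hcc').mono Set.inter_subset_right Set.inter_subset_right,
    Set.ncard_iUnion_of_finite (fun _ => Set.toFinite _)
      fun c c' hcc' => (pairwise_disjoint_supp_connectedComponent H hcc').mono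
        Set.inter_subset_right Set.inter_subset_right,
    finsum_eq_sum_of_fintype, finsum_eq_sum_of_fintype, Finset.mul_sum]
  exact Finset.sum_le_sum fun c _ => h c

namespace NoFivePath

variable [DecidableEq V] {c : H.ConnectedComponent}

theorem supp_subset_of_path4_of_adj_second (hH : H.NoFivePath) {p q r s z : V} (hp : p ∈ c.supp)
    (hpq : H.Adj p q) (hqr : H.Adj q r) (hrs : H.Adj r s) (hpr : p ≠ r) (hps : p ≠ s)
    (hqs : q ≠ s) (hqz : H.Adj q z) (hz : z ∉ ({p, q, r, s} : Finset V)) :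
    c.supp ⊆ ({q, r, s} : Finset V) ∪ H.pendantsAt {q, r} := by
  simp only [Finset.mem_insert, Finset.mem_singleton, not_or] at hz
  obtain ⟨hzp, -, hzr, hzs⟩ := hz
  have hNp : H.neighborSet p = {q} := by
    ext v
    refine ⟨fun hpv => ?_, fun hv => hv ▸ hpq⟩
    by_contra hvq
    rcases eq_or_ne v r with rfl | hvr
    · exact hH hqz.symm hpq.symm hpv hrs hzp hzr hzs hqr.ne hqs hps
    rcases eq_or_ne v s with rfl | hvs
    · exact hH hqz.symm hpq.symm hpv hrs.symm hzp hzs hzr hqs hqr.ne hpr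
    · exact hH hpv.symm hpq hqr hrs hvq hvr hvs hpr hps hqs
  have hNs {w : V} (hsw : H.Adj s w) : w = q ∨ w = r := by
    by_contra! hw
    rcases eq_or_ne w p with rfl | hwp
    · exact hqs (hsw.symm.eq_of_neighborSet_eq_singleton hNp).symm
    · exact hH hsw.symm hrs.symm hqr.symm hpq.symm hw.2 hw.1 hwp hqs.symm hps.symm hpr.symm
  have hNq {w : V} (hqw : H.Adj q w) (hwr : w ≠ r) (hws : w ≠ s) : H.neighborSet w = {q} := by
    rcases eq_or_ne w p with rfl | hwp
    · exact hNp
    ext v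
    refine ⟨fun hwv => ?_, fun hv => hv ▸ hqw.symm⟩
    by_contra hvq
    rcases eq_or_ne v p with rfl | hvp
    · exact hqw.ne (hwv.symm.eq_of_neighborSet_eq_singleton hNp).symm
    rcases eq_or_ne v r with rfl | hvr
    · exact hH hpq hqw hwv hrs hwp.symm hpr hps hqr.ne hqs hws
    rcases eq_or_ne v s with rfl | hvs
    · rcases hNs hwv.symm with h | h
      exacts [hqw.ne h.symm, hwr h]
    · exact hH hwv.symm hqw.symm hqr hrs hvq hvr hvs hwr hws hqs
  have hNr {w : V} (hrw : H.Adj r w) (hwq : w ≠ q) (hws : w ≠ s) : H.neighborSet w = {r} := by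
    have hwp : w ≠ p := by
      rintro rfl
      exact hqr.ne (hrw.symm.eq_of_neighborSet_eq_singleton hNp).symm
    ext v
    refine ⟨fun hwv => ?_, fun hv => hv ▸ hrw.symm⟩
    by_contra hvr
    rcases eq_or_ne v p with rfl | hvp
    · exact hwq (hwv.symm.eq_of_neighborSet_eq_singleton hNp)
    rcases eq_or_ne v q with rfl | hvq
    · exact hH hpq hwv.symm hrw.symm hrs hwp.symm hpr hps hqr.ne hqs hws
    rcases eq_or_ne v s with rfl | hvs
    · rcases hNs hwv.symm with h | h
      exacts [hwq h, hrw.ne h.symm]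
    · exact hH hwv.symm hrw.symm hqr.symm hpq.symm hvr hvq hvp hwq hwp hpr.symm
  refine c.supp_subset_of_adj_closed hp (Or.inr ⟨q, by simp, hNp⟩) ?_
  rintro x y (hx | ⟨v, hv, hxv⟩) hxy
  · simp only [Finset.coe_insert, Finset.coe_singleton, Set.mem_insert_iff,
      Set.mem_singleton_iff] at hx
    simp only [Set.mem_union, Finset.coe_insert, Finset.coe_singleton, Set.mem_insert_iff,
      Set.mem_singleton_iff]
    rcases hx with rfl | rfl | rfl
    · by_cases! hy : y = r ∨ y = s
      · exact Or.inl (Or.inr hy)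
      · exact Or.inr ⟨x, by simp, hNq hxy hy.1 hy.2⟩
    · by_cases! hy : y = q ∨ y = s
      · rcases hy with rfl | rfl <;> simp
      · exact Or.inr ⟨x, by simp, hNr hxy hy.1 hy.2⟩
    · rcases hNs hxy with rfl | rfl <;> simp
  · obtain rfl := hxy.eq_of_neighborSet_eq_singleton hxv
    simp only [Finset.mem_insert, Finset.mem_singleton] at hv
    rcases hv with rfl | rfl <;> simp

theorem supp_subset_of_path4 (hH : H.NoFivePath) {p q r s : V} (hp : p ∈ c.supp)
    (hpq : H.Adj p q) (hqr : H.Adj q r) (hrs : H.Adj r s) (hpr : p ≠ r) (hps : p ≠ s)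
    (hqs : q ≠ s) (hq : ∀ z, H.Adj q z → z ∈ ({p, q, r, s} : Finset V))
    (hr : ∀ z, H.Adj r z → z ∈ ({p, q, r, s} : Finset V)) :
    c.supp ⊆ ({p, q, r, s} : Finset V) := by
  refine c.supp_subset_of_adj_closed hp (by simp) ?_
  intro x y hx hxy
  simp only [Finset.coe_insert, Finset.coe_singleton, Set.mem_insert_iff,
    Set.mem_singleton_iff] at hx ⊢
  by_contra! hy
  obtain ⟨hyp, hyq, hyr, hys⟩ := hy
  rcases hx with rfl | rfl | rfl | rfl
  · exact hH hxy.symm hpq hqr hrs hyq hyr hys hpr hps hqs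
  · simpa [hyp, hyq, hyr, hys] using hq y hxy
  · simpa [hyp, hyq, hyr, hys] using hr y hxy
  · exact hH hxy.symm hrs.symm hqr.symm hpq.symm hyr hyq hyp hqs.symm hps.symm hpr.symm

end NoFivePath

namespace ConnectedComponent

variable [DecidableEq V] {c : H.ConnectedComponent}

theorem supp_subset_of_path3 {x u y : V} (hx : x ∈ c.supp) (hxu : H.Adj x u) (huy : H.Adj u y)
    (hxy : x ≠ y) (hP4 : ∀ ⦃p q r s : V⦄, p ∈ c.supp → H.Adj p q → H.Adj q r → H.Adj r s →
      p ≠ r → p ≠ s → q ≠ s → False) :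
    c.supp ⊆ ({x, u, y} : Finset V) ∪ H.pendantsAt {u} := by
  have hu := c.mem_supp_of_adj_mem_supp hx hxu
  have hNu {w : V} (huw : H.Adj u w) (hwx : w ≠ x) (hwy : w ≠ y) : H.neighborSet w = {u} := by
    have hw := c.mem_supp_of_adj_mem_supp hu huw
    ext v
    refine ⟨fun hwv => ?_, fun hv => hv ▸ huw.symm⟩
    by_contra hvu
    rcases eq_or_ne v x with rfl | hvx
    · exact hP4 hw hwv hxu huy huw.ne' hwy hxy
    rcases eq_or_ne v y with rfl | hvy
    · exact hP4 hw hwv huy.symm hxu.symm huw.ne' hwx hxy.symm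
    · exact hP4 (c.mem_supp_of_adj_mem_supp hw hwv) hwv.symm huw.symm hxu.symm hvu hvx hwx
  refine c.supp_subset_of_adj_closed hx (by simp) ?_
  rintro w z (hw | ⟨v, hv, hwv⟩) hwz
  · simp only [Finset.coe_insert, Finset.coe_singleton, Set.mem_insert_iff,
      Set.mem_singleton_iff] at hw
    simp only [Set.mem_union, Finset.coe_insert, Finset.coe_singleton, Set.mem_insert_iff,
      Set.mem_singleton_iff]
    by_contra! hz
    obtain ⟨⟨hzx, hzu, hzy⟩, hzpend⟩ := hz
    rcases hw with rfl | rfl | rfl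
    · exact hP4 (c.mem_supp_of_adj_mem_supp hx hwz) hwz.symm hxu huy hzu hzy hxy
    · exact hzpend ⟨w, by simp, hNu hwz hzx hzy⟩
    · exact hP4 (c.mem_supp_of_adj_mem_supp (c.mem_supp_of_adj_mem_supp hu huy) hwz) hwz.symm
        huy.symm hxu.symm hzu hzx hxy.symm
  · obtain rfl := hwz.eq_of_neighborSet_eq_singleton hwv
    simp only [Finset.mem_singleton] at hv
    simp [hv]

theorem supp_subset_of_adj {a b : V} (ha : a ∈ c.supp) (hab : H.Adj a b)
    (hP3 : ∀ ⦃x u y : V⦄, x ∈ c.supp → H.Adj x u → H.Adj u y → x ≠ y → False) :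
    c.supp ⊆ ({a, b} : Finset V) := by
  refine c.supp_subset_of_adj_closed ha (by simp) ?_
  intro w z hw hwz
  simp only [Finset.coe_insert, Finset.coe_singleton, Set.mem_insert_iff,
    Set.mem_singleton_iff] at hw ⊢
  by_contra! hz
  rcases hw with rfl | rfl
  · exact hP3 (c.mem_supp_of_adj_mem_supp ha hwz) hwz.symm hab hz.2
  · exact hP3 (c.mem_supp_of_adj_mem_supp (c.mem_supp_of_adj_mem_supp ha hab) hwz) hwz.symm
      hab.symm hz.1

end ConnectedComponent

theorem NoFivePath.exists_supp_subset [DecidableEq V] (hH : H.NoFivePath)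
    {c : H.ConnectedComponent} {a b : V} (ha : a ∈ c.supp) (hab : H.Adj a b) :
    ∃ K S : Finset V, c.supp ⊆ ↑K ∪ H.pendantsAt S ∧ (#K ≤ 4 ∧ S = ∅ ∨ #K ≤ 3 ∧ #S ≤ 2) := by
  -- A longest path in `c` has four, three or two vertices.
  by_cases hP4 : ∃ p q r s, p ∈ c.supp ∧ H.Adj p q ∧ H.Adj q r ∧ H.Adj r s ∧
      p ≠ r ∧ p ≠ s ∧ q ≠ s
  · obtain ⟨p, q, r, s, hp, hpq, hqr, hrs, hpr, hps, hqs⟩ := hP4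
    by_cases! hq : ∃ z, H.Adj q z ∧ z ∉ ({p, q, r, s} : Finset V)
    · obtain ⟨z, hqz, hz⟩ := hq
      exact ⟨{q, r, s}, {q, r},
        hH.supp_subset_of_path4_of_adj_second hp hpq hqr hrs hpr hps hqs hqz hz,
        Or.inr ⟨card_le_three, card_le_two⟩⟩
    by_cases! hr : ∃ z, H.Adj r z ∧ z ∉ ({p, q, r, s} : Finset V)
    · obtain ⟨z, hrz, hz⟩ := hr
      have hs := c.mem_supp_of_adj_mem_supp (c.mem_supp_of_adj_mem_supp
        (c.mem_supp_of_adj_mem_supp hp hpq) hqr) hrs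
      refine ⟨{r, q, p}, {r, q}, hH.supp_subset_of_path4_of_adj_second hs hrs.symm hqr.symm
        hpq.symm hqs.symm hps.symm hpr.symm hrz ?_, Or.inr ⟨card_le_three, card_le_two⟩⟩
      simp only [Finset.mem_insert, Finset.mem_singleton] at hz ⊢
      tauto
    · exact ⟨{p, q, r, s}, ∅, Set.subset_union_of_subset_left
        (hH.supp_subset_of_path4 hp hpq hqr hrs hpr hps hqs hq hr) _,
        Or.inl ⟨card_le_four, rfl⟩⟩
  have hP4' : ∀ ⦃p q r s : V⦄, p ∈ c.supp → H.Adj p q → H.Adj q r → H.Adj r s →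
      p ≠ r → p ≠ s → q ≠ s → False := fun p q r s hp hpq hqr hrs hpr hps hqs =>
    hP4 ⟨p, q, r, s, hp, hpq, hqr, hrs, hpr, hps, hqs⟩
  by_cases hP3 : ∃ x u y, x ∈ c.supp ∧ H.Adj x u ∧ H.Adj u y ∧ x ≠ y
  · obtain ⟨x, u, y, hx, hxu, huy, hxy⟩ := hP3
    exact ⟨{x, u, y}, {u}, c.supp_subset_of_path3 hx hxu huy hxy hP4',
      Or.inr ⟨card_le_three, by simp⟩⟩
  · exact ⟨{a, b}, ∅, Set.subset_union_of_subset_left (c.supp_subset_of_adj ha hab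
      fun x u y hx hxu huy hxy => hP3 ⟨x, u, y, hx, hxu, huy, hxy⟩) _,
      Or.inl ⟨card_le_two.trans (by norm_num), rfl⟩⟩

theorem NoFivePath.ncard_edgeSet_le [Finite V] {M : Set V} (hH : H.NoFivePath)
    (hpend : ∀ u, {x | x ∉ M ∧ H.neighborSet x = {u}}.Subsingleton)
    (hM : ∀ ⦃x y⦄, H.Adj x y → ∃ m ∈ M, H.Reachable x m) :
    H.edgeSet.ncard ≤ 6 * M.ncard := by
  classical
  refine ncard_edgeSet_le_of_forall_connectedComponent fun c => ?_
  rcases (H.edgeSet ∩ c.supp.sym2).eq_empty_or_nonempty with hc | ⟨⟨a, b⟩, hab, ha, -⟩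
  · simp [hc]
  obtain ⟨m, hm, ham⟩ := hM hab
  have hmc : m ∈ c.supp := (ConnectedComponent.sound ham).symm.trans ha
  obtain ⟨K, S, hKS, hsize⟩ := hH.exists_supp_subset ha hab
  exact ncard_edgeSet_inter_supp_sym2_le hpend ⟨m, hm, hmc⟩ hKS hsize

variable {G : SimpleGraph V} {P : Set V}

/-- `G - P` on the whole vertex type: the vertices of `P` stay, as isolated vertices. -/
def isolateVerts (G : SimpleGraph V) (P : Set V) : SimpleGraph V where
  Adj x y := G.Adj x y ∧ x ∉ P ∧ y ∉ P
  symm := ⟨fun _ _ h => ⟨h.1.symm, h.2.2, h.2.1⟩⟩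
  loopless := ⟨fun _ h => G.loopless.irrefl _ h.1⟩

@[simp]
theorem isolateVerts_adj {x y : V} :
    (G.isolateVerts P).Adj x y ↔ G.Adj x y ∧ x ∉ P ∧ y ∉ P :=
  Iff.rfl

theorem edgeSet_isolateVerts :
    (G.isolateVerts P).edgeSet = {e ∈ G.edgeSet | ∀ x ∈ e, x ∉ P} := by
  ext ⟨x, y⟩
  simp

def outerBoundary (G : SimpleGraph V) (P : Set V) : Set V :=
  {x | x ∉ P ∧ ∃ p ∈ P, G.Adj x p}

theorem ncard_outerBoundary_le [Finite V] {P : Finset V} {d : ℕ}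
    (hdeg : ∀ p ∈ P, (G.neighborSet p).ncard ≤ d) : (G.outerBoundary P).ncard ≤ #P * d := by
  have hsub : G.outerBoundary P ⊆ ⋃ p ∈ P, G.neighborSet p := fun x ⟨_, p, hp, hxp⟩ =>
    Set.mem_biUnion hp hxp.symm
  calc _ ≤ ∑ p ∈ P, (G.neighborSet p).ncard :=
        (Set.ncard_le_ncard hsub).trans (Finset.set_ncard_biUnion_le P _)
    _ ≤ #P * d := Finset.sum_le_card_nsmul _ _ _ hdeg

theorem neighborSet_isolateVerts {x : V} (hx : x ∉ P) (hxP : ∀ p ∈ P, ¬G.Adj x p) :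
    (G.isolateVerts P).neighborSet x = G.neighborSet x := by
  ext y
  simp only [mem_neighborSet, isolateVerts_adj]
  exact ⟨And.left, fun hxy => ⟨hxy, hx, fun hy => hxP y hy hxy⟩⟩

theorem subsingleton_pendants_isolateVerts (hG : ∀ u, {x | G.neighborSet x = {u}}.Subsingleton)
    (u : V) :
    {x | x ∉ G.outerBoundary P ∧ (G.isolateVerts P).neighborSet x = {u}}.Subsingleton := by
  have hleaf {x : V} (hxM : x ∉ G.outerBoundary P)
      (hx : (G.isolateVerts P).neighborSet x = {u}) : G.neighborSet x = {u} := by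
    have hxP : x ∉ P := (isolateVerts_adj.1 (adj_of_neighborSet_eq_singleton hx)).2.1
    rwa [← neighborSet_isolateVerts hxP fun p hp hxp => hxM ⟨hxP, p, hp, hxp⟩]
  exact (hG u).anti fun x ⟨hxM, hx⟩ => hleaf hxM hx

theorem Walk.reachable_isolateVerts {x y : V} (w : G.Walk x y) (hw : ∀ z ∈ w.support, z ∉ P) :
    (G.isolateVerts P).Reachable x y := by
  induction w with
  | nil => rfl
  | cons h w ih =>
    simp only [Walk.support_cons, List.mem_cons, forall_eq_or_imp] at hw
    have hstep : (G.isolateVerts P).Adj _ _ := ⟨h, hw.1, hw.2 _ w.start_mem_support⟩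
    exact hstep.reachable.trans (ih hw.2)

theorem noFivePath_isolateVerts (h : ∀ ⦃a b : V⦄ (p : G.Walk a b), p.IsPath →
      (∀ x ∈ p.support, x ∉ P) → p.length + 1 ≠ 5) :
    (G.isolateVerts P).NoFivePath := by
  intro v₁ v₂ v₃ v₄ v₅ h₁₂ h₂₃ h₃₄ h₄₅ h₁₃ h₁₄ h₁₅ h₂₄ h₂₅ h₃₅
  simp only [isolateVerts_adj] at h₁₂ h₂₃ h₃₄ h₄₅
  refine h (.cons h₁₂.1 (.cons h₂₃.1 (.cons h₃₄.1 (.cons h₄₅.1 .nil)))) ?_ ?_ rfl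
  · simp [Walk.isPath_def, h₁₂.1.ne, h₂₃.1.ne, h₃₄.1.ne, h₄₅.1.ne, *]
  · simp [h₁₂.2.1, h₂₃.2.1, h₃₄.2.1, h₄₅.2.1, h₄₅.2.2]

end SimpleGraph

/-- In the 5-PVC kernel setting: if `|P| ≤ 5k`, every degree is at most `7k + 7`, `G` has no
degree-one false twins, `G − P` has no path on 5 vertices, and every connected component of
`G − P` has a vertex with a neighbor in `P`, then `G − P` has at most `210k² + 210k` edges. -/
theorem edges_outside_packing_5pvc {V : Type*} [Fintype V] (G : SimpleGraph V) (k : ℕ)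
    (P : Finset V) (hP : P.card ≤ 5 * k)
    (hdeg : ∀ x : V, (G.neighborSet x).ncard ≤ 7 * k + 7)
    (htwin : ¬ ∃ u x y : V, x ≠ y ∧ x ≠ u ∧ y ≠ u ∧
      G.neighborSet x = {u} ∧ G.neighborSet y = {u})
    (hP5free : ∀ ⦃a b : V⦄ (p : G.Walk a b), p.IsPath →
      (∀ x ∈ p.support, x ∉ P) → p.length + 1 ≠ 5)
    (hcomp : ∀ x : V, x ∉ P → ∃ (y : V) (w : G.Walk x y),
      (∀ z ∈ w.support, z ∉ P) ∧ ∃ p ∈ P, G.Adj y p) :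
    ({e ∈ G.edgeSet | ∀ x ∈ e, x ∉ (P : Set V)}).ncard ≤ 210 * k ^ 2 + 210 * k := by
  have hleaf (u : V) : {x | G.neighborSet x = {u}}.Subsingleton := by
    intro x hx y hy
    by_contra hxy
    exact htwin ⟨u, x, y, hxy, (adj_of_neighborSet_eq_singleton hx).ne,
      (adj_of_neighborSet_eq_singleton hy).ne, hx, hy⟩
  have hM ⦃x y : V⦄ (hxy : (G.isolateVerts P).Adj x y) :
      ∃ m ∈ G.outerBoundary P, (G.isolateVerts P).Reachable x m := by
    obtain ⟨m, w, hw, p, hp, hmp⟩ := hcomp x (isolateVerts_adj.1 hxy).2.1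
    exact ⟨m, ⟨hw m w.end_mem_support, p, hp, hmp⟩, w.reachable_isolateVerts hw⟩
  rw [← edgeSet_isolateVerts]
  calc _ ≤ 6 * (G.outerBoundary P).ncard := (noFivePath_isolateVerts hP5free).ncard_edgeSet_le
        (subsingleton_pendants_isolateVerts hleaf) hM
    _ ≤ 6 * (P.card * (7 * k + 7)) := by grw [ncard_outerBoundary_le fun p _ => hdeg p]
    _ ≤ 6 * (5 * k * (7 * k + 7)) := by grw [hP]
    _ = 210 * k ^ 2 + 210 * k := by ring
end

section
/- Fix d ≥ 3 and let G be a simple graph. Let G' be the graph obtained from G by adding, for each vertex v of G, a path P_v = (v₁, v₂, …, v_{d−2}) on d − 2 new vertices together with the edge {v, v₁}, where the added paths for distinct vertices of G are pairwise vertex-disjoint and disjoint from V(G). Then for every natural number k, G has a vertex cover of size at most k if and only if G' has a d-path vertex cover of size at most k. -/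
open SimpleGraph

/-- The graph `G'` obtained from `G` by attaching, to each vertex `u` of `G`, a pendant path
`P_u` on `d − 2` new vertices `(u, 0), (u, 1), …, (u, d−3)` via the edge `{u, (u, 0)}`;
the attached paths are pairwise disjoint and disjoint from `V(G)`. -/
def pendantPathGraph {V : Type*} (G : SimpleGraph V) (d : ℕ) :
    SimpleGraph (V ⊕ V × Fin (d - 2)) :=
  SimpleGraph.fromRel (fun a b =>
    (∃ u w : V, a = Sum.inl u ∧ b = Sum.inl w ∧ G.Adj u w) ∨
    (∃ (u : V) (i : Fin (d - 2)), a = Sum.inl u ∧ b = Sum.inr (u, i) ∧ (i : ℕ) = 0) ∨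
    (∃ (u : V) (i j : Fin (d - 2)), a = Sum.inr (u, i) ∧ b = Sum.inr (u, j) ∧
      (j : ℕ) = (i : ℕ) + 1))

/-!
A vertex cover `S` of `G` is a `d`-path vertex cover of `G'`: a path of `G'` avoiding `S` uses no
edge of `G`, so it stays inside one pendant path together with its root, which has only `d - 1`
vertices. Conversely, if `S'` is a `d`-path vertex cover of `G'`, sending every vertex of `G'` to
the root of its pendant path maps `S'` onto a vertex cover of `G`: for an edge `uw` of `G`, the
path `P_u` followed by `u, w` has `d` vertices, each of which is sent to `u` or to `w`.
-/

section PendantCoordinates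

variable {V : Type*} {m : ℕ}

def pendantRoot : V ⊕ V × Fin m → V := Sum.elim id Prod.fst

/-- `Sum.inr (u, i)` is at distance `i + 1` from its root `u`. -/
def pendantHeight : V ⊕ V × Fin m → ℕ := Sum.elim (fun _ => 0) (fun z => z.2 + 1)

lemma pendantHeight_lt (x : V ⊕ V × Fin m) : pendantHeight x < m + 1 := by
  rcases x with _ | ⟨_, i⟩ <;> simp [pendantHeight]

lemma injective_pendantRoot_pendantHeight :
    Function.Injective fun x : V ⊕ V × Fin m => (pendantRoot x, pendantHeight x) := by
  rintro (u | ⟨u, i⟩) (w | ⟨w, j⟩) h <;> simp_all [pendantRoot, pendantHeight, Fin.ext_iff]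

lemma card_le_of_forall_pendantRoot_eq {s : Finset (V ⊕ V × Fin m)} {u : V}
    (hs : ∀ x ∈ s, pendantRoot x = u) : s.card ≤ m + 1 := by
  simpa using Finset.card_le_card_of_injOn pendantHeight (t := Finset.range (m + 1))
    (fun x _ => by simpa using pendantHeight_lt x)
    fun x hx y hy hxy =>
      injective_pendantRoot_pendantHeight (Prod.ext ((hs x hx).trans (hs y hy).symm) hxy)

end PendantCoordinates

section PendantPathGraph

variable {V : Type*} {G : SimpleGraph V} {d : ℕ}

lemma pendantRoot_eq_of_adj {S : Set V} (hS : G.IsVertexCover S)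
    {a b : V ⊕ V × Fin (d - 2)} (h : (pendantPathGraph G d).Adj a b)
    (ha : a ∉ Sum.inl '' S) (hb : b ∉ Sum.inl '' S) : pendantRoot a = pendantRoot b := by
  rw [pendantPathGraph, fromRel_adj] at h
  rcases h with ⟨-, (⟨u, w, rfl, rfl, huw⟩ | ⟨u, i, rfl, rfl, -⟩ | ⟨u, i, j, rfl, rfl, -⟩) |
    (⟨u, w, rfl, rfl, huw⟩ | ⟨u, i, rfl, rfl, -⟩ | ⟨u, i, j, rfl, rfl, -⟩)⟩ <;>
    first | rfl | (rcases hS huw with h | h <;> simp_all)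

lemma pendantRoot_eq_of_mem_support {S : Set V} (hS : G.IsVertexCover S)
    {a b : V ⊕ V × Fin (d - 2)} (p : (pendantPathGraph G d).Walk a b)
    (hp : ∀ x ∈ p.support, x ∉ Sum.inl '' S) :
    ∀ x ∈ p.support, pendantRoot x = pendantRoot a := by
  induction p with
  | nil => simp
  | cons h q ih =>
    simp only [Walk.support_cons, List.mem_cons, forall_eq_or_imp, true_and] at hp ⊢
    intro x hx
    rw [ih hp.2 x hx, pendantRoot_eq_of_adj hS h hp.1 (hp.2 _ q.start_mem_support)]

lemma isPVC_image_inl (hd : 2 ≤ d) {S : Set V} (hS : G.IsVertexCover S) :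
    IsPVC (pendantPathGraph G d) d (Sum.inl '' S) := by
  classical
  intro a b p hp hlen
  by_contra! hpS
  have hcard : p.support.toFinset.card = d := by
    rw [List.toFinset_card_of_nodup hp.support_nodup, Walk.length_support, hlen]
  have := card_le_of_forall_pendantRoot_eq (s := p.support.toFinset)
    (by simpa using pendantRoot_eq_of_mem_support hS p hpS)
  omega

variable (G) in
lemma pendantPathGraph_adj_inl_inl {u w : V} (h : G.Adj u w) :
    (pendantPathGraph G d).Adj (Sum.inl u) (Sum.inl w) := by
  rw [pendantPathGraph, fromRel_adj]
  exact ⟨by simp [h.ne], Or.inl (Or.inl ⟨u, w, rfl, rfl, h⟩)⟩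

variable (G) in
lemma pendantPathGraph_adj_inr_inl (u : V) (h : 0 < d - 2) :
    (pendantPathGraph G d).Adj (Sum.inr (u, ⟨0, h⟩)) (Sum.inl u) := by
  rw [pendantPathGraph, fromRel_adj]
  exact ⟨by simp, Or.inr (Or.inr (Or.inl ⟨u, _, rfl, rfl, rfl⟩))⟩

variable (G) in
lemma pendantPathGraph_adj_inr_inr (u : V) (n : ℕ) (h : n + 1 < d - 2) :
    (pendantPathGraph G d).Adj (Sum.inr (u, ⟨n + 1, h⟩)) (Sum.inr (u, ⟨n, by omega⟩)) := by
  rw [pendantPathGraph, fromRel_adj]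
  exact ⟨by simp, Or.inr (Or.inr (Or.inr ⟨u, _, _, rfl, rfl, rfl⟩))⟩

variable (G) in
def pendantWalk (u : V) : (n : ℕ) → (h : n < d - 2) →
    (pendantPathGraph G d).Walk (Sum.inr (u, ⟨n, h⟩)) (Sum.inl u)
  | 0, h => .cons (pendantPathGraph_adj_inr_inl G u h) .nil
  | n + 1, h => .cons (pendantPathGraph_adj_inr_inr G u n h) (pendantWalk u n (by omega))

lemma length_pendantWalk (u : V) (n : ℕ) (h : n < d - 2) :
    (pendantWalk G u n h).length = n + 1 := by
  induction n with
  | zero => rfl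
  | succ n ih => simp [pendantWalk, ih]

lemma pendantRoot_pendantHeight_of_mem_support_pendantWalk {u : V} {n : ℕ} {h : n < d - 2}
    {x : V ⊕ V × Fin (d - 2)} (hx : x ∈ (pendantWalk G u n h).support) :
    pendantRoot x = u ∧ pendantHeight x ≤ n + 1 := by
  induction n with
  | zero =>
    simp only [pendantWalk, Walk.support_cons, Walk.support_nil, List.mem_cons,
      List.not_mem_nil, or_false] at hx
    rcases hx with rfl | rfl <;> simp [pendantRoot, pendantHeight]
  | succ n ih =>
    rw [pendantWalk, Walk.support_cons, List.mem_cons] at hx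
    rcases hx with rfl | hx
    · simp [pendantRoot, pendantHeight]
    · exact (ih hx).imp_right (by omega)

lemma isPath_pendantWalk (u : V) (n : ℕ) (h : n < d - 2) : (pendantWalk G u n h).IsPath := by
  induction n with
  | zero => simp [pendantWalk]
  | succ n ih =>
    refine (ih (by omega)).cons fun hx => ?_
    have := (pendantRoot_pendantHeight_of_mem_support_pendantWalk hx).2
    simp [pendantHeight] at this

lemma isVertexCover_image_pendantRoot (hd : 3 ≤ d) {S : Set (V ⊕ V × Fin (d - 2))}
    (hS : IsPVC (pendantPathGraph G d) d S) : G.IsVertexCover (pendantRoot '' S) := by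
  intro u w huw
  have hd' : d - 3 < d - 2 := by omega
  have hw : Sum.inl w ∉ (pendantWalk G u (d - 3) hd').support := fun hw =>
    huw.ne (pendantRoot_pendantHeight_of_mem_support_pendantWalk hw).1.symm
  obtain ⟨x, hx, hxS⟩ := hS _ ((isPath_pendantWalk u _ hd').concat hw
    (pendantPathGraph_adj_inl_inl G huw)) (by simp [length_pendantWalk]; omega)
  rw [Walk.support_concat, List.mem_append, List.mem_singleton] at hx
  rcases hx with hx | rfl
  · exact .inl ⟨x, hxS, (pendantRoot_pendantHeight_of_mem_support_pendantWalk hx).1⟩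
  · exact .inr ⟨_, hxS, rfl⟩

end PendantPathGraph

/-- For `d ≥ 3`, `G` has a vertex cover of size at most `k` iff the graph `G'` obtained by
attaching a pendant `(d−2)`-path to every vertex of `G` has a `d`-path vertex cover of size
at most `k`. -/
theorem vc_iff_pvc_of_pendant_paths {V : Type*} (G : SimpleGraph V) (d : ℕ) (hd : 3 ≤ d)
    (k : ℕ) :
    (∃ S : Finset V, S.card ≤ k ∧ ∀ ⦃u w : V⦄, G.Adj u w → u ∈ S ∨ w ∈ S) ↔
      (∃ S : Finset (V ⊕ V × Fin (d - 2)), S.card ≤ k ∧ IsPVC (pendantPathGraph G d) d ↑S) := by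
  classical
  constructor
  · rintro ⟨S, hSk, hS⟩
    refine ⟨S.image Sum.inl, Finset.card_image_le.trans hSk, ?_⟩
    rw [Finset.coe_image]
    exact isPVC_image_inl (by omega) hS
  · rintro ⟨S, hSk, hS⟩
    refine ⟨S.image pendantRoot, Finset.card_image_le.trans hSk, ?_⟩
    show G.IsVertexCover ↑(S.image pendantRoot)
    rw [Finset.coe_image]
    exact isVertexCover_image_pendantRoot hd hS
end
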